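/- arXiv:2110.04852 — 17 statements merged into one kernel-verified Lean document; each statement's English description precedes it below -/
import Mathlib

section
/- Suppose there exist θ ∈ [0,1] and a probability mass function u on ℐ \ {x_d} (i.e., u(x_j) ≥ 0 and ∑_{x_j ∈ ℐ \ {x_d}} u(x_j) = 1) such that f(x_i) = θ·g(x_i) + (1−θ)·∑_{x_j ∈ ℐ \ {x_d}} g^{x_j}(x_i)·u(x_j) for every x_i ∈ ℐ. Then the ratio r = f/g is non-increasing on ℐ, i.e., r(x_i) ≥ r(x_{i'}) whenever x_i ≤ x_{i'} in ℐ. -/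
open Finset

/-- Backward direction of the finite mixture representation theorem:
if `f` has a mixture representation in terms of `g`, its right-truncations,
a weight `θ ∈ [0,1]`, and a mass function `u` on `ℐ \ {x_d}`, then the
ratio `f/g` is non-increasing on `ℐ = {x 0 < x 1 < ⋯ < x (n+1)}`. -/
theorem finite_f_mixture_backward
    (n : ℕ) (x : Fin (n + 2) → ℝ) (hx : StrictMono x)
    (f g : Fin (n + 2) → ℝ)
    (hf0 : ∀ i, 0 ≤ f i) (hf1 : ∑ i, f i = 1)
    (hg0 : ∀ i, 0 < g i) (hg1 : ∑ i, g i = 1)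
    (G : Fin (n + 2) → ℝ)
    (hG : ∀ j, G j = ∑ i ∈ univ.filter (fun i => x i ≤ x j), g i)
    (θ : ℝ) (hθ : θ ∈ Set.Icc (0 : ℝ) 1)
    (u : Fin (n + 2) → ℝ)
    (hu0 : ∀ j, j ≠ Fin.last (n + 1) → 0 ≤ u j)
    (hu1 : ∑ j ∈ univ.filter (fun j => j ≠ Fin.last (n + 1)), u j = 1)
    (hmix : ∀ i, f i = θ * g i + (1 - θ) *
      ∑ j ∈ univ.filter (fun j => j ≠ Fin.last (n + 1)),
        (g i * (if x i ≤ x j then (1 : ℝ) else 0) / G j) * u j) :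
    ∀ i i' : Fin (n + 2), x i ≤ x i' → f i' / g i' ≤ f i / g i := by
  intro i i' hii'
  have hG0 : ∀ j, 0 < G j := by
    intro j
    rw [hG j]
    apply Finset.sum_pos (fun k _ => hg0 k)
    exact ⟨j, by simp⟩
  set S : Fin (n + 2) → ℝ := fun i =>
    ∑ j ∈ univ.filter (fun j => j ≠ Fin.last (n + 1)),
      ((if x i ≤ x j then (1 : ℝ) else 0) / G j) * u j with hS
  have key : ∀ i, f i / g i = θ + (1 - θ) * S i := by
    intro i
    have hsum : ∑ j ∈ univ.filter (fun j => j ≠ Fin.last (n + 1)),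
        (g i * (if x i ≤ x j then (1 : ℝ) else 0) / G j) * u j = g i * S i := by
      rw [hS, Finset.mul_sum]
      exact Finset.sum_congr rfl (fun j _ => by ring)
    have hgne : g i ≠ 0 := ne_of_gt (hg0 i)
    rw [hmix i, hsum]
    field_simp
  rw [key i, key i']
  have hθ1 : 0 ≤ 1 - θ := by linarith [hθ.2]
  have hSle : S i' ≤ S i := by
    apply Finset.sum_le_sum
    intro j hj
    simp only [mem_filter] at hj
    have hu := hu0 j hj.2
    by_cases h' : x i' ≤ x j
    · have : x i ≤ x j := le_trans hii' h'
      simp [h', this]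
    · simp only [h', if_false, zero_div, zero_mul]
      apply mul_nonneg (div_nonneg (by positivity) (hG0 j).le) hu
  nlinarith [hSle, hθ1]
end

section
/- Suppose the ratio r = f/g is non-increasing on ℐ, i.e., r(x_i) ≥ r(x_{i'}) whenever x_i ≤ x_{i'} in ℐ. Then there exist θ ∈ [0,1] and a probability mass function u on ℐ \ {x_d} (i.e., u(x_j) ≥ 0 and ∑_{x_j ∈ ℐ \ {x_d}} u(x_j) = 1) such that f(x_i) = θ·g(x_i) + (1−θ)·∑_{x_j ∈ ℐ \ {x_d}} g^{x_j}(x_i)·u(x_j) for every x_i ∈ ℐ. -/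
open Finset

open Fin.NatCast in
lemma tele_aux (n : ℕ) (s : Fin (n + 2) → ℝ) (i : Fin (n + 2)) :
    ∑ j : Fin (n + 2), (if j ≠ Fin.last (n + 1) ∧ i ≤ j then s j - s (j + 1) else 0)
      = s i - s (Fin.last (n + 1)) := by
  set φ : ℕ → ℝ := fun k => if k < n + 1 ∧ (i : ℕ) ≤ k then
      s ((k : ℕ) : Fin (n + 2)) - s (((k + 1 : ℕ)) : Fin (n + 2)) else 0 with hφ
  have hlast : ((n + 1 : ℕ) : Fin (n + 2)) = Fin.last (n + 1) := by
    ext; rw [Fin.val_natCast, Fin.val_last, Nat.mod_eq_of_lt (by omega)]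
  have step : ∀ j : Fin (n + 2),
      (if j ≠ Fin.last (n + 1) ∧ i ≤ j then s j - s (j + 1) else 0) = φ (j : ℕ) := by
    intro j
    have h1 : (((j : ℕ)) : Fin (n + 2)) = j := Fin.cast_val_eq_self j
    have h2 : ((((j : ℕ) + 1 : ℕ)) : Fin (n + 2)) = j + 1 := by push_cast [h1]; ring
    have h3 : (j ≠ Fin.last (n + 1) ∧ i ≤ j) ↔ ((j : ℕ) < n + 1 ∧ (i : ℕ) ≤ (j : ℕ)) := by
      rw [Ne, Fin.ext_iff, Fin.val_last, Fin.le_def]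
      have := j.isLt
      constructor <;> (intro h; omega)
    rw [hφ]
    simp only [h1, h2, h3]
  rw [Finset.sum_congr rfl (fun j _ => step j), Fin.sum_univ_eq_sum_range φ]
  have hfilter : (Finset.range (n + 2)).filter (fun k => k < n + 1 ∧ (i : ℕ) ≤ k)
      = Finset.Ico (i : ℕ) (n + 1) := by
    ext k; simp only [mem_filter, mem_range, mem_Ico]; omega
  rw [hφ, ← Finset.sum_filter, hfilter,
    Finset.sum_Ico_eq_sub _ (by have := i.isLt; omega : (i : ℕ) ≤ n + 1),
    Finset.sum_range_sub' (fun k => s ((k : ℕ) : Fin (n + 2))),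
    Finset.sum_range_sub' (fun k => s ((k : ℕ) : Fin (n + 2)))]
  simp [hlast, Fin.cast_val_eq_self]

/-- Forward direction of the finite mixture representation theorem:
if the ratio `f/g` is non-increasing on `ℐ = {x 0 < ⋯ < x (n+1)}`, then `f`
admits a mixture representation in terms of `g`, its right-truncations,
a weight `θ ∈ [0,1]`, and a mass function `u` on `ℐ \ {x_d}`. -/
theorem finite_f_mixture_forward
    (n : ℕ) (x : Fin (n + 2) → ℝ) (hx : StrictMono x)
    (f g : Fin (n + 2) → ℝ)
    (hf0 : ∀ i, 0 ≤ f i) (hf1 : ∑ i, f i = 1)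
    (hg0 : ∀ i, 0 < g i) (hg1 : ∑ i, g i = 1)
    (G : Fin (n + 2) → ℝ)
    (hG : ∀ j, G j = ∑ i ∈ univ.filter (fun i => x i ≤ x j), g i)
    (hr : ∀ i i' : Fin (n + 2), x i ≤ x i' → f i' / g i' ≤ f i / g i) :
    ∃ θ ∈ Set.Icc (0 : ℝ) 1, ∃ u : Fin (n + 2) → ℝ,
      (∀ j, j ≠ Fin.last (n + 1) → 0 ≤ u j) ∧
      (∑ j ∈ univ.filter (fun j => j ≠ Fin.last (n + 1)), u j = 1) ∧
      (∀ i, f i = θ * g i + (1 - θ) *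
        ∑ j ∈ univ.filter (fun j => j ≠ Fin.last (n + 1)),
          (g i * (if x i ≤ x j then (1 : ℝ) else 0) / G j) * u j) := by
  have hxle : ∀ i j : Fin (n + 2), (x i ≤ x j) ↔ i ≤ j := fun i j => hx.le_iff_le
  have hfg : ∀ i, f i / g i * g i = f i := fun i => div_mul_cancel₀ _ (hg0 i).ne'
  have hGpos : ∀ j, 0 < G j := by
    intro j; rw [hG]
    exact Finset.sum_pos (fun i _ => hg0 i) ⟨j, by simp⟩
  obtain ⟨θ, hθ⟩ : ∃ t : ℝ, t = f (Fin.last (n + 1)) / g (Fin.last (n + 1)) := ⟨_, rfl⟩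
  have hθ0 : (0 : ℝ) ≤ θ := hθ ▸ div_nonneg (hf0 _) (hg0 _).le
  have hrd : ∀ i, θ ≤ f i / g i := fun i => hθ ▸ hr i _ (hx.monotone (Fin.le_last i))
  have hθg : ∀ i, θ * g i ≤ f i := by
    intro i
    calc θ * g i ≤ (f i / g i) * g i :=
          mul_le_mul_of_nonneg_right (hrd i) (hg0 i).le
      _ = f i := hfg i
  have hθ1 : θ ≤ 1 := by
    have h : θ * ∑ i, g i ≤ ∑ i, f i := by
      rw [Finset.mul_sum]
      exact Finset.sum_le_sum fun i _ => hθg i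
    rwa [hg1, mul_one, hf1] at h
  by_cases hc : θ = 1
  · -- degenerate case : f = g
    have hfg' : ∀ i, f i = g i := by
      have hsum : ∑ i, (f i - θ * g i) = 0 := by
        rw [Finset.sum_sub_distrib, ← Finset.mul_sum, hf1, hg1, hc, mul_one, sub_self]
      have h := (Finset.sum_eq_zero_iff_of_nonneg
        (fun i _ => sub_nonneg.mpr (hθg i))).mp hsum
      intro i
      have hi := h i (mem_univ i)
      rw [hc, one_mul] at hi
      linarith
    have h0d : (0 : Fin (n + 2)) ≠ Fin.last (n + 1) := by
      rw [Ne, Fin.ext_iff, Fin.val_last]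
      simp
    refine ⟨1, by norm_num, fun j => if j = 0 then 1 else 0, ?_, ?_, ?_⟩
    · intro j _; dsimp only; split <;> norm_num
    · rw [Finset.sum_ite_eq' (univ.filter (fun j => j ≠ Fin.last (n + 1))) 0 (fun _ => (1:ℝ))]
      simp [h0d]
    · intro i
      simp [hfg' i]
  · have hθlt : θ < 1 := lt_of_le_of_ne hθ1 hc
    have h1θ : (0 : ℝ) < 1 - θ := by linarith
    set u : Fin (n + 2) → ℝ :=
      fun j => G j * (f j / g j - f (j + 1) / g (j + 1)) / (1 - θ) with hu
    have hmono : ∀ j : Fin (n + 2), j ≠ Fin.last (n + 1) →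
        f (j + 1) / g (j + 1) ≤ f j / g j := by
      intro j hj
      apply hr
      apply hx.monotone
      have hlt : j < Fin.last (n + 1) := lt_of_le_of_ne (Fin.le_last j) hj
      have hv : ((j + 1 : Fin (n + 2)) : ℕ) = (j : ℕ) + 1 := Fin.val_add_one_of_lt hlt
      rw [Fin.le_def, hv]
      omega
    have key : ∀ i : Fin (n + 2),
        ∑ j : Fin (n + 2), (if j ≠ Fin.last (n + 1) ∧ i ≤ j then
            (f j / g j - f (j + 1) / g (j + 1)) else 0) = f i / g i - θ := by
      intro i
      rw [hθ]
      exact tele_aux n (fun j => f j / g j) i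
    have hsum1 : ∑ i, (f i / g i - θ) * g i = 1 - θ := by
      have : ∀ i : Fin (n + 2), (f i / g i - θ) * g i = f i - θ * g i := by
        intro i; rw [sub_mul, hfg i]
      rw [Finset.sum_congr rfl (fun i _ => this i), Finset.sum_sub_distrib,
        ← Finset.mul_sum, hf1, hg1, mul_one]
    refine ⟨θ, ⟨hθ0, hθ1⟩, u, ?_, ?_, ?_⟩
    · intro j hj
      exact div_nonneg (mul_nonneg (hGpos j).le (sub_nonneg.mpr (hmono j hj))) h1θ.le
    · rw [Finset.sum_filter]
      have expand : ∀ j : Fin (n + 2), (if j ≠ Fin.last (n + 1) then u j else 0)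
          = (∑ i : Fin (n + 2), if j ≠ Fin.last (n + 1) ∧ i ≤ j then
              (f j / g j - f (j + 1) / g (j + 1)) * g i else 0) / (1 - θ) := by
        intro j
        by_cases hj : j = Fin.last (n + 1)
        · simp [hj]
        · simp only [hj, ne_eq, not_false_eq_true, if_true, true_and, hu]
          rw [hG j, Finset.sum_filter]
          simp only [hxle]
          congr 1
          rw [Finset.sum_mul]
          refine Finset.sum_congr rfl fun i _ => ?_
          split <;> ring
      rw [Finset.sum_congr rfl (fun j _ => expand j), ← Finset.sum_div, Finset.sum_comm]
      have inner : ∀ i : Fin (n + 2),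
          (∑ j : Fin (n + 2), if j ≠ Fin.last (n + 1) ∧ i ≤ j then
              (f j / g j - f (j + 1) / g (j + 1)) * g i else 0)
            = (f i / g i - θ) * g i := by
        intro i
        rw [← key i, Finset.sum_mul]
        refine Finset.sum_congr rfl fun j _ => ?_
        split <;> ring
      rw [Finset.sum_congr rfl (fun i _ => inner i), hsum1, div_self h1θ.ne']
    · intro i
      rw [Finset.sum_filter]
      have term : ∀ j : Fin (n + 2),
          (if j ≠ Fin.last (n + 1) then (g i * (if x i ≤ x j then (1:ℝ) else 0) / G j) * u j else 0)
            = (if j ≠ Fin.last (n + 1) ∧ i ≤ j then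
                (f j / g j - f (j + 1) / g (j + 1)) else 0) * (g i / (1 - θ)) := by
        intro j
        by_cases hj : j = Fin.last (n + 1)
        · simp [hj]
        · by_cases hij : i ≤ j
          · have hxij : x i ≤ x j := (hxle i j).mpr hij
            simp only [hj, hij, hxij, ne_eq, not_false_eq_true, if_true, true_and, hu]
            rw [mul_one]
            field_simp [(hGpos j).ne', h1θ.ne']
          · have hxij : ¬ x i ≤ x j := fun h => hij ((hxle i j).mp h)
            simp [hj, hij, hxij]
      rw [Finset.sum_congr rfl (fun j _ => term j), ← Finset.sum_mul, key i]
      have hcalc : (1 - θ) * ((f i / g i - θ) * (g i / (1 - θ)))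
          = (f i / g i) * g i - θ * g i := by
        field_simp [h1θ.ne', (hg0 i).ne']
      rw [hcalc, hfg i]
      ring
end

section
/- Suppose there exist θ ∈ [0,1] and a probability mass function u on ℐ \ {x_d} (i.e., u(x_j) ≥ 0 and ∑_{x_j ∈ ℐ \ {x_d}} u(x_j) = 1) such that f(x_i) = θ·g(x_i) + (1−θ)·∑_{x_j ∈ ℐ \ {x_d}} g^{x_j}(x_i)·u(x_j) for every x_i ∈ ℐ. Then r(x_i) = θ + (1−θ)·∑_{x_j ∈ ℐ \ {x_d}, x_j ≥ x_i} u(x_j)/G(x_j) for every x_i ∈ ℐ; in particular, θ = r(x_d) = f(x_d)/g(x_d). -/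
open Finset

/-- If `f` has the finite mixture representation, then the ratio `f/g` has the
explicit form `r(x_i) = θ + (1-θ) ∑_{x_j ≥ x_i, x_j ≠ x_d} u(x_j)/G(x_j)`;
in particular `θ = r(x_d) = f(x_d)/g(x_d)`. -/
theorem finite_f_mixture_ratio_formula
    (n : ℕ) (x : Fin (n + 2) → ℝ) (hx : StrictMono x)
    (f g : Fin (n + 2) → ℝ)
    (hf0 : ∀ i, 0 ≤ f i) (hf1 : ∑ i, f i = 1)
    (hg0 : ∀ i, 0 < g i) (hg1 : ∑ i, g i = 1)
    (G : Fin (n + 2) → ℝ)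
    (hG : ∀ j, G j = ∑ i ∈ univ.filter (fun i => x i ≤ x j), g i)
    (θ : ℝ) (hθ : θ ∈ Set.Icc (0 : ℝ) 1)
    (u : Fin (n + 2) → ℝ)
    (hu0 : ∀ j, j ≠ Fin.last (n + 1) → 0 ≤ u j)
    (hu1 : ∑ j ∈ univ.filter (fun j => j ≠ Fin.last (n + 1)), u j = 1)
    (hmix : ∀ i, f i = θ * g i + (1 - θ) *
      ∑ j ∈ univ.filter (fun j => j ≠ Fin.last (n + 1)),
        (g i * (if x i ≤ x j then (1 : ℝ) else 0) / G j) * u j) :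
    (∀ i, f i / g i = θ + (1 - θ) *
      ∑ j ∈ univ.filter (fun j => j ≠ Fin.last (n + 1) ∧ x i ≤ x j), u j / G j) ∧
    θ = f (Fin.last (n + 1)) / g (Fin.last (n + 1)) := by
  have key : ∀ i, f i / g i = θ + (1 - θ) *
      ∑ j ∈ univ.filter (fun j => j ≠ Fin.last (n + 1) ∧ x i ≤ x j), u j / G j := by
    intro i
    have hsum : ∑ j ∈ univ.filter (fun j => j ≠ Fin.last (n + 1)),
        (g i * (if x i ≤ x j then (1 : ℝ) else 0) / G j) * u j
        = g i * ∑ j ∈ univ.filter (fun j => j ≠ Fin.last (n + 1) ∧ x i ≤ x j),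
            u j / G j := by
      have step : ∑ j ∈ univ.filter (fun j => j ≠ Fin.last (n + 1)),
          (g i * (if x i ≤ x j then (1 : ℝ) else 0) / G j) * u j
          = ∑ j ∈ univ.filter (fun j => j ≠ Fin.last (n + 1)),
              (if x i ≤ x j then g i * (u j / G j) else 0) := by
        refine sum_congr rfl fun j _ => ?_
        by_cases h : x i ≤ x j <;> simp [h] <;> ring
      rw [step, ← sum_filter, filter_filter, mul_sum]
    have hne : g i ≠ 0 := (hg0 i).ne'
    rw [hmix i, hsum]
    field_simp
  refine ⟨key, ?_⟩
  have h := key (Fin.last (n + 1))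
  have hempty : univ.filter (fun j => j ≠ Fin.last (n + 1) ∧
      x (Fin.last (n + 1)) ≤ x j) = ∅ := by
    refine filter_eq_empty_iff.mpr fun j _ => ?_
    rintro ⟨hj, hle⟩
    exact absurd hle (not_le.mpr (hx (lt_of_le_of_ne (Fin.le_last j) hj)))
  rw [hempty] at h
  simpa using h.symm
end

section
/- Suppose θ ∈ [0,1) and u is a probability mass function on ℐ \ {x_d} (i.e., u(x_j) ≥ 0 and ∑_{x_j ∈ ℐ \ {x_d}} u(x_j) = 1) such that f(x_i) = θ·g(x_i) + (1−θ)·∑_{x_j ∈ ℐ \ {x_d}} g^{x_j}(x_i)·u(x_j) for every x_i ∈ ℐ. Then u is uniquely determined: u(x_j) = G(x_j)·{r(x_j) − r(x_{j+1})}/(1−θ) for every x_j ∈ ℐ \ {x_d}. -/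
open Finset

/-- Uniqueness of the mixing mass function in the finite mixture representation:
if `θ ∈ [0,1)` and `u` is a mass function on `ℐ \ {x_d}` realizing the mixture
representation of `f`, then `u(x_j) = G(x_j)·{r(x_j) − r(x_{j+1})}/(1−θ)`. -/
theorem finite_f_mixture_uniqueness
    (n : ℕ) (x : Fin (n + 2) → ℝ) (hx : StrictMono x)
    (f g : Fin (n + 2) → ℝ)
    (hf0 : ∀ i, 0 ≤ f i) (hf1 : ∑ i, f i = 1)
    (hg0 : ∀ i, 0 < g i) (hg1 : ∑ i, g i = 1)
    (G : Fin (n + 2) → ℝ)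
    (hG : ∀ j, G j = ∑ i ∈ univ.filter (fun i => x i ≤ x j), g i)
    (θ : ℝ) (hθ : θ ∈ Set.Ico (0 : ℝ) 1)
    (u : Fin (n + 2) → ℝ)
    (hu0 : ∀ j, j ≠ Fin.last (n + 1) → 0 ≤ u j)
    (hu1 : ∑ j ∈ univ.filter (fun j => j ≠ Fin.last (n + 1)), u j = 1)
    (hmix : ∀ i, f i = θ * g i + (1 - θ) *
      ∑ j ∈ univ.filter (fun j => j ≠ Fin.last (n + 1)),
        (g i * (if x i ≤ x j then (1 : ℝ) else 0) / G j) * u j) :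
    ∀ j, j ≠ Fin.last (n + 1) →
      u j = G j * (f j / g j - f (j + 1) / g (j + 1)) / (1 - θ) := by

  obtain ⟨hθ0, hθ1⟩ := hθ
  have hθ' : (0 : ℝ) < 1 - θ := by linarith
  have hGpos : ∀ j : Fin (n + 2), 0 < G j := by
    intro j
    rw [hG]
    apply Finset.sum_pos
    · intro i _; exact hg0 i
    · exact ⟨j, by simp⟩
  have hr : ∀ i : Fin (n + 2), f i / g i = θ + (1 - θ) *
      ∑ j' ∈ univ.filter (fun j' => j' ≠ Fin.last (n + 1)),
        (if x i ≤ x j' then (1 : ℝ) else 0) / G j' * u j' := by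
    intro i
    have hgi := hg0 i
    have hfac : ∑ j' ∈ univ.filter (fun j' => j' ≠ Fin.last (n + 1)),
        (g i * (if x i ≤ x j' then (1 : ℝ) else 0) / G j') * u j'
        = g i * ∑ j' ∈ univ.filter (fun j' => j' ≠ Fin.last (n + 1)),
        (if x i ≤ x j' then (1 : ℝ) else 0) / G j' * u j' := by
      rw [Finset.mul_sum]
      apply Finset.sum_congr rfl
      intro j' _
      ring
    rw [hmix i, hfac]
    field_simp
  intro j hj
  have hjlt : j < Fin.last (n + 1) := lt_of_le_of_ne (Fin.le_last j) hj
  have hj1 : ((j + 1 : Fin (n + 2)) : ℕ) = (j : ℕ) + 1 := Fin.val_add_one_of_lt hjlt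
  have hsum : ∑ j' ∈ univ.filter (fun j' => j' ≠ Fin.last (n + 1)),
      ((if x j ≤ x j' then (1 : ℝ) else 0) / G j' * u j'
       - (if x (j + 1) ≤ x j' then (1 : ℝ) else 0) / G j' * u j') = u j / G j := by
    rw [Finset.sum_eq_single j]
    · have h1 : x j ≤ x j := le_refl _
      have h2 : ¬ x (j + 1) ≤ x j := by
        rw [hx.le_iff_le, Fin.le_def, hj1]
        omega
      simp [h1, h2]
      ring
    · intro j' _ hne
      by_cases hlt : j < j'
      · have h1 : x j ≤ x j' := (hx.le_iff_le).2 (le_of_lt hlt)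
        have h2 : x (j + 1) ≤ x j' := by
          rw [hx.le_iff_le, Fin.le_def, hj1]
          exact hlt
        simp [h1, h2]
      · have hlt' : j' < j := lt_of_le_of_ne (not_lt.1 hlt) hne
        have h1 : ¬ x j ≤ x j' := by rw [hx.le_iff_le]; exact not_le.2 hlt'
        have h2 : ¬ x (j + 1) ≤ x j' := by
          rw [hx.le_iff_le, Fin.le_def, hj1]
          omega
        simp [h1, h2]
    · intro h
      exact absurd (by simp [hj]) h
  have hdiff : f j / g j - f (j + 1) / g (j + 1) = (1 - θ) * (u j / G j) := by
    rw [hr j, hr (j + 1)]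
    rw [← hsum, Finset.sum_sub_distrib]
    ring
  rw [hdiff]
  have hGj := (hGpos j).ne'
  field_simp
end

section
/- Suppose the ratio r = f/g is non-increasing on ℐ and set θ = r(x_d) = f(x_d)/g(x_d). If θ < 1, then the function u defined on ℐ \ {x_d} by u(x_j) = G(x_j)·{r(x_j) − r(x_{j+1})}/(1−θ) is a probability mass function: u(x_j) ≥ 0 for all x_j ∈ ℐ \ {x_d} and ∑_{x_j ∈ ℐ \ {x_d}} u(x_j) = 1. -/
open Finset

/-- If the ratio `r = f/g` is non-increasing on `ℐ` and `θ = r(x_d) < 1`, then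
`u(x_j) = G(x_j)·{r(x_j) − r(x_{j+1})}/(1−θ)` defines a probability mass
function on `ℐ \ {x_d}`. -/
theorem finite_f_mixture_u_is_pmf
    (n : ℕ) (x : Fin (n + 2) → ℝ) (hx : StrictMono x)
    (f g : Fin (n + 2) → ℝ)
    (hf0 : ∀ i, 0 ≤ f i) (hf1 : ∑ i, f i = 1)
    (hg0 : ∀ i, 0 < g i) (hg1 : ∑ i, g i = 1)
    (G : Fin (n + 2) → ℝ)
    (hG : ∀ j, G j = ∑ i ∈ univ.filter (fun i => x i ≤ x j), g i)
    (hr : ∀ i i' : Fin (n + 2), x i ≤ x i' → f i' / g i' ≤ f i / g i)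
    (θ : ℝ) (hθ : θ = f (Fin.last (n + 1)) / g (Fin.last (n + 1)))
    (hθ1 : θ < 1) :
    (∀ j, j ≠ Fin.last (n + 1) →
      0 ≤ G j * (f j / g j - f (j + 1) / g (j + 1)) / (1 - θ)) ∧
    (∑ j ∈ univ.filter (fun j => j ≠ Fin.last (n + 1)),
      G j * (f j / g j - f (j + 1) / g (j + 1)) / (1 - θ) = 1) := by
  have hθ0 : (0:ℝ) < 1 - θ := by linarith
  -- G as a sum over Iic
  have hGIic : ∀ j, G j = ∑ i ∈ Finset.Iic j, g i := by
    intro j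
    rw [hG j]
    congr 1
    ext i
    simp [hx.le_iff_le]
  have hG0 : ∀ j, 0 ≤ G j := by
    intro j
    rw [hGIic j]
    exact Finset.sum_nonneg fun i _ => (hg0 i).le
  -- the key monotonicity
  have key : ∀ j : Fin (n + 2), j ≠ Fin.last (n + 1) →
      f (j + 1) / g (j + 1) ≤ f j / g j := by
    intro j hj
    have hjlt : j < j + 1 := by
      rw [Fin.lt_add_one_iff]
      exact lt_of_le_of_ne (Fin.le_last j) hj
    exact hr j (j + 1) (hx hjlt).le
  constructor
  · intro j hj
    apply div_nonneg _ hθ0.le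
    exact mul_nonneg (hG0 j) (sub_nonneg.2 (key j hj))
  · -- the sum
    rw [← Finset.sum_div]
    -- abbreviations
    set F : Fin (n + 2) → ℝ :=
      fun j => G j * (f j / g j - f (j + 1) / g (j + 1)) with hF
    have hfilter : (univ.filter (fun j => j ≠ Fin.last (n + 1)) : Finset (Fin (n+2)))
        = univ.erase (Fin.last (n + 1)) := by
      ext i; simp [Finset.mem_erase]
    have hsum1 : ∑ j ∈ univ.filter (fun j => j ≠ Fin.last (n + 1)), F j
        = ∑ j : Fin (n + 1), F j.castSucc := by
      rw [hfilter]
      have := Fin.sum_univ_castSucc (f := F)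
      have herase : ∑ j ∈ univ.erase (Fin.last (n + 1)), F j
          = (∑ j, F j) - F (Fin.last (n + 1)) := by
        rw [Finset.sum_erase_eq_sub (Finset.mem_univ _)]
      rw [herase, this]; ring
    -- succ step for G
    have hGsucc : ∀ j : Fin (n + 1), G j.succ = G j.castSucc + g j.succ := by
      intro j
      have hIic : Finset.Iic j.succ = insert j.succ (Finset.Iic j.castSucc) := by
        ext i
        simp only [Finset.mem_Iic, Finset.mem_insert, Fin.le_def, Fin.val_succ,
          Fin.coe_castSucc, Fin.ext_iff]
        omega
      rw [hGIic, hGIic, hIic, Finset.sum_insert (by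
        simp only [Finset.mem_Iic, Fin.le_def, Fin.val_succ, Fin.coe_castSucc]
        omega)]
      ring
    have hG0' : G 0 = g 0 := by
      rw [hGIic]
      have : Finset.Iic (0 : Fin (n+2)) = {0} := by
        ext i; simp [Fin.le_zero_iff]
      rw [this, Finset.sum_singleton]
    have hGlast : G (Fin.last (n + 1)) = 1 := by
      rw [hGIic]
      have : Finset.Iic (Fin.last (n + 1)) = univ := by
        ext i; simp [Fin.le_last]
      rw [this, hg1]
    set h : Fin (n + 2) → ℝ := fun k => G k * (f k / g k) with hh
    have hterm : ∀ j : Fin (n + 1),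
        F j.castSucc = (h j.castSucc - h j.succ) + f j.succ := by
      intro j
      have h1 : j.castSucc + 1 = j.succ := Fin.coeSucc_eq_succ
      have h2 : g j.succ * (f j.succ / g j.succ) = f j.succ :=
        mul_div_cancel₀ _ (hg0 j.succ).ne'
      simp only [hF, hh, h1, hGsucc j]
      linear_combination h2
    open Fin.NatCast in
    have e1 : ∀ j : Fin (n + 1), (((j : ℕ) : Fin (n + 2))) = j.castSucc := by
      intro j
      apply Fin.ext
      rw [Fin.val_cast_of_lt (Nat.lt_succ_of_lt j.isLt)]
      simp
    open Fin.NatCast in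
    have e2 : ∀ j : Fin (n + 1), ((((j : ℕ) + 1 : ℕ)) : Fin (n + 2)) = j.succ := by
      intro j
      apply Fin.ext
      rw [Fin.val_cast_of_lt (by omega : (j : ℕ) + 1 < n + 2)]
      simp
    open Fin.NatCast in
    have e3 : ((n + 1 : ℕ) : Fin (n + 2)) = Fin.last (n + 1) := by
      apply Fin.ext
      rw [Fin.val_cast_of_lt (by omega : n + 1 < n + 2)]
      simp
    open Fin.NatCast in
    set H : ℕ → ℝ := fun i => h (i : Fin (n + 2)) with hH
    have htel : ∑ j : Fin (n + 1), (h j.castSucc - h j.succ)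
        = h 0 - h (Fin.last (n + 1)) := by
      calc ∑ j : Fin (n + 1), (h j.castSucc - h j.succ)
          = ∑ j : Fin (n + 1), (H (j : ℕ) - H ((j : ℕ) + 1)) := by
            refine Finset.sum_congr rfl fun j _ => ?_
            rw [hH]
            simp only
            rw [e1 j, e2 j]
        _ = ∑ i ∈ Finset.range (n + 1), (H i - H (i + 1)) :=
            Fin.sum_univ_eq_sum_range (fun i : ℕ => H i - H (i + 1)) (n + 1)
        _ = H 0 - H (n + 1) := Finset.sum_range_sub' H (n + 1)
        _ = h 0 - h (Fin.last (n + 1)) := by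
            rw [hH]
            simp only
            rw [e3]
            norm_num
    have hsumf : ∑ j : Fin (n + 1), f j.succ = 1 - f 0 := by
      have := Fin.sum_univ_succ (f := f)
      rw [hf1] at this
      linarith
    have hh0 : h 0 = f 0 := by
      simp only [hh, hG0']
      exact mul_div_cancel₀ _ (hg0 0).ne'
    have hhlast : h (Fin.last (n + 1)) = θ := by
      simp only [hh, hGlast, hθ]; ring
    have : ∑ j ∈ univ.filter (fun j => j ≠ Fin.last (n + 1)), F j = 1 - θ := by
      rw [hsum1]
      calc ∑ j : Fin (n + 1), F j.castSucc
          = ∑ j : Fin (n + 1), ((h j.castSucc - h j.succ) + f j.succ) :=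
            Finset.sum_congr rfl fun j _ => hterm j
        _ = (∑ j : Fin (n + 1), (h j.castSucc - h j.succ))
            + ∑ j : Fin (n + 1), f j.succ := Finset.sum_add_distrib
        _ = (h 0 - h (Fin.last (n + 1))) + (1 - f 0) := by rw [htel, hsumf]
        _ = 1 - θ := by rw [hh0, hhlast]; ring
    rw [this]
    exact div_self hθ0.ne'
end

section
/- The ratio g/f is non-decreasing on ℐ (i.e., g(x_i)/f(x_i) ≤ g(x_{i'})/f(x_{i'}) whenever x_i ≤ x_{i'} in ℐ) if and only if there exist ω ∈ [0,1] and a probability mass function v on ℐ \ {x_1} (i.e., v(x_j) ≥ 0 and ∑_{x_j ∈ ℐ \ {x_1}} v(x_j) = 1) such that g(x_i) = ω·f(x_i) + (1−ω)·∑_{x_j ∈ ℐ \ {x_1}} f_{x_j}(x_i)·v(x_j) for every x_i ∈ ℐ. -/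
open Finset

private lemma finite_g_mixture_tele (n : ℕ) (a : Fin (n+2) → ℝ) (i : Fin (n+2)) :
    ∑ j ∈ univ.filter (fun j => j ≠ (0 : Fin (n+2)) ∧ j ≤ i), (a j - a (j-1)) = a i - a 0 := by
  induction i using Fin.induction with
  | zero =>
    have : univ.filter (fun j => j ≠ (0 : Fin (n+2)) ∧ j ≤ 0) = ∅ := by
      ext j; simp [Fin.le_zero_iff]
    rw [this]; simp
  | succ i ih =>
    have hstep : univ.filter (fun j => j ≠ (0 : Fin (n+2)) ∧ j ≤ i.succ) =
        insert i.succ (univ.filter (fun j => j ≠ (0 : Fin (n+2)) ∧ j ≤ i.castSucc)) := by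
      ext j
      simp only [mem_filter, mem_univ, true_and, mem_insert]
      constructor
      · rintro ⟨hj0, hji⟩
        rcases eq_or_lt_of_le hji with h | h
        · exact Or.inl h
        · right
          refine ⟨hj0, ?_⟩
          rw [Fin.lt_iff_val_lt_val] at h
          rw [Fin.le_iff_val_le_val]
          simp at h ⊢; omega
      · rintro (h | ⟨hj0, hji⟩)
        · exact ⟨h ▸ Fin.succ_ne_zero i, h ▸ le_rfl⟩
        · refine ⟨hj0, le_trans hji ?_⟩
          rw [Fin.le_iff_val_le_val]; simp
    have hnotmem : i.succ ∉ univ.filter (fun j => j ≠ (0 : Fin (n+2)) ∧ j ≤ i.castSucc) := by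
      simp only [mem_filter, mem_univ, true_and, not_and]
      intro _
      rw [Fin.le_iff_val_le_val]; simp
    have hsub : (i.succ : Fin (n+2)) - 1 = i.castSucc := by
      ext
      rw [Fin.coe_sub_one, if_neg (Fin.succ_ne_zero i)]
      simp
    rw [hstep, sum_insert hnotmem, ih, hsub]
    ring

/-- Finite mixture representation of `g` (Theorem on `g` as a mixture):
the ratio `g/f` is non-decreasing on `ℐ` if and only if `g` is a mixture of
`f` and its left-truncations, with weight `ω ∈ [0,1]` and a mass function `v`
on `ℐ \ {x_1}`. -/
theorem finite_g_mixture
    (n : ℕ) (x : Fin (n + 2) → ℝ) (hx : StrictMono x)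
    (f g : Fin (n + 2) → ℝ)
    (hf0 : ∀ i, 0 < f i) (hf1 : ∑ i, f i = 1)
    (hg0 : ∀ i, 0 ≤ g i) (hg1 : ∑ i, g i = 1)
    (F : Fin (n + 2) → ℝ)
    (hF : ∀ j, F j = ∑ i ∈ univ.filter (fun i => x i ≤ x j), f i) :
    (∀ i i' : Fin (n + 2), x i ≤ x i' → g i / f i ≤ g i' / f i') ↔
    ∃ ω ∈ Set.Icc (0 : ℝ) 1, ∃ v : Fin (n + 2) → ℝ,
      (∀ j, j ≠ (0 : Fin (n + 2)) → 0 ≤ v j) ∧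
      (∑ j ∈ univ.filter (fun j => j ≠ (0 : Fin (n + 2))), v j = 1) ∧
      (∀ i, g i = ω * f i + (1 - ω) *
        ∑ j ∈ univ.filter (fun j => j ≠ (0 : Fin (n + 2))),
          (f i * (if x j ≤ x i then (1 : ℝ) else 0) / (1 - F (j - 1))) * v j) := by
  -- common facts
  have hle : ∀ i j : Fin (n+2), x i ≤ x j ↔ i ≤ j := fun i j => hx.le_iff_le
  have hFlt : ∀ j : Fin (n+2), j ≠ 0 → F (j-1) < 1 := by
    intro j hj
    have hj1 : (0:ℕ) < j.val := Fin.pos_iff_ne_zero.mpr hj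
    have hlast : Fin.last (n+1) ∉ univ.filter (fun i => x i ≤ x (j-1)) := by
      simp only [mem_filter, mem_univ, true_and, not_le]
      apply hx
      rw [Fin.lt_iff_val_lt_val, Fin.coe_sub_one, if_neg hj]
      simp [Fin.last]
      omega
    calc F (j-1) = ∑ i ∈ univ.filter (fun i => x i ≤ x (j-1)), f i := hF _
      _ < ∑ i, f i := by
          apply sum_lt_sum_of_subset (subset_univ _) (mem_univ (Fin.last (n+1))) hlast
            (hf0 _) (fun k _ _ => (hf0 k).le)
      _ = 1 := hf1
  have hden : ∀ j : Fin (n+2), j ≠ 0 → (0:ℝ) < 1 - F (j-1) := by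
    intro j hj; linarith [hFlt j hj]
  have hsumind : ∀ j : Fin (n+2), j ≠ 0 →
      ∑ i, f i * (if x j ≤ x i then (1:ℝ) else 0) = 1 - F (j-1) := by
    intro j hj
    have hiff : ∀ i : Fin (n+2), (x j ≤ x i) ↔ ¬ (x i ≤ x (j-1)) := by
      intro i
      rw [hle, hle, not_le, Fin.lt_iff_val_lt_val, Fin.le_iff_val_le_val,
        Fin.coe_sub_one, if_neg hj]
      have hj1 : (0:ℕ) < j.val := Fin.pos_iff_ne_zero.mpr hj
      omega
    have h1 : ∑ i, f i * (if x j ≤ x i then (1:ℝ) else 0)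
        = ∑ i ∈ univ.filter (fun i => ¬ (x i ≤ x (j-1))), f i := by
      rw [sum_filter]
      apply sum_congr rfl
      intro i _
      rw [if_congr (hiff i) rfl rfl]
      split <;> ring
    rw [h1, hF]
    have := sum_filter_add_sum_filter_not univ (fun i => x i ≤ x (j-1)) f
    rw [hf1] at this
    linarith
  constructor
  · -- forward direction
    intro hmono
    set a : Fin (n+2) → ℝ := fun i => g i / f i with ha
    have hga : ∀ i, g i = f i * a i := by
      intro i; simp only [ha]; rw [mul_div_assoc', eq_div_iff (hf0 i).ne', mul_comm]
    have hamono : ∀ i i' : Fin (n+2), i ≤ i' → a i ≤ a i' :=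
      fun i i' h => hmono i i' ((hle i i').mpr h)
    have hfa1 : ∑ i, f i * a i = 1 := by
      rw [← hg1]; exact sum_congr rfl fun i _ => (hga i).symm
    have ha0 : 0 ≤ a 0 := div_nonneg (hg0 0) (hf0 0).le
    have ha1 : a 0 ≤ 1 := by
      have h1 : ∑ i, f i * a 0 ≤ ∑ i, f i * a i :=
        sum_le_sum fun i _ => mul_le_mul_of_nonneg_left (hamono 0 i (Fin.zero_le i)) (hf0 i).le
      rw [← sum_mul, hf1, one_mul, hfa1] at h1
      exact h1
    by_cases hω : a 0 = 1
    · -- degenerate case: g = f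
      have hall : ∀ i, a i = 1 := by
        have hz : ∑ i, f i * (a i - a 0) = 0 := by
          have : ∑ i, f i * (a i - a 0) = ∑ i, f i * a i - ∑ i, f i * a 0 := by
            rw [← sum_sub_distrib]; exact sum_congr rfl fun i _ => by ring
          rw [this, hfa1, ← sum_mul, hf1, one_mul, hω]
          ring
        have hnn : ∀ i ∈ (univ : Finset (Fin (n+2))), 0 ≤ f i * (a i - a 0) :=
          fun i _ => mul_nonneg (hf0 i).le (sub_nonneg.mpr (hamono 0 i (Fin.zero_le i)))
        have h2 := (sum_eq_zero_iff_of_nonneg hnn).mp hz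
        intro i
        have h3 := h2 i (mem_univ i)
        rcases mul_eq_zero.mp h3 with h | h
        · exact absurd h (hf0 i).ne'
        · rw [← hω]; linarith [sub_eq_zero.mp h]
      have h1ne0 : (1 : Fin (n+2)) ≠ 0 := by
        intro hc
        have := congrArg Fin.val hc
        simp [Fin.val_one] at this
      refine ⟨1, ⟨zero_le_one, le_rfl⟩, (fun j => if j = 1 then 1 else 0), ?_, ?_, ?_⟩
      · intro j _; dsimp only; split <;> norm_num
      · rw [sum_ite_eq' (univ.filter (fun j => j ≠ (0 : Fin (n+2)))) 1 (fun _ => (1:ℝ))]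
        rw [if_pos (by simp [h1ne0])]
      · intro i
        rw [hga i, hall i]
        ring
    · -- main case : a 0 < 1
      have hωlt : a 0 < 1 := lt_of_le_of_ne ha1 hω
      have hc : (0:ℝ) < 1 - a 0 := by linarith
      set v : Fin (n+2) → ℝ := fun j => (1 - F (j-1)) * (a j - a (j-1)) / (1 - a 0) with hv
      have hsub_le : ∀ j : Fin (n+2), j ≠ 0 → j - 1 ≤ j := by
        intro j hj
        rw [Fin.le_iff_val_le_val, Fin.coe_sub_one, if_neg hj]
        omega
      have hv0 : ∀ j : Fin (n+2), j ≠ 0 → 0 ≤ v j := by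
        intro j hj
        apply div_nonneg _ hc.le
        exact mul_nonneg (hden j hj).le (sub_nonneg.mpr (hamono _ _ (hsub_le j hj)))
      have hrep : ∀ i, g i = a 0 * f i + (1 - a 0) *
          ∑ j ∈ univ.filter (fun j => j ≠ (0 : Fin (n+2))),
            (f i * (if x j ≤ x i then (1:ℝ) else 0) / (1 - F (j-1))) * v j := by
        intro i
        have hterm : ∀ j ∈ univ.filter (fun j => j ≠ (0 : Fin (n+2))),
            (f i * (if x j ≤ x i then (1:ℝ) else 0) / (1 - F (j-1))) * v j
            = f i / (1 - a 0) * (if x j ≤ x i then (a j - a (j-1)) else 0) := by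
          intro j hj
          rw [mem_filter] at hj
          have hD := hden j hj.2
          rw [hv]
          split
          · field_simp
          · simp
        rw [sum_congr rfl hterm, ← mul_sum]
        have hin : ∑ j ∈ univ.filter (fun j => j ≠ (0 : Fin (n+2))),
            (if x j ≤ x i then (a j - a (j-1)) else 0)
            = ∑ j ∈ univ.filter (fun j => j ≠ (0 : Fin (n+2)) ∧ j ≤ i), (a j - a (j-1)) := by
          rw [sum_filter, sum_filter]
          apply sum_congr rfl
          intro j _
          by_cases hj0 : j = (0 : Fin (n+2))
          · simp [hj0]
          · by_cases hji : j ≤ i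
            · simp [hj0, hji, (hle j i).mpr hji]
            · have hnx : ¬ x j ≤ x i := fun h => hji ((hle j i).mp h)
              simp [hj0, hji, hnx]
        rw [hin, finite_g_mixture_tele n a i, hga i]
        field_simp
        ring
      have hv1 : ∑ j ∈ univ.filter (fun j => j ≠ (0 : Fin (n+2))), v j = 1 := by
        have h1 : ∑ i, g i = ∑ i, (a 0 * f i + (1 - a 0) *
            ∑ j ∈ univ.filter (fun j => j ≠ (0 : Fin (n+2))),
              (f i * (if x j ≤ x i then (1:ℝ) else 0) / (1 - F (j-1))) * v j) :=
          sum_congr rfl fun i _ => hrep i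
        rw [hg1, sum_add_distrib, ← mul_sum, hf1, mul_one, ← mul_sum, sum_comm] at h1
        have h2 : ∀ j ∈ univ.filter (fun j => j ≠ (0 : Fin (n+2))),
            ∑ i, (f i * (if x j ≤ x i then (1:ℝ) else 0) / (1 - F (j-1))) * v j = v j := by
          intro j hj
          rw [mem_filter] at hj
          have hD := hden j hj.2
          have : ∀ i : Fin (n+2), (f i * (if x j ≤ x i then (1:ℝ) else 0) / (1 - F (j-1))) * v j
              = (f i * (if x j ≤ x i then (1:ℝ) else 0)) * (v j / (1 - F (j-1))) := by
            intro i; ring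
          rw [sum_congr rfl fun i _ => this i, ← sum_mul, hsumind j hj.2]
          field_simp
        rw [sum_congr rfl h2] at h1
        have h3 : (1 - a 0) * (∑ j ∈ univ.filter (fun j => j ≠ (0 : Fin (n+2))), v j - 1) = 0 := by
          linarith
        rcases mul_eq_zero.mp h3 with h | h
        · linarith
        · linarith
      exact ⟨a 0, ⟨ha0, ha1⟩, v, hv0, hv1, hrep⟩
  · -- backward direction
    rintro ⟨ω, ⟨hω0, hω1⟩, v, hv0, hv1, hrep⟩
    have hratio : ∀ i, g i / f i = ω + (1 - ω) *
        ∑ j ∈ univ.filter (fun j => j ≠ (0 : Fin (n+2))),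
          ((if x j ≤ x i then (1:ℝ) else 0) / (1 - F (j-1))) * v j := by
      intro i
      rw [hrep i]
      have h1 : ∑ j ∈ univ.filter (fun j => j ≠ (0 : Fin (n+2))),
          (f i * (if x j ≤ x i then (1:ℝ) else 0) / (1 - F (j-1))) * v j
          = f i * ∑ j ∈ univ.filter (fun j => j ≠ (0 : Fin (n+2))),
            ((if x j ≤ x i then (1:ℝ) else 0) / (1 - F (j-1))) * v j := by
        rw [mul_sum]
        exact sum_congr rfl fun j _ => by ring
      rw [h1]
      field_simp [(hf0 i).ne']
    intro i i' hii'
    rw [hratio i, hratio i']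
    have hT : ∑ j ∈ univ.filter (fun j => j ≠ (0 : Fin (n+2))),
          ((if x j ≤ x i then (1:ℝ) else 0) / (1 - F (j-1))) * v j
        ≤ ∑ j ∈ univ.filter (fun j => j ≠ (0 : Fin (n+2))),
          ((if x j ≤ x i' then (1:ℝ) else 0) / (1 - F (j-1))) * v j := by
      apply sum_le_sum
      intro j hj
      rw [mem_filter] at hj
      have hD := hden j hj.2
      by_cases hji : x j ≤ x i
      · rw [if_pos hji, if_pos (le_trans hji hii')]
      · rw [if_neg hji]
        simp only [zero_div, zero_mul]
        apply mul_nonneg (div_nonneg _ hD.le) (hv0 j hj.2)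
        split <;> norm_num
    have := mul_le_mul_of_nonneg_left hT (by linarith : (0:ℝ) ≤ 1 - ω)
    linarith
end

section
/- Suppose there exist ω ∈ [0,1] and a probability mass function v on ℐ \ {x_1} (i.e., v(x_j) ≥ 0 and ∑_{x_j ∈ ℐ \ {x_1}} v(x_j) = 1) such that g(x_i) = ω·f(x_i) + (1−ω)·∑_{x_j ∈ ℐ \ {x_1}} f_{x_j}(x_i)·v(x_j) for every x_i ∈ ℐ. Then ω = g(x_1)/f(x_1), and if ω < 1, then v is uniquely determined with v(x_j) = {1 − F(x_{j−1})}·{g(x_j)/f(x_j) − g(x_{j−1})/f(x_{j−1})}/(1−ω) for every x_j ∈ ℐ \ {x_1}. -/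
open Finset

/-- Uniqueness for the finite mixture representation of `g`: the weight
satisfies `ω = g(x_1)/f(x_1)`, and when `ω < 1` the mixing mass function is
`v(x_j) = {1 − F(x_{j−1})}·{g(x_j)/f(x_j) − g(x_{j−1})/f(x_{j−1})}/(1−ω)`. -/
theorem finite_g_mixture_uniqueness
    (n : ℕ) (x : Fin (n + 2) → ℝ) (hx : StrictMono x)
    (f g : Fin (n + 2) → ℝ)
    (hf0 : ∀ i, 0 < f i) (hf1 : ∑ i, f i = 1)
    (hg0 : ∀ i, 0 ≤ g i) (hg1 : ∑ i, g i = 1)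
    (F : Fin (n + 2) → ℝ)
    (hF : ∀ j, F j = ∑ i ∈ univ.filter (fun i => x i ≤ x j), f i)
    (ω : ℝ) (hω : ω ∈ Set.Icc (0 : ℝ) 1)
    (v : Fin (n + 2) → ℝ)
    (hv0 : ∀ j, j ≠ (0 : Fin (n + 2)) → 0 ≤ v j)
    (hv1 : ∑ j ∈ univ.filter (fun j => j ≠ (0 : Fin (n + 2))), v j = 1)
    (hmix : ∀ i, g i = ω * f i + (1 - ω) *
      ∑ j ∈ univ.filter (fun j => j ≠ (0 : Fin (n + 2))),
        (f i * (if x j ≤ x i then (1 : ℝ) else 0) / (1 - F (j - 1))) * v j) :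
    ω = g 0 / f 0 ∧
    (ω < 1 → ∀ j, j ≠ (0 : Fin (n + 2)) →
      v j = (1 - F (j - 1)) * (g j / f j - g (j - 1) / f (j - 1)) / (1 - ω)) := by
  have hxle : ∀ i j : Fin (n+2), (x j ≤ x i ↔ j ≤ i) := fun i j => hx.le_iff_le
  set s := univ.filter (fun j => j ≠ (0 : Fin (n+2))) with hs
  set T : Fin (n+2) → ℝ :=
    fun i => ∑ j ∈ s, (if j ≤ i then (1:ℝ) else 0) / (1 - F (j-1)) * v j with hTdef
  have hT : ∀ i, g i = ω * f i + (1-ω) * (f i * T i) := by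
    intro i
    have hsum : (∑ j ∈ s, (f i * if x j ≤ x i then (1:ℝ) else 0) / (1 - F (j-1)) * v j)
        = f i * T i := by
      rw [hTdef]
      simp only
      rw [Finset.mul_sum]
      apply Finset.sum_congr rfl
      intro j _
      rw [if_congr (hxle i j) rfl rfl]
      ring
    rw [hmix i, hsum]
  have hT0 : T 0 = 0 := by
    rw [hTdef]
    apply Finset.sum_eq_zero
    intro j hj
    simp only [hs, mem_filter] at hj
    have hne : ¬ j ≤ 0 := fun h => hj.2 (Fin.le_zero_iff.mp h)
    rw [if_neg hne]
    ring
  have hω0 : ω = g 0 / f 0 := by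
    have := hT 0
    rw [hT0] at this
    field_simp [this, ne_of_gt (hf0 0)]
    rw [this]; ring
  refine ⟨hω0, fun hω1 j hj => ?_⟩
  have hωne : (1:ℝ) - ω ≠ 0 := by linarith
  have hjval : (j : ℕ) ≠ 0 := fun h => hj (Fin.ext h)
  have hj1val : ((j - 1 : Fin (n+2)) : ℕ) = (j : ℕ) - 1 := by
    rw [Fin.coe_sub_one, if_neg hj]
  have hF' : ∀ k : Fin (n+2), F k = ∑ i ∈ univ.filter (fun i => i ≤ k), f i := by
    intro k
    rw [hF]
    apply Finset.sum_congr
    · ext i; simp [hxle]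
    · intros; rfl
  have hFpos : 0 < 1 - F (j-1) := by
    have hsplit : F (j-1) + ∑ i ∈ univ.filter (fun i => ¬ i ≤ j-1), f i = 1 := by
      rw [hF' (j-1), ← hf1]
      exact Finset.sum_filter_add_sum_filter_not _ _ _
    have hjin : j ∈ univ.filter (fun i => ¬ i ≤ (j-1 : Fin (n+2))) := by
      simp only [mem_filter, mem_univ, true_and]
      rw [Fin.le_def, hj1val]
      omega
    have : f j ≤ ∑ i ∈ univ.filter (fun i => ¬ i ≤ j-1), f i :=
      Finset.single_le_sum (fun i _ => (hf0 i).le) hjin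
    have := hf0 j
    linarith
  have hFne : (1:ℝ) - F (j-1) ≠ 0 := ne_of_gt hFpos
  have hjs : j ∈ s := by simp [hs, hj]
  have hdiff : T j - T (j-1) = v j / (1 - F (j-1)) := by
    rw [hTdef]
    simp only
    rw [← Finset.sum_sub_distrib]
    have hcong : ∀ k ∈ s, (if k ≤ j then (1:ℝ) else 0) / (1 - F (k-1)) * v k
        - (if k ≤ j-1 then (1:ℝ) else 0) / (1 - F (k-1)) * v k
        = if k = j then v k / (1 - F (k-1)) else 0 := by
      intro k hk
      by_cases hkj : k = j
      · subst hkj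
        rw [if_pos le_rfl, if_neg, if_pos rfl]
        · ring
        · rw [Fin.le_def, hj1val]; omega
      · have hkjval : (k : ℕ) ≠ (j : ℕ) := fun h => hkj (Fin.val_injective h)
        rw [if_neg hkj]
        by_cases h1 : k ≤ j - 1
        · have h2 : k ≤ j := by
            rw [Fin.le_def]
            rw [Fin.le_def, hj1val] at h1
            omega
          rw [if_pos h1, if_pos h2]; ring
        · have h2 : ¬ k ≤ j := by
            rw [Fin.le_def]
            rw [Fin.le_def, hj1val] at h1
            omega
          rw [if_neg h1, if_neg h2]; ring
    rw [Finset.sum_congr rfl hcong, Finset.sum_ite_eq' s j (fun k => v k / (1 - F (k-1))),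
      if_pos hjs]
  have h1 : g j / f j = ω + (1-ω) * T j := by
    rw [hT j]; field_simp [ne_of_gt (hf0 j)]
  have h2 : g (j-1) / f (j-1) = ω + (1-ω) * T (j-1) := by
    rw [hT (j-1)]; field_simp [ne_of_gt (hf0 (j-1))]
  have hdiff2 : (1 - F (j-1)) * (T j - T (j-1)) = v j := by
    rw [hdiff]; field_simp
  rw [h1, h2]
  have e : ω + (1-ω)*T j - (ω + (1-ω)*T (j-1)) = (1-ω)*(T j - T (j-1)) := by ring
  rw [e, hdiff]
  field_simp
end

section
/- The ratio f/g is non-increasing on ℕ₀ (i.e., f(i)/g(i) ≥ f(i')/g(i') whenever i ≤ i') if and only if there exist θ ∈ [0,1] and a probability mass function u on ℕ₀ (i.e., u(j) ≥ 0 and ∑_{j ∈ ℕ₀} u(j) = 1) such that f(i) = θ·g(i) + (1−θ)·∑_{j ∈ ℕ₀} g^{j}(i)·u(j) for every i ∈ ℕ₀. -/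
open Filter Finset Topology

private lemma aux_alg {a b c x : ℝ} (hb : b ≠ 0) (hc : c ≠ 0) :
    a / b * (b * x / c) = a / c * x := by
  field_simp

private lemma hasSum_of_tendsto_nat {v : ℕ → ℝ} (h0 : ∀ n, 0 ≤ v n) {L : ℝ}
    (hL : Tendsto (fun N => ∑ j ∈ Finset.range N, v j) atTop (𝓝 L)) : HasSum v L := by
  have hmono : Monotone fun N => ∑ j ∈ Finset.range N, v j := by
    intro a b hab
    exact Finset.sum_le_sum_of_subset_of_nonneg (Finset.range_subset_range.2 hab)
      (fun i _ _ => h0 i)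
  have hsum : Summable v := summable_of_sum_range_le h0 (hmono.ge_of_tendsto hL)
  exact hsum.hasSum_iff_tendsto_nat.2 hL

/-- Mixture representation of `f` for count distributions on `ℕ₀ = {0,1,2,…}`:
the ratio `f/g` is non-increasing if and only if `f` is a mixture of `g` and
its right-truncations with weight `θ ∈ [0,1]` and a mass function `u` on `ℕ₀`. -/
theorem count_f_mixture
    (f g : ℕ → ℝ)
    (hf0 : ∀ i, 0 ≤ f i) (hf1 : ∑' i, f i = 1)
    (hg0 : ∀ i, 0 < g i) (hg1 : ∑' i, g i = 1)
    (G : ℕ → ℝ) (hG : ∀ j, G j = ∑ i ∈ Finset.range (j + 1), g i) :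
    (∀ i i' : ℕ, i ≤ i' → f i' / g i' ≤ f i / g i) ↔
    ∃ θ ∈ Set.Icc (0 : ℝ) 1, ∃ u : ℕ → ℝ,
      (∀ j, 0 ≤ u j) ∧ (∑' j, u j = 1) ∧
      (∀ i, f i = θ * g i + (1 - θ) *
        ∑' j, (g i * (if i ≤ j then (1 : ℝ) else 0) / G j) * u j) := by
  have hsf : Summable f := by
    by_contra h; rw [tsum_eq_zero_of_not_summable h] at hf1; norm_num at hf1
  have hsg : Summable g := by
    by_contra h; rw [tsum_eq_zero_of_not_summable h] at hg1; norm_num at hg1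
  have hGpos : ∀ j, 0 < G j := by
    intro j; rw [hG]
    exact Finset.sum_pos (fun i _ => hg0 i) ⟨0, by simp⟩
  constructor
  · intro hmono
    set r : ℕ → ℝ := fun i => f i / g i with hrdef
    have hrant : Antitone r := fun i i' h => hmono i i' h
    have hr0 : ∀ i, 0 ≤ r i := fun i => div_nonneg (hf0 i) (hg0 i).le
    have hfg : ∀ i, f i = r i * g i := fun i => (div_mul_cancel₀ _ (hg0 i).ne').symm
    have hbdd : BddBelow (Set.range r) := ⟨0, by rintro x ⟨i, rfl⟩; exact hr0 i⟩
    set θ := ⨅ i, r i with hθdef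
    have hθ0 : 0 ≤ θ := le_ciInf hr0
    have hθle : ∀ i, θ ≤ r i := fun i => ciInf_le hbdd i
    have hrlim : Tendsto r atTop (𝓝 θ) := tendsto_atTop_ciInf hrant hbdd
    have hθ1 : θ ≤ 1 := by
      have h1 : θ * 1 ≤ 1 := by
        calc θ * 1 = θ * ∑' i, g i := by rw [hg1]
          _ = ∑' i, θ * g i := tsum_mul_left.symm
          _ ≤ ∑' i, f i := Summable.tsum_le_tsum (fun i => by
                rw [hfg i]
                exact mul_le_mul_of_nonneg_right (hθle i) (hg0 i).le)
                (hsg.mul_left θ) hsf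
          _ = 1 := hf1
      linarith
    rcases eq_or_lt_of_le hθ1 with hθeq | hθlt
    · -- θ = 1 : f = g
      have hge : ∀ i, g i ≤ f i := by
        intro i
        have h1 : (1 : ℝ) ≤ r i := hθeq ▸ hθle i
        calc g i = 1 * g i := (one_mul _).symm
          _ ≤ r i * g i := mul_le_mul_of_nonneg_right h1 (hg0 i).le
          _ = f i := (hfg i).symm
      have hfeq : ∀ i, f i = g i := by
        intro i
        have hd : Summable (fun i => f i - g i) := hsf.sub hsg
        have htd : ∑' i, (f i - g i) = 0 := by
          rw [Summable.tsum_sub hsf hsg, hf1, hg1]; ring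
        have h2 : f i - g i ≤ 0 := by
          have := Summable.le_tsum hd i (fun j _ => sub_nonneg.2 (hge j))
          rwa [htd] at this
        linarith [hge i]
      refine ⟨1, ⟨zero_le_one, le_refl 1⟩, g, fun j => (hg0 j).le, hg1, fun i => ?_⟩
      simp [hfeq i]
    · -- θ < 1
      have hc : (0 : ℝ) < 1 - θ := by linarith
      refine ⟨θ, ⟨hθ0, hθ1⟩, fun j => G j * (r j - r (j + 1)) / (1 - θ), ?_, ?_, ?_⟩
      · intro j
        exact div_nonneg (mul_nonneg (hGpos j).le
          (sub_nonneg.2 (hrant (Nat.le_succ j)))) hc.le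
      · -- sums to 1
        have hps : ∀ N, ∑ j ∈ Finset.range N, G j * (r j - r (j + 1)) =
            (∑ i ∈ Finset.range N, f i) - r N * ∑ i ∈ Finset.range N, g i := by
          intro N
          induction N with
          | zero => simp
          | succ N ih =>
            have h1 : G N = (∑ i ∈ Finset.range N, g i) + g N := by
              rw [hG, Finset.sum_range_succ]
            rw [Finset.sum_range_succ, ih, h1, Finset.sum_range_succ,
              Finset.sum_range_succ, hfg N]
            ring
        have hfsum : Tendsto (fun N => ∑ i ∈ Finset.range N, f i) atTop (𝓝 1) :=
          hf1 ▸ hsf.hasSum.tendsto_sum_nat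
        have hgsum : Tendsto (fun N => ∑ i ∈ Finset.range N, g i) atTop (𝓝 1) :=
          hg1 ▸ hsg.hasSum.tendsto_sum_nat
        have htend : Tendsto (fun N => ∑ j ∈ Finset.range N, G j * (r j - r (j + 1)))
            atTop (𝓝 (1 - θ)) := by
          have : Tendsto (fun N => (∑ i ∈ Finset.range N, f i) -
              r N * ∑ i ∈ Finset.range N, g i) atTop (𝓝 (1 - θ * 1)) :=
            hfsum.sub (hrlim.mul hgsum)
          rw [mul_one] at this
          exact this.congr (fun N => (hps N).symm)
        have hv : HasSum (fun j => G j * (r j - r (j + 1))) (1 - θ) :=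
          hasSum_of_tendsto_nat (fun j => mul_nonneg (hGpos j).le
            (sub_nonneg.2 (hrant (Nat.le_succ j)))) htend
        have hu : HasSum (fun j => G j * (r j - r (j + 1)) / (1 - θ)) 1 := by
          have := hv.div_const (1 - θ)
          rwa [div_self hc.ne'] at this
        exact hu.tsum_eq
      · -- mixture formula
        intro i
        set w : ℕ → ℝ := fun j => if i ≤ j then r j - r (j + 1) else 0 with hwdef
        have hw0 : ∀ j, 0 ≤ w j := by
          intro j
          by_cases h : i ≤ j
          · simp only [hwdef, if_pos h]
            exact sub_nonneg.2 (hrant (Nat.le_succ j))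
          · simp [hwdef, if_neg h]
        have hterm : ∀ j, (g i * (if i ≤ j then (1 : ℝ) else 0) / G j) *
            (G j * (r j - r (j + 1)) / (1 - θ)) = (g i / (1 - θ)) * w j := by
          intro j
          by_cases h : i ≤ j
          · simp only [hwdef, if_pos h, mul_one]
            exact aux_alg (hGpos j).ne' hc.ne'
          · simp [hwdef, if_neg h]
        have hwps : ∀ N, ∑ j ∈ Finset.range N, w j = r i - r (max i N) := by
          intro N
          induction N with
          | zero => simp
          | succ N ih =>
            rw [Finset.sum_range_succ, ih]
            by_cases h : i ≤ N
            · rw [max_eq_right h, max_eq_right (h.trans (Nat.le_succ N))]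
              simp only [hwdef, if_pos h]
              ring
            · push_neg at h
              rw [max_eq_left h.le, max_eq_left h]
              simp [hwdef, Nat.not_le.2 h]
        have hwlim : Tendsto (fun N => ∑ j ∈ Finset.range N, w j) atTop
            (𝓝 (r i - θ)) := by
          have h1 : Tendsto (fun N => r i - r N) atTop (𝓝 (r i - θ)) :=
            tendsto_const_nhds.sub hrlim
          refine h1.congr' ?_
          filter_upwards [eventually_ge_atTop i] with N hN
          rw [hwps N, max_eq_right hN]
        have hwhs : HasSum w (r i - θ) := hasSum_of_tendsto_nat hw0 hwlim
        have hts : HasSum (fun j => (g i * (if i ≤ j then (1 : ℝ) else 0) / G j) *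
            (G j * (r j - r (j + 1)) / (1 - θ))) (g i / (1 - θ) * (r i - θ)) := by
          have h1 := hwhs.mul_left (g i / (1 - θ))
          have heq : (fun j => g i / (1 - θ) * w j) = fun j =>
              (g i * (if i ≤ j then (1 : ℝ) else 0) / G j) *
              (G j * (r j - r (j + 1)) / (1 - θ)) :=
            funext fun j => (hterm j).symm
          rwa [heq] at h1
        rw [hts.tsum_eq, hfg i]
        field_simp
        ring
  · rintro ⟨θ, ⟨hθ0, hθ1⟩, u, hu0, hu1, hform⟩ i i' hii'
    set a : ℕ → ℕ → ℝ := fun i j => (if i ≤ j then (1 : ℝ) else 0) / G j * u j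
      with hadef
    have ha0 : ∀ i j, 0 ≤ a i j := by
      intro i j
      refine mul_nonneg (div_nonneg ?_ (hGpos j).le) (hu0 j)
      split <;> norm_num
    have hfact : ∀ i, f i / g i = θ + (1 - θ) * ∑' j, a i j := by
      intro i
      rw [hform i]
      have he : (fun j => (g i * (if i ≤ j then (1 : ℝ) else 0) / G j) * u j)
          = fun j => g i * a i j := by
        funext j; simp only [hadef]; ring
      rw [he, tsum_mul_left, div_eq_iff (hg0 i).ne']
      ring
    have hptw : ∀ j, a i' j ≤ a i j := by
      intro j
      by_cases h : i' ≤ j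
      · simp [hadef, h, hii'.trans h]
      · have : a i' j = 0 := by simp [hadef, h]
        rw [this]; exact ha0 i j
    have hle : ∑' j, a i' j ≤ ∑' j, a i j := by
      by_cases hs : Summable (a i)
      · exact Summable.tsum_le_tsum hptw (hs.of_nonneg_of_le (ha0 i') hptw) hs
      · have hs' : ¬ Summable (a i') := by
          intro h
          apply hs
          have h1 : Summable (fun n => a i' (n + i')) := (summable_nat_add_iff i').2 h
          have h2 : (fun n => a i' (n + i')) = fun n => a i (n + i') := by
            funext n
            have hni : i' ≤ n + i' := Nat.le_add_left _ _
            simp [hadef, hni, hii'.trans hni]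
          rw [h2] at h1
          exact (summable_nat_add_iff i').1 h1
        rw [tsum_eq_zero_of_not_summable hs, tsum_eq_zero_of_not_summable hs']
    rw [hfact i, hfact i']
    have h1θ : 0 ≤ 1 - θ := by linarith
    nlinarith [mul_le_mul_of_nonneg_left hle h1θ]
end

section
/- Suppose there exist θ ∈ [0,1] and a probability mass function u on ℕ₀ (i.e., u(j) ≥ 0 and ∑_{j ∈ ℕ₀} u(j) = 1) such that f(i) = θ·g(i) + (1−θ)·∑_{j ∈ ℕ₀} g^{j}(i)·u(j) for every i ∈ ℕ₀. Then f(i)/g(i) → θ as i → ∞, and if θ < 1, then u is uniquely determined with u(j) = G(j)·{f(j)/g(j) − f(j+1)/g(j+1)}/(1−θ) for every j ∈ ℕ₀. -/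
/-- Uniqueness for the count mixture representation of `f`: the weight is the
limit `θ = lim_{i→∞} f(i)/g(i)`, and when `θ < 1` the mixing mass function is
`u(j) = G(j)·{f(j)/g(j) − f(j+1)/g(j+1)}/(1−θ)`. -/
theorem count_f_mixture_uniqueness
    (f g : ℕ → ℝ)
    (hf0 : ∀ i, 0 ≤ f i) (hf1 : ∑' i, f i = 1)
    (hg0 : ∀ i, 0 < g i) (hg1 : ∑' i, g i = 1)
    (G : ℕ → ℝ) (hG : ∀ j, G j = ∑ i ∈ Finset.range (j + 1), g i)
    (θ : ℝ) (hθ : θ ∈ Set.Icc (0 : ℝ) 1)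
    (u : ℕ → ℝ) (hu0 : ∀ j, 0 ≤ u j) (hu1 : ∑' j, u j = 1)
    (hmix : ∀ i, f i = θ * g i + (1 - θ) *
      ∑' j, (g i * (if i ≤ j then (1 : ℝ) else 0) / G j) * u j) :
    Filter.Tendsto (fun i => f i / g i) Filter.atTop (nhds θ) ∧
    (θ < 1 → ∀ j, u j = G j * (f j / g j - f (j + 1) / g (j + 1)) / (1 - θ)) := by
  have hGpos : ∀ j, 0 < G j := by
    intro j
    rw [hG]
    exact Finset.sum_pos (fun i _ => hg0 i) ⟨0, Finset.mem_range.2 (Nat.succ_pos j)⟩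
  set v : ℕ → ℝ := fun j => u j / G j with hv
  have hu_sum : Summable u := by
    by_contra h
    rw [tsum_eq_zero_of_not_summable h] at hu1
    norm_num at hu1
  have hGmono : ∀ j, G 0 ≤ G j := by
    intro j
    rw [hG, hG]
    apply Finset.sum_le_sum_of_subset_of_nonneg
    · exact Finset.range_subset_range.2 (by omega)
    · exact fun i _ _ => (hg0 i).le
  have hv_sum : Summable v := by
    apply Summable.of_nonneg_of_le
      (fun j => div_nonneg (hu0 j) (hGpos j).le)
      (fun j => ?_) (hu_sum.mul_right (G 0)⁻¹)
    rw [div_eq_mul_inv]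
    gcongr
    · exact hu0 j
    · exact hGpos 0
    · exact hGmono j
  set T : ℕ → ℝ := fun i => ∑' k, v (k + i) with hT
  have hshift : ∀ i, (∑' j, (if i ≤ j then v j else 0)) = T i := by
    intro i
    refine (tsum_eq_tsum_of_ne_zero_bij (fun k => (k : ℕ) + i) ?_ ?_ ?_)
    · intro a b hab
      exact Subtype.ext (by simpa using hab)
    · intro x hx
      simp only [Function.mem_support, ne_eq, ite_eq_right_iff, not_forall] at hx
      obtain ⟨hle, hne⟩ := hx
      refine ⟨⟨x - i, ?_⟩, ?_⟩
      · simp only [Function.mem_support, ne_eq]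
        rw [show x - i + i = x by omega]
        exact hne
      · show x - i + i = x
        omega
    · intro k
      simp [Nat.le_add_left]
  have hinner : ∀ i,
      (∑' j, (g i * (if i ≤ j then (1 : ℝ) else 0) / G j) * u j) = g i * T i := by
    intro i
    have : (fun j => (g i * (if i ≤ j then (1 : ℝ) else 0) / G j) * u j)
        = fun j => g i * (if i ≤ j then v j else 0) := by
      funext j
      by_cases h : i ≤ j
      · simp only [h, if_true, hv]
        ring
      · simp [h]
    rw [this, tsum_mul_left, hshift i]
  have hratio : ∀ i, f i / g i = θ + (1 - θ) * T i := by
    intro i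
    rw [hmix i, hinner i]
    field_simp [(hg0 i).ne']
  have hT0 : Filter.Tendsto T Filter.atTop (nhds 0) := tendsto_sum_nat_add v
  constructor
  · have : Filter.Tendsto (fun i => θ + (1 - θ) * T i) Filter.atTop (nhds (θ + (1 - θ) * 0)) :=
      Filter.Tendsto.add tendsto_const_nhds (Filter.Tendsto.const_mul _ hT0)
    simp only [mul_zero, add_zero] at this
    exact this.congr (fun i => (hratio i).symm)
  · intro hθ1 j
    have hsum_j : Summable (fun k => v (k + j)) := (summable_nat_add_iff j).2 hv_sum
    have hTrec : T j = v j + T (j + 1) := by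
      have h0 := Summable.tsum_eq_zero_add hsum_j
      have hre : (fun k => v (k + 1 + j)) = fun k => v (k + (j + 1)) := by
        funext k; congr 1; omega
      simp only [hT, zero_add] at h0 ⊢
      rw [h0, hre]
    have hdiff : f j / g j - f (j + 1) / g (j + 1) = (1 - θ) * v j := by
      rw [hratio j, hratio (j + 1), hTrec]; ring
    have h1θ : (0:ℝ) < 1 - θ := by linarith
    rw [hdiff, hv]
    rw [eq_div_iff h1θ.ne']
    field_simp [(hGpos j).ne']
end

section
/- Suppose there exist ω ∈ [0,1] and a probability mass function v on ℕ = {1, 2, …} (i.e., v(j) ≥ 0 and ∑_{j ∈ ℕ} v(j) = 1) such that g(i) = ω·f(i) + (1−ω)·∑_{j ∈ ℕ} f_{j}(i)·v(j) for every i ∈ ℕ₀. Then ω = g(0)/f(0), and if ω < 1, then v is uniquely determined with v(j) = {1 − F(j−1)}·{g(j)/f(j) − g(j−1)/f(j−1)}/(1−ω) for every j ∈ ℕ. -/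
/-- Uniqueness for the count mixture representation of `g`: the weight is
`ω = g(0)/f(0)`, and when `ω < 1` the mixing mass function on `ℕ = {1,2,…}` is
`v(j) = {1 − F(j−1)}·{g(j)/f(j) − g(j−1)/f(j−1)}/(1−ω)` (a point `x_j ∈ ℕ` is
written as `j + 1` with `j : ℕ`, and `F(x_j − 1) = F j = ∑_{i ∈ range (j+1)} f i`). -/
theorem count_g_mixture_uniqueness
    (f g : ℕ → ℝ)
    (hf0 : ∀ i, 0 < f i) (hf1 : ∑' i, f i = 1)
    (hg0 : ∀ i, 0 ≤ g i) (hg1 : ∑' i, g i = 1)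
    (F : ℕ → ℝ) (hF : ∀ j, F j = ∑ i ∈ Finset.range (j + 1), f i)
    (ω : ℝ) (hω : ω ∈ Set.Icc (0 : ℝ) 1)
    (v : ℕ → ℝ) (hv0 : ∀ j, 1 ≤ j → 0 ≤ v j) (hv1 : ∑' j : ℕ, v (j + 1) = 1)
    (hmix : ∀ i, g i = ω * f i + (1 - ω) *
      ∑' j : ℕ, (f i * (if j + 1 ≤ i then (1 : ℝ) else 0) / (1 - F j)) * v (j + 1)) :
    ω = g 0 / f 0 ∧
    (ω < 1 → ∀ j : ℕ,
      v (j + 1) = (1 - F j) * (g (j + 1) / f (j + 1) - g j / f j) / (1 - ω)) := by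
  have hsf : Summable f := by
    by_contra h
    rw [tsum_eq_zero_of_not_summable h] at hf1
    norm_num at hf1
  have hFlt : ∀ j, F j < 1 := by
    intro j
    rw [hF j, ← hf1]
    calc ∑ i ∈ Finset.range (j + 1), f i
        < ∑ i ∈ Finset.range (j + 2), f i := by
          have := Finset.sum_range_succ f (j + 1)
          linarith [hf0 (j + 1)]
      _ ≤ ∑' i, f i := Summable.sum_le_tsum _ (fun i _ => (hf0 i).le) hsf
  have hFne : ∀ j, (1 : ℝ) - F j ≠ 0 := fun j => by linarith [hFlt j]
  have hT : ∀ i, (∑' j : ℕ, (f i * (if j + 1 ≤ i then (1 : ℝ) else 0) / (1 - F j)) * v (j + 1))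
      = ∑ j ∈ Finset.range i, f i * (v (j + 1) / (1 - F j)) := by
    intro i
    rw [tsum_eq_sum (s := Finset.range i)]
    · refine Finset.sum_congr rfl fun j hj => ?_
      rw [Finset.mem_range] at hj
      rw [if_pos (by omega)]
      ring
    · intro j hj
      rw [Finset.mem_range] at hj
      rw [if_neg (by omega)]
      simp
  set S : ℕ → ℝ := fun i => ∑ k ∈ Finset.range i, v (k + 1) / (1 - F k) with hS
  have hg : ∀ i, g i = f i * (ω + (1 - ω) * S i) := by
    intro i
    rw [hmix i, hT i, hS, ← Finset.mul_sum]
    ring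
  have hratio : ∀ i, g i / f i = ω + (1 - ω) * S i := by
    intro i
    rw [hg i, mul_comm, mul_div_assoc, div_self (hf0 i).ne', mul_one]
  constructor
  · have h0 : S 0 = 0 := by simp [hS]
    rw [hratio 0, h0]; ring
  · intro hω1 j
    have hωne : (1 : ℝ) - ω ≠ 0 := by linarith
    rw [hratio, hratio]
    have hstep : S (j + 1) = S j + v (j + 1) / (1 - F j) := by
      simp [hS, Finset.sum_range_succ]
    have key : (1 - F j) * ((ω + (1 - ω) * (S j + v (j + 1) / (1 - F j))) - (ω + (1 - ω) * S j)) / (1 - ω) = v (j + 1) := by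
      rw [div_eq_iff hωne]
      have h3 : v (j + 1) / (1 - F j) * (1 - F j) = v (j + 1) := div_mul_cancel₀ _ (hFne j)
      linear_combination (1 - ω) * h3
    rw [hstep, key]
end

section
/- Suppose there exist θ ∈ [0,1] and a probability density u on I (u measurable, u ≥ 0, ∫_a^b u(s) ds = 1) such that f(x) = θ·g(x) + (1−θ)·∫_a^b g^s(x)·u(s) ds for every x ∈ I. Then for all c, d ∈ I with c < d, r(c) − r(d) = (1−θ)·∫_c^d u(s)/G(s) ds; in particular, r is locally absolutely continuous on I (it agrees on every compact subinterval of I with a constant plus the indefinite Lebesgue integral of the locally integrable function −(1−θ)·u/G). -/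
open MeasureTheory

/-- Backward direction of the absolutely continuous mixture representation
(second part): if `f` is a mixture of `g` and its right-truncations over the
open interval `I`, then for all `c < d` in `I`,
`r(c) − r(d) = (1−θ)·∫_c^d u(s)/G(s) ds`; in particular `r = f/g` is locally
absolutely continuous on `I`: on every compact subinterval it agrees with a
constant plus the indefinite Lebesgue integral of the locally integrable
function `−(1−θ)·u/G`. -/
theorem ac_f_mixture_backward_locally_ac
    (I : Set ℝ) (hIopen : IsOpen I) (hIconn : I.OrdConnected) (hIne : I.Nonempty)
    (f g : ℝ → ℝ) (hfm : Measurable f) (hgm : Measurable g)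
    (hf0 : ∀ x ∈ I, 0 ≤ f x) (hf1 : ∫ x in I, f x = 1)
    (hg0 : ∀ x ∈ I, 0 < g x) (hg1 : ∫ x in I, g x = 1)
    (G : ℝ → ℝ) (hG : ∀ s, G s = ∫ t in I ∩ Set.Iic s, g t)
    (θ : ℝ) (hθ : θ ∈ Set.Icc (0 : ℝ) 1)
    (u : ℝ → ℝ) (hum : Measurable u)
    (hu0 : ∀ s ∈ I, 0 ≤ u s) (hu1 : ∫ s in I, u s = 1)
    (hmix : ∀ x ∈ I, f x = θ * g x + (1 - θ) *
      ∫ s in I, (g x * (if x ≤ s then (1 : ℝ) else 0) / G s) * u s) :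
    ∀ c ∈ I, ∀ d ∈ I, c < d →
      IntegrableOn (fun s => u s / G s) (Set.Ioc c d) ∧
      f c / g c - f d / g d = (1 - θ) * ∫ s in Set.Ioc c d, u s / G s := by
  have hg_int : IntegrableOn g I := integrable_of_integral_eq_one hg1
  have hu_int : IntegrableOn u I := integrable_of_integral_eq_one hu1
  -- G is monotone
  have hGmono : Monotone G := by
    intro s s' hss'
    rw [hG, hG]
    apply setIntegral_mono_set (hg_int.mono_set Set.inter_subset_left)
    · filter_upwards [self_mem_ae_restrict
        (hIopen.measurableSet.inter measurableSet_Iic)] with t ht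
      exact (hg0 t ht.1).le
    · exact Filter.Eventually.of_forall
        (Set.inter_subset_inter_right I (Set.Iic_subset_Iic.2 hss'))
  have hGmeas : Measurable G := hGmono.measurable
  -- G is positive on I
  have hGpos : ∀ x ∈ I, 0 < G x := by
    intro x hx
    obtain ⟨ε, hε, hball⟩ := Metric.isOpen_iff.1 hIopen x hx
    have hsub : Set.Ioc (x - ε) x ⊆ I ∩ Set.Iic x := by
      intro t ht
      refine ⟨hball ?_, ht.2⟩
      rw [Real.ball_eq_Ioo]
      exact ⟨ht.1, lt_of_le_of_lt ht.2 (by linarith)⟩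
    have hint : IntegrableOn g (Set.Ioc (x - ε) x) :=
      hg_int.mono_set (hsub.trans Set.inter_subset_left)
    have hpos : 0 < ∫ t in Set.Ioc (x - ε) x, g t := by
      rw [setIntegral_pos_iff_support_of_nonneg_ae]
      · have : Set.Ioc (x - ε) x ⊆ Function.support g ∩ Set.Ioc (x - ε) x := by
          intro t ht
          exact ⟨(hg0 t (hsub ht).1).ne', ht⟩
        refine lt_of_lt_of_le ?_ (measure_mono this)
        rw [Real.volume_Ioc]
        simp [hε]
      · filter_upwards [self_mem_ae_restrict measurableSet_Ioc] with t ht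
        exact (hg0 t (hsub ht).1).le
      · exact hint
    refine lt_of_lt_of_le hpos ?_
    rw [hG]
    apply setIntegral_mono_set (hg_int.mono_set Set.inter_subset_left)
    · filter_upwards [self_mem_ae_restrict
        (hIopen.measurableSet.inter measurableSet_Iic)] with t ht
      exact (hg0 t ht.1).le
    · exact Filter.Eventually.of_forall hsub
  -- integrability of the truncated integrand
  have hJint : ∀ x ∈ I,
      IntegrableOn (fun s => (if x ≤ s then (1 : ℝ) else 0) * u s / G s) I := by
    intro x hx
    have hmeas : Measurable fun s => (if x ≤ s then (1 : ℝ) else 0) * u s / G s := by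
      apply Measurable.div _ hGmeas
      exact (Measurable.ite measurableSet_Ici measurable_const measurable_const).mul hum
    refine Integrable.mono ((hu_int.norm).div_const (G x)) hmeas.aestronglyMeasurable ?_
    filter_upwards [self_mem_ae_restrict hIopen.measurableSet] with s hs
    by_cases h : x ≤ s
    · simp only [h, if_pos, one_mul]
      have hGs : 0 < G s := hGpos s hs
      have hGxs : G x ≤ G s := hGmono h
      simp only [Real.norm_eq_abs, abs_div, abs_abs, abs_of_pos hGs,
        abs_of_pos (hGpos x hx)]
      exact div_le_div_of_nonneg_left (abs_nonneg _) (hGpos x hx) hGxs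
    · simp only [h, if_neg, not_false_iff, zero_mul, zero_div, norm_zero]
      positivity
  -- the ratio formula
  have hr : ∀ x ∈ I, f x / g x =
      θ + (1 - θ) * ∫ s in I, (if x ≤ s then (1 : ℝ) else 0) * u s / G s := by
    intro x hx
    have hgx : g x ≠ 0 := (hg0 x hx).ne'
    have hre : (∫ s in I, (g x * (if x ≤ s then (1 : ℝ) else 0) / G s) * u s)
        = g x * ∫ s in I, (if x ≤ s then (1 : ℝ) else 0) * u s / G s := by
      rw [← integral_const_mul]
      congr 1
      funext s
      ring
    rw [hmix x hx, hre]
    field_simp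
  intro c hc d hd hcd
  have hIcc : Set.Icc c d ⊆ I := hIconn.out hc hd
  have hIoc : Set.Ioc c d ⊆ I := Set.Ioc_subset_Icc_self.trans hIcc
  have hIco : Set.Ico c d ⊆ I := Set.Ico_subset_Icc_self.trans hIcc
  have hGc : 0 < G c := hGpos c hc
  -- integrability of u/G on Ioc c d
  have hint : IntegrableOn (fun s => u s / G s) (Set.Ioc c d) := by
    refine Integrable.mono (((hu_int.mono_set hIoc).norm).div_const (G c))
      (hum.div hGmeas).aestronglyMeasurable ?_
    filter_upwards [self_mem_ae_restrict measurableSet_Ioc] with s hs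
    have hGs : 0 < G s := hGpos s (hIoc hs)
    simp only [Real.norm_eq_abs, abs_div, abs_abs, abs_of_pos hGs, abs_of_pos hGc]
    exact div_le_div_of_nonneg_left (abs_nonneg _) hGc (hGmono hs.1.le)
  refine ⟨hint, ?_⟩
  rw [hr c hc, hr d hd]
  have key : (∫ s in I, (if c ≤ s then (1 : ℝ) else 0) * u s / G s)
      - (∫ s in I, (if d ≤ s then (1 : ℝ) else 0) * u s / G s)
      = ∫ s in Set.Ioc c d, u s / G s := by
    rw [← integral_sub (hJint c hc) (hJint d hd)]
    have heq : (fun s => (if c ≤ s then (1 : ℝ) else 0) * u s / G s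
        - (if d ≤ s then (1 : ℝ) else 0) * u s / G s)
        = (Set.Ico c d).indicator (fun s => u s / G s) := by
      funext s
      rw [Set.indicator_apply]
      by_cases h1 : c ≤ s
      · by_cases h2 : d ≤ s
        · simp [h1, h2, Set.mem_Ico, not_lt.2 h2]
        · simp [h1, h2, Set.mem_Ico, lt_of_not_ge h2]
      · have h2 : ¬ d ≤ s := fun h => h1 (hcd.le.trans h)
        simp [h1, h2, Set.mem_Ico]
    rw [heq, setIntegral_indicator measurableSet_Ico,
      Set.inter_eq_self_of_subset_right hIco,
      integral_Ico_eq_integral_Ioo, ← integral_Ioc_eq_integral_Ioo]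
  rw [← key]
  ring
end

section
/- Suppose the ratio r = f/g is non-increasing on I, i.e., f(x)·g(y) ≥ f(y)·g(x) whenever x ≤ y in I. Then F(x)·g(x) ≥ G(x)·f(x) for every x ∈ I, i.e., the distribution function ratio dominates the density ratio: F(x)/G(x) ≥ f(x)/g(x) for all x ∈ I. -/
open MeasureTheory

/-- If the density ratio `f/g` is non-increasing on the open interval `I`,
then the distribution function ratio dominates the density ratio:
`F(x)·g(x) ≥ G(x)·f(x)`, i.e. `F(x)/G(x) ≥ f(x)/g(x)`, for every `x ∈ I`. -/
theorem df_ratio_dominates_density_ratio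
    (I : Set ℝ) (hIopen : IsOpen I) (hIconn : I.OrdConnected) (hIne : I.Nonempty)
    (f g : ℝ → ℝ) (hfm : Measurable f) (hgm : Measurable g)
    (hf0 : ∀ x ∈ I, 0 ≤ f x) (hf1 : ∫ x in I, f x = 1)
    (hg0 : ∀ x ∈ I, 0 < g x) (hg1 : ∫ x in I, g x = 1)
    (F : ℝ → ℝ) (hF : ∀ x, F x = ∫ t in I ∩ Set.Iic x, f t)
    (G : ℝ → ℝ) (hG : ∀ x, G x = ∫ t in I ∩ Set.Iic x, g t)
    (hr : ∀ x ∈ I, ∀ y ∈ I, x ≤ y → f y * g x ≤ f x * g y) :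
    ∀ x ∈ I, G x * f x ≤ F x * g x ∧ f x / g x ≤ F x / G x := by
  have hfi : IntegrableOn f I := by
    by_contra h
    rw [integral_undef h] at hf1
    norm_num at hf1
  have hgi : IntegrableOn g I := by
    by_contra h
    rw [integral_undef h] at hg1
    norm_num at hg1
  intro x hx
  have hSm : MeasurableSet (I ∩ Set.Iic x) := hIopen.measurableSet.inter measurableSet_Iic
  have hfiS : IntegrableOn f (I ∩ Set.Iic x) := hfi.mono_set Set.inter_subset_left
  have hgiS : IntegrableOn g (I ∩ Set.Iic x) := hgi.mono_set Set.inter_subset_left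
  -- main inequality
  have key : G x * f x ≤ F x * g x := by
    have h1 : ∫ t in I ∩ Set.Iic x, g t * f x ≤ ∫ t in I ∩ Set.Iic x, f t * g x := by
      apply setIntegral_mono_on (hgiS.mul_const _) (hfiS.mul_const _) hSm
      intro t ht
      have := hr t ht.1 x hx ht.2
      linarith
    rw [MeasureTheory.integral_mul_const, MeasureTheory.integral_mul_const] at h1
    rw [hF, hG]
    exact h1
  refine ⟨key, ?_⟩
  -- positivity of G x
  obtain ⟨ε, hε, hball⟩ := Metric.isOpen_iff.1 hIopen x hx
  have hIoo : Set.Ioo (x - ε) x ⊆ I ∩ Set.Iic x := by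
    intro t ht
    refine ⟨hball ?_, le_of_lt ht.2⟩
    rw [Real.ball_eq_Ioo]
    exact ⟨ht.1, ht.2.trans (by linarith)⟩
  have hGpos : 0 < G x := by
    rw [hG]
    have h2 : 0 < ∫ t in Set.Ioo (x - ε) x, g t := by
      apply (setIntegral_pos_iff_support_of_nonneg_ae ?_ (hgiS.mono_set hIoo)).2
      · have : Set.Ioo (x - ε) x ⊆ Function.support g ∩ Set.Ioo (x - ε) x := by
          intro t ht
          exact ⟨fun h0 => (hg0 t (hIoo ht).1).ne' h0, ht⟩
        calc (0 : ENNReal) < volume (Set.Ioo (x - ε) x) := by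
              simp [Real.volume_Ioo]; linarith
          _ ≤ volume (Function.support g ∩ Set.Ioo (x - ε) x) := measure_mono this
      · filter_upwards [ae_restrict_mem measurableSet_Ioo] with t ht
        exact (hg0 t (hIoo ht).1).le
    refine lt_of_lt_of_le h2 ?_
    apply setIntegral_mono_set hgiS ?_ (HasSubset.Subset.eventuallyLE hIoo)
    filter_upwards [ae_restrict_mem hSm] with t ht
    exact (hg0 t ht.1).le
  rw [div_le_div_iff₀ (hg0 x hx) hGpos]
  linarith
end

section
/- Suppose the ratio r = f/g is non-increasing on I and locally absolutely continuous, in the following sense: there exists a measurable function φ : I → ℝ with φ ≤ 0 almost everywhere, integrable over every compact subinterval of I, such that r(d) − r(c) = ∫_c^d φ(s) ds for all c, d ∈ I with c < d. Let θ = lim_{x ↑ b} r(x) (this limit exists since r is non-increasing and bounded below by 0), and suppose θ < 1. Then θ ∈ [0,1), the function u(s) = G(s)·(−φ(s))/(1−θ) is a probability density on I (u ≥ 0 a.e. and ∫_a^b u(s) ds = 1), and f(x) = θ·g(x) + (1−θ)·∫_a^b g^s(x)·u(s) ds for every x ∈ I. -/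
open MeasureTheory
open scoped ENNReal


lemma my_cofinal (I : Set ℝ) (hIopen : IsOpen I) (hIconn : I.OrdConnected)
    {x : ℝ} (hx : x ∈ I) :
    ∃ u : ℕ → ℝ, Monotone u ∧ (∀ n, u n ∈ I ∧ x < u n) ∧ ∀ y ∈ I, ∃ n, y ≤ u n := by
  -- get d0 ∈ I with x < d0
  obtain ⟨ε, hε, hball⟩ := Metric.isOpen_iff.1 hIopen x hx
  have hd0 : x + ε/2 ∈ I := hball (by simp [Real.dist_eq, abs_of_pos, hε, half_pos hε])
  set d0 := x + ε/2 with hd0def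
  have hxd0 : x < d0 := by simp [hd0def]; linarith
  by_cases hb : BddAbove I
  · set b := sSup I with hbdef
    have hbnotmem : b ∉ I := by
      intro hbI
      obtain ⟨δ, hδ, hball'⟩ := Metric.isOpen_iff.1 hIopen b hbI
      have : b + δ/2 ∈ I := hball' (by simp [Real.dist_eq, abs_of_pos, hδ, half_pos hδ])
      have := le_csSup hb this
      linarith
    have hd0b : d0 < b := lt_of_le_of_ne (le_csSup hb hd0) (fun h => hbnotmem (h ▸ hd0))
    refine ⟨fun n => b - (b - d0)/(n+1), ?_, ?_, ?_⟩
    · intro m n hmn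
      have h1 : (0:ℝ) < m + 1 := by positivity
      have h2 : (0:ℝ) < n + 1 := by positivity
      have : (b - d0)/(n+1) ≤ (b - d0)/(m+1) := by
        apply div_le_div_of_nonneg_left (by linarith) h1
        have := (Nat.cast_le (α := ℝ)).2 hmn; linarith
      linarith
    · intro n
      have h2 : (0:ℝ) < n + 1 := by positivity
      have hle : d0 ≤ b - (b - d0)/(n+1) := by
        rw [le_sub_iff_add_le]
        have : (b - d0)/(n+1) ≤ (b - d0)/1 := by
          apply div_le_div_of_nonneg_left (by linarith) one_pos
          linarith
        simp at this; linarith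
      have hlt : b - (b - d0)/(n+1) < b := by
        have : 0 < (b - d0)/(n+1) := div_pos (by linarith) h2
        linarith
      obtain ⟨z, hzI, hz⟩ := exists_lt_of_lt_csSup ⟨x, hx⟩ hlt
      exact ⟨hIconn.out hd0 hzI ⟨hle, le_of_lt hz⟩, lt_of_lt_of_le hxd0 hle⟩
    · intro y hy
      have hyb : y < b := lt_of_le_of_ne (le_csSup hb hy) (fun h => hbnotmem (h ▸ hy))
      obtain ⟨n, hn⟩ := exists_nat_ge ((b - d0)/(b - y))
      refine ⟨n, ?_⟩
      have h2 : (0:ℝ) < n + 1 := by positivity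
      have : (b - d0)/(n+1) ≤ b - y := by
        rw [div_le_iff₀ h2]
        have h3 : (b - d0)/(b - y) ≤ n + 1 := by linarith
        have hby : (0:ℝ) < b - y := by linarith
        calc b - d0 = (b - d0)/(b - y) * (b - y) := by field_simp
          _ ≤ (n+1) * (b - y) := mul_le_mul_of_nonneg_right h3 (by linarith)
          _ = (b - y) * (n+1) := mul_comm _ _
      linarith
  · refine ⟨fun n => d0 + n, ?_, ?_, ?_⟩
    · intro m n hmn
      simp only [add_le_add_iff_left, Nat.cast_le]
      exact hmn
    · intro n
      obtain ⟨z, hzI, hz⟩ := not_bddAbove_iff.1 hb (d0 + n)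
      refine ⟨hIconn.out hd0 hzI ⟨by simp, le_of_lt hz⟩, ?_⟩
      have : (0:ℝ) ≤ n := Nat.cast_nonneg n
      show x < d0 + (n:ℝ)
      linarith
    · intro y hy
      obtain ⟨n, hn⟩ := exists_nat_ge (y - d0)
      refine ⟨n, ?_⟩
      show y ≤ d0 + (n:ℝ)
      linarith

lemma my_tail (I : Set ℝ) (hIopen : IsOpen I) (hIconn : I.OrdConnected)
    (f g : ℝ → ℝ)
    (hf0 : ∀ x ∈ I, 0 ≤ f x) (hg0 : ∀ x ∈ I, 0 < g x)
    (hr : ∀ x ∈ I, ∀ y ∈ I, x ≤ y → f y / g y ≤ f x / g x)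
    (φ : ℝ → ℝ) (hφm : Measurable φ)
    (hφ0 : ∀ᵐ s ∂(volume.restrict I), φ s ≤ 0)
    (hφint : ∀ c ∈ I, ∀ d ∈ I, c < d → IntegrableOn φ (Set.Ioc c d))
    (hφftc : ∀ c ∈ I, ∀ d ∈ I, c < d →
      f d / g d - f c / g c = ∫ s in Set.Ioc c d, φ s)
    (θ : ℝ) (hθ : θ = sInf ((fun x => f x / g x) '' I))
    {x : ℝ} (hx : x ∈ I) :
    IntegrableOn (fun s => -φ s) (I ∩ Set.Ioi x) ∧
    ∫ s in I ∩ Set.Ioi x, (-φ s) = f x / g x - θ := by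
  have hIm : MeasurableSet I := hIopen.measurableSet
  have hbdd : BddBelow ((fun x => f x / g x) '' I) := by
    refine ⟨0, ?_⟩
    rintro _ ⟨y, hy, rfl⟩
    exact div_nonneg (hf0 y hy) (hg0 y hy).le
  have hθle : ∀ y ∈ I, θ ≤ f y / g y := fun y hy =>
    hθ ▸ csInf_le hbdd (Set.mem_image_of_mem _ hy)
  obtain ⟨u, humono, humem, hucof⟩ := my_cofinal I hIopen hIconn hx
  have hIocsub : ∀ n, Set.Ioc x (u n) ⊆ I := fun n =>
    Set.Ioc_subset_Icc_self.trans (hIconn.out hx (humem n).1)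
  have hUnion : I ∩ Set.Ioi x = ⋃ n, Set.Ioc x (u n) := by
    ext y
    simp only [Set.mem_inter_iff, Set.mem_Ioi, Set.mem_iUnion, Set.mem_Ioc]
    constructor
    · rintro ⟨hyI, hxy⟩
      obtain ⟨n, hn⟩ := hucof y hyI
      exact ⟨n, hxy, hn⟩
    · rintro ⟨n, h1, h2⟩
      exact ⟨hIocsub n ⟨h1, h2⟩, h1⟩
  set F : ℝ → ℝ≥0∞ := fun s => ENNReal.ofReal (-φ s) with hFdef
  have hFm : Measurable F := hφm.neg.ennreal_ofReal
  set μ : Measure ℝ := volume.withDensity F with hμdef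
  have hμeq : ∀ n, μ (Set.Ioc x (u n)) = ENNReal.ofReal (f x / g x - f (u n) / g (u n)) := by
    intro n
    have hint : IntegrableOn φ (Set.Ioc x (u n)) := hφint x hx (u n) (humem n).1 (humem n).2
    have hae : ∀ᵐ s ∂(volume.restrict (Set.Ioc x (u n))), 0 ≤ -φ s := by
      filter_upwards [ae_restrict_of_ae_restrict_of_subset (hIocsub n) hφ0] with s hs
      linarith
    have h1 : ENNReal.ofReal (∫ s in Set.Ioc x (u n), -φ s)
        = ∫⁻ s in Set.Ioc x (u n), F s :=
      ofReal_integral_eq_lintegral_ofReal hint.neg hae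
    have h2 : ∫ s in Set.Ioc x (u n), -φ s = f x / g x - f (u n) / g (u n) := by
      rw [integral_neg, ← hφftc x hx (u n) (humem n).1 (humem n).2]
      ring
    rw [hμdef, withDensity_apply _ measurableSet_Ioc, ← h1, h2]
  have hanti : Antitone (fun n => f (u n) / g (u n)) := fun m n hmn =>
    hr (u m) (humem m).1 (u n) (humem n).1 (humono hmn)
  have hbdd2 : BddBelow (Set.range fun n => f (u n) / g (u n)) := by
    refine ⟨θ, ?_⟩
    rintro _ ⟨n, rfl⟩
    exact hθle _ (humem n).1
  have hiInf : ⨅ n, f (u n) / g (u n) = θ := by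
    refine le_antisymm ?_ (le_ciInf fun n => hθle _ (humem n).1)
    rw [hθ]
    refine le_csInf ⟨_, Set.mem_image_of_mem _ hx⟩ ?_
    rintro _ ⟨y, hy, rfl⟩
    obtain ⟨n, hn⟩ := hucof y hy
    exact (ciInf_le hbdd2 n).trans (hr y hy (u n) (humem n).1 hn)
  have htendr : Filter.Tendsto (fun n => f (u n) / g (u n)) Filter.atTop (nhds θ) := by
    rw [← hiInf]
    exact tendsto_atTop_ciInf hanti hbdd2
  have htend1 : Filter.Tendsto (fun n => μ (Set.Ioc x (u n))) Filter.atTop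
      (nhds (ENNReal.ofReal (f x / g x - θ))) := by
    simp only [hμeq]
    exact (ENNReal.continuous_ofReal.tendsto _).comp (tendsto_const_nhds.sub htendr)
  have hmonos : Monotone (fun n => Set.Ioc x (u n)) := fun m n hmn =>
    Set.Ioc_subset_Ioc_right (humono hmn)
  have htend2 : Filter.Tendsto (fun n => μ (Set.Ioc x (u n))) Filter.atTop
      (nhds (μ (I ∩ Set.Ioi x))) := by
    rw [hUnion]
    exact tendsto_measure_iUnion_atTop hmonos
  have hμtail : μ (I ∩ Set.Ioi x) = ENNReal.ofReal (f x / g x - θ) :=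
    tendsto_nhds_unique htend2 htend1
  have hLtail : ∫⁻ s in I ∩ Set.Ioi x, F s = ENNReal.ofReal (f x / g x - θ) := by
    rw [← withDensity_apply _ (hIm.inter measurableSet_Ioi)]
    exact hμtail
  have haetail : ∀ᵐ s ∂(volume.restrict (I ∩ Set.Ioi x)), 0 ≤ -φ s := by
    filter_upwards [ae_restrict_of_ae_restrict_of_subset Set.inter_subset_left hφ0] with s hs
    linarith
  have hintegrable : IntegrableOn (fun s => -φ s) (I ∩ Set.Ioi x) := by
    refine ⟨hφm.neg.aestronglyMeasurable, ?_⟩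
    rw [hasFiniteIntegral_iff_ofReal haetail]
    rw [hLtail]
    exact ENNReal.ofReal_lt_top
  refine ⟨hintegrable, ?_⟩
  rw [integral_eq_lintegral_of_nonneg_ae haetail hφm.neg.aestronglyMeasurable]
  rw [hLtail, ENNReal.toReal_ofReal (by linarith [hθle x hx])]


lemma my_Gpos (I : Set ℝ) (hIopen : IsOpen I) (hIconn : I.OrdConnected)
    (g : ℝ → ℝ) (hg0 : ∀ x ∈ I, 0 < g x) (hgint : IntegrableOn g I)
    (G : ℝ → ℝ) (hG : ∀ s, G s = ∫ t in I ∩ Set.Iic s, g t)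
    {s : ℝ} (hs : s ∈ I) : 0 < G s := by
  obtain ⟨ε, hε, hball⟩ := Metric.isOpen_iff.1 hIopen s hs
  have hc : s - ε/2 ∈ I := hball (by rw [Metric.mem_ball, Real.dist_eq, show s - ε/2 - s = -(ε/2) by ring, abs_neg, abs_of_pos (half_pos hε)]; linarith)
  set c := s - ε/2 with hcdef
  have hcs : c < s := by simp [hcdef]; linarith
  have hsub : Set.Ioc c s ⊆ I ∩ Set.Iic s := fun y hy =>
    ⟨hIconn.out hc hs ⟨hy.1.le, hy.2⟩, hy.2⟩
  have hsubI : I ∩ Set.Iic s ⊆ I := Set.inter_subset_left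
  have hint2 : IntegrableOn g (I ∩ Set.Iic s) := hgint.mono_set hsubI
  have hnn : 0 ≤ᵐ[volume.restrict (I ∩ Set.Iic s)] g := by
    refine (ae_restrict_iff' ((hIopen.measurableSet).inter measurableSet_Iic)).2 ?_
    exact Filter.Eventually.of_forall fun y hy => (hg0 y hy.1).le
  have hnn2 : 0 ≤ᵐ[volume.restrict (Set.Ioc c s)] g := by
    refine (ae_restrict_iff' measurableSet_Ioc).2 ?_
    exact Filter.Eventually.of_forall fun y hy => (hg0 y (hsub hy).1).le
  have hpos : 0 < ∫ t in Set.Ioc c s, g t := by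
    rw [setIntegral_pos_iff_support_of_nonneg_ae hnn2 (hint2.mono_set hsub)]
    have : Set.Ioc c s ⊆ Function.support g ∩ Set.Ioc c s := fun y hy =>
      ⟨(hg0 y ((hsub hy).1)).ne', hy⟩
    calc (0:ℝ≥0∞) < volume (Set.Ioc c s) := by
          rw [Real.volume_Ioc]; simp [ENNReal.ofReal_pos]; linarith
      _ ≤ volume (Function.support g ∩ Set.Ioc c s) := measure_mono this
  have hmono := setIntegral_mono_set hint2 hnn (HasSubset.Subset.eventuallyLE hsub)
  rw [hG]
  exact lt_of_lt_of_le hpos hmono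

lemma my_Gmono (I : Set ℝ) (hIopen : IsOpen I)
    (g : ℝ → ℝ) (hg0 : ∀ x ∈ I, 0 < g x) (hgint : IntegrableOn g I)
    (G : ℝ → ℝ) (hG : ∀ s, G s = ∫ t in I ∩ Set.Iic s, g t) :
    Monotone G := by
  intro s s' hss'
  rw [hG, hG]
  have hnn : 0 ≤ᵐ[volume.restrict (I ∩ Set.Iic s')] g := by
    refine (ae_restrict_iff' ((hIopen.measurableSet).inter measurableSet_Iic)).2 ?_
    exact Filter.Eventually.of_forall fun y hy => (hg0 y hy.1).le
  exact setIntegral_mono_set (hgint.mono_set Set.inter_subset_left) hnn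
    (HasSubset.Subset.eventuallyLE (Set.inter_subset_inter_right _ (Set.Iic_subset_Iic.2 hss')))

/-- Forward direction of the absolutely continuous mixture representation:
suppose the ratio `r = f/g` is non-increasing on the open interval `I` and
locally absolutely continuous, witnessed by an a.e. non-positive measurable
function `φ`, locally integrable on `I`, with `r(d) − r(c) = ∫_c^d φ(s) ds`
for all `c < d` in `I`.  Let `θ = lim_{x↑b} r(x)`; since `r` is non-increasing
and bounded below by `0`, this limit exists and equals the infimum
`sInf (r '' I)`, which is how it is encoded here.  If `θ < 1`, then
`θ ∈ [0,1)`, the function `u(s) = G(s)·(−φ(s))/(1−θ)` is a probability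
density on `I`, and `f` has the corresponding mixture representation. -/
theorem ac_f_mixture_forward
    (I : Set ℝ) (hIopen : IsOpen I) (hIconn : I.OrdConnected) (hIne : I.Nonempty)
    (f g : ℝ → ℝ) (hfm : Measurable f) (hgm : Measurable g)
    (hf0 : ∀ x ∈ I, 0 ≤ f x) (hf1 : ∫ x in I, f x = 1)
    (hg0 : ∀ x ∈ I, 0 < g x) (hg1 : ∫ x in I, g x = 1)
    (G : ℝ → ℝ) (hG : ∀ s, G s = ∫ t in I ∩ Set.Iic s, g t)
    (hr : ∀ x ∈ I, ∀ y ∈ I, x ≤ y → f y / g y ≤ f x / g x)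
    (φ : ℝ → ℝ) (hφm : Measurable φ)
    (hφ0 : ∀ᵐ s ∂(volume.restrict I), φ s ≤ 0)
    (hφint : ∀ c ∈ I, ∀ d ∈ I, c < d → IntegrableOn φ (Set.Ioc c d))
    (hφftc : ∀ c ∈ I, ∀ d ∈ I, c < d →
      f d / g d - f c / g c = ∫ s in Set.Ioc c d, φ s)
    (θ : ℝ) (hθ : θ = sInf ((fun x => f x / g x) '' I))
    (hθ1 : θ < 1) :
    θ ∈ Set.Ico (0 : ℝ) 1 ∧
    (∀ᵐ s ∂(volume.restrict I), 0 ≤ G s * (-φ s) / (1 - θ)) ∧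
    (∫ s in I, G s * (-φ s) / (1 - θ) = 1) ∧
    (∀ x ∈ I, f x = θ * g x + (1 - θ) *
      ∫ s in I, (g x * (if x ≤ s then (1 : ℝ) else 0) / G s) *
        (G s * (-φ s) / (1 - θ))) := by
  have hIm : MeasurableSet I := hIopen.measurableSet
  -- integrability of g and f on I
  have hgint : IntegrableOn g I := by
    by_contra h
    rw [integral_undef h] at hg1
    exact one_ne_zero hg1.symm
  have hfint : IntegrableOn f I := by
    by_contra h
    rw [integral_undef h] at hf1
    exact one_ne_zero hf1.symm
  have hθ0 : 0 ≤ θ := by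
    rw [hθ]
    refine le_csInf (hIne.image _) ?_
    rintro _ ⟨y, hy, rfl⟩
    exact div_nonneg (hf0 y hy) (hg0 y hy).le
  have hbdd : BddBelow ((fun x => f x / g x) '' I) := by
    refine ⟨0, ?_⟩
    rintro _ ⟨y, hy, rfl⟩
    exact div_nonneg (hf0 y hy) (hg0 y hy).le
  have hθle : ∀ y ∈ I, θ ≤ f y / g y := fun y hy =>
    hθ ▸ csInf_le hbdd (Set.mem_image_of_mem _ hy)
  have h1θ : (0:ℝ) < 1 - θ := by linarith
  have tail := fun {x} (hx : x ∈ I) => my_tail I hIopen hIconn f g hf0 hg0 hr φ hφm hφ0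
    hφint hφftc θ hθ hx
  have hGpos : ∀ s ∈ I, 0 < G s := fun s hs =>
    my_Gpos I hIopen hIconn g hg0 hgint G hG hs
  have hGmono : Monotone G := my_Gmono I hIopen g hg0 hgint G hG
  have hGm : Measurable G := hGmono.measurable
  have hG0 : ∀ s, 0 ≤ G s := fun s => by
    rw [hG]
    exact setIntegral_nonneg (hIm.inter measurableSet_Iic) fun y hy => (hg0 y hy.1).le
  -- the lintegral computation
  have hL : ∫⁻ s in I, ENNReal.ofReal (G s) * ENNReal.ofReal (-φ s)
      = ENNReal.ofReal (1 - θ) := by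
    -- kernel
    set k : ℝ × ℝ → ℝ≥0∞ := fun p =>
      Set.indicator {q : ℝ × ℝ | q.2 ∈ I ∧ q.2 ≤ q.1}
        (fun q => ENNReal.ofReal (g q.2) * ENNReal.ofReal (-φ q.1)) p with hkdef
    have hkm : Measurable k := by
      apply Measurable.indicator
      · exact ((hgm.comp measurable_snd).ennreal_ofReal).mul
          ((hφm.neg.comp measurable_fst).ennreal_ofReal)
      · exact (measurable_snd (hIm)).inter (measurableSet_le measurable_snd measurable_fst)
    have step1 : ∀ s, ENNReal.ofReal (G s) * ENNReal.ofReal (-φ s)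
        = ∫⁻ t, k (s, t) := by
      intro s
      have hnn : 0 ≤ᵐ[volume.restrict (I ∩ Set.Iic s)] g :=
        (ae_restrict_iff' (hIm.inter measurableSet_Iic)).2
          (Filter.Eventually.of_forall fun y hy => (hg0 y hy.1).le)
      have hGof : ENNReal.ofReal (G s) = ∫⁻ t in I ∩ Set.Iic s, ENNReal.ofReal (g t) := by
        rw [hG]
        exact ofReal_integral_eq_lintegral_ofReal (hgint.mono_set Set.inter_subset_left) hnn
      have hpt : (fun t => Set.indicator (I ∩ Set.Iic s)
          (fun t => ENNReal.ofReal (g t) * ENNReal.ofReal (-φ s)) t)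
          = fun t => k (s, t) := by
        funext t
        rw [hkdef]
        simp only [Set.indicator_apply, Set.mem_inter_iff, Set.mem_Iic, Set.mem_setOf_eq]
        by_cases h : t ∈ I ∧ t ≤ s <;> simp [h]
      rw [hGof, ← lintegral_mul_const _ (hgm.ennreal_ofReal),
        ← lintegral_indicator (hIm.inter measurableSet_Iic), hpt]
    have step2 : ∀ t, (∫⁻ s in I, k (s, t))
        = Set.indicator I (fun t => ENNReal.ofReal (g t)
            * ENNReal.ofReal (f t / g t - θ)) t := by
      intro t
      by_cases ht : t ∈ I
      · have hk2 : ∀ s, k (s, t) = Set.indicator (Set.Ici t)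
            (fun s => ENNReal.ofReal (g t) * ENNReal.ofReal (-φ s)) s := by
          intro s
          rw [hkdef]
          simp only [Set.indicator_apply, Set.mem_Ici, Set.mem_setOf_eq]
          by_cases hts : t ≤ s
          · simp [hts, ht]
          · simp [hts]
        simp only [hk2]
        rw [lintegral_indicator measurableSet_Ici, Measure.restrict_restrict measurableSet_Ici,
          lintegral_const_mul _ (f := fun s => ENNReal.ofReal (-φ s)) hφm.neg.ennreal_ofReal]
        have hsetae : (Set.Ici t ∩ I : Set ℝ) =ᵐ[volume] (I ∩ Set.Ioi t : Set ℝ) := by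
          have h1 : (Set.Ici t : Set ℝ) =ᵐ[volume] (Set.Ioi t : Set ℝ) :=
            (Ioi_ae_eq_Ici (μ := volume) (a := t)).symm
          rw [Set.inter_comm I]
          exact ae_eq_set_inter h1 (Filter.EventuallyEq.refl _ _)
        rw [Measure.restrict_congr_set hsetae]
        have htail := tail ht
        have hnnt : 0 ≤ᵐ[volume.restrict (I ∩ Set.Ioi t)] fun s => -φ s := by
          filter_upwards [ae_restrict_of_ae_restrict_of_subset Set.inter_subset_left hφ0]
            with s hs
          simpa using neg_nonneg.2 hs
        rw [← ofReal_integral_eq_lintegral_ofReal htail.1 hnnt, htail.2,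
          Set.indicator_of_mem ht]
      · have hk0 : (fun s => k (s, t)) = fun _ => (0:ℝ≥0∞) := by
          funext s
          rw [hkdef]
          exact Set.indicator_of_notMem (fun h => ht h.1) _
        rw [Set.indicator_of_notMem ht]
        calc (∫⁻ s in I, k (s, t)) = ∫⁻ _ in I, (0:ℝ≥0∞) := by rw [hk0]
          _ = 0 := lintegral_zero
    calc ∫⁻ s in I, ENNReal.ofReal (G s) * ENNReal.ofReal (-φ s)
        = ∫⁻ s in I, ∫⁻ t, k (s, t) := by
          exact lintegral_congr fun s => step1 s
      _ = ∫⁻ t, ∫⁻ s in I, k (s, t) := by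
          exact lintegral_lintegral_swap hkm.aemeasurable
      _ = ∫⁻ t, Set.indicator I (fun t => ENNReal.ofReal (g t)
            * ENNReal.ofReal (f t / g t - θ)) t := lintegral_congr step2
      _ = ∫⁻ t in I, ENNReal.ofReal (g t) * ENNReal.ofReal (f t / g t - θ) :=
          lintegral_indicator hIm _
      _ = ∫⁻ t in I, ENNReal.ofReal (f t - θ * g t) := by
          refine lintegral_congr_ae ?_
          filter_upwards [ae_restrict_mem hIm] with t ht
          rw [← ENNReal.ofReal_mul (hg0 t ht).le]
          congr 1
          rw [mul_sub, mul_comm (g t) (f t / g t), div_mul_cancel₀ _ (hg0 t ht).ne']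
          ring
      _ = ENNReal.ofReal (∫ t in I, (f t - θ * g t)) := by
          refine (ofReal_integral_eq_lintegral_ofReal ?_ ?_).symm
          · exact hfint.sub (hgint.const_mul θ)
          · refine (ae_restrict_iff' hIm).2 (Filter.Eventually.of_forall fun t ht => ?_)
            have h1 := hθle t ht
            have h2 := (hg0 t ht)
            have : θ * g t ≤ f t / g t * g t := by
              apply mul_le_mul_of_nonneg_right h1 h2.le
            rw [div_mul_cancel₀ _ h2.ne'] at this
            show (0:ℝ) ≤ f t - θ * g t
            linarith
      _ = ENNReal.ofReal (1 - θ) := by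
          rw [integral_sub hfint (hgint.const_mul θ), integral_const_mul, hf1, hg1]
          ring_nf
  -- properties of w s = G s * (-φ s)
  have hwm : Measurable (fun s => G s * (-φ s)) := hGm.mul hφm.neg
  have hwnn : 0 ≤ᵐ[volume.restrict I] fun s => G s * (-φ s) := by
    filter_upwards [hφ0] with s hs
    simpa using mul_nonneg (hG0 s) (neg_nonneg.2 hs)
  have hofw : ∀ s, ENNReal.ofReal (G s * (-φ s))
      = ENNReal.ofReal (G s) * ENNReal.ofReal (-φ s) := fun s =>
    ENNReal.ofReal_mul (hG0 s)
  have hLw : ∫⁻ s in I, ENNReal.ofReal (G s * (-φ s)) = ENNReal.ofReal (1 - θ) := by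
    rw [lintegral_congr fun s => hofw s]
    exact hL
  have hwint : IntegrableOn (fun s => G s * (-φ s)) I := by
    refine ⟨hwm.aestronglyMeasurable, ?_⟩
    rw [hasFiniteIntegral_iff_ofReal hwnn, hLw]
    exact ENNReal.ofReal_lt_top
  have hwval : ∫ s in I, G s * (-φ s) = 1 - θ := by
    rw [integral_eq_lintegral_of_nonneg_ae hwnn hwm.aestronglyMeasurable, hLw,
      ENNReal.toReal_ofReal h1θ.le]
  refine ⟨⟨hθ0, hθ1⟩, ?_, ?_, ?_⟩
  · filter_upwards [hφ0] with s hs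
    exact div_nonneg (mul_nonneg (hG0 s) (by linarith)) h1θ.le
  · rw [integral_div, hwval, div_self h1θ.ne']
  · intro x hx
    have hgx := hg0 x hx
    have htail := tail hx
    have hintegrand : ∀ s ∈ I,
        (g x * (if x ≤ s then (1:ℝ) else 0) / G s) * (G s * (-φ s) / (1 - θ))
        = Set.indicator (Set.Ici x) (fun s => g x / (1 - θ) * (-φ s)) s := by
      intro s hs
      by_cases hxs : x ≤ s
      · rw [if_pos hxs, Set.indicator_of_mem (Set.mem_Ici.2 hxs)]
        have hGs := (hGpos s hs).ne'
        field_simp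
      · rw [if_neg hxs, Set.indicator_of_notMem (fun h => hxs (Set.mem_Ici.1 h))]
        simp
    have heq1 : ∫ s in I, (g x * (if x ≤ s then (1:ℝ) else 0) / G s)
          * (G s * (-φ s) / (1 - θ))
        = ∫ s in I, Set.indicator (Set.Ici x) (fun s => g x / (1 - θ) * (-φ s)) s := by
      refine setIntegral_congr_fun hIm fun s hs => hintegrand s hs
    rw [heq1]
    have heq2 : ∫ s in I, Set.indicator (Set.Ici x) (fun s => g x / (1 - θ) * (-φ s)) s
        = ∫ s in I ∩ Set.Ici x, g x / (1 - θ) * (-φ s) := by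
      rw [← integral_indicator (hIm.inter measurableSet_Ici)]
      rw [← integral_indicator hIm]
      congr 1
      funext s
      by_cases hsI : s ∈ I <;> by_cases hsx : x ≤ s <;>
        simp [Set.indicator_apply, Set.mem_inter_iff, Set.mem_Ici, hsI, hsx]
    rw [heq2]
    have hsetae : (I ∩ Set.Ici x : Set ℝ) =ᵐ[volume] (I ∩ Set.Ioi x : Set ℝ) :=
      ae_eq_set_inter (Filter.EventuallyEq.refl _ _)
        ((Ioi_ae_eq_Ici (μ := volume) (a := x)).symm)
    rw [setIntegral_congr_set hsetae]
    rw [integral_const_mul, htail.2]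
    field_simp
    ring
end

section
/- Suppose θ ∈ [0,1) and u is a probability density on I (u measurable, u ≥ 0, ∫_a^b u(s) ds = 1) such that f(x) = θ·g(x) + (1−θ)·∫_a^b g^s(x)·u(s) ds for every x ∈ I. Let U(x) = ∫_a^x u(s) ds be the distribution function of u. Then U is uniquely determined: U(x) = G(x)·{F(x)/G(x) − f(x)/g(x)}/(1−θ) for every x ∈ I. Equivalently, F(x) = θ·G(x) + (1−θ)·{U(x) + G(x)·∫_x^b u(s)/G(s) ds} for every x ∈ I. -/
open MeasureTheory
open scoped ENNReal

/-- Uniqueness of the mixing distribution in the absolutely continuous mixture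
representation: if `θ ∈ [0,1)` and the density `u` realizes the mixture
representation of `f`, then the distribution function `U(x) = ∫_a^x u(s) ds`
is uniquely determined, with `U(x) = G(x)·{F(x)/G(x) − f(x)/g(x)}/(1−θ)`;
equivalently `F(x) = θ·G(x) + (1−θ)·{U(x) + G(x)·∫_x^b u(s)/G(s) ds}`. -/
theorem ac_f_mixture_uniqueness
    (I : Set ℝ) (hIopen : IsOpen I) (hIconn : I.OrdConnected) (hIne : I.Nonempty)
    (f g : ℝ → ℝ) (hfm : Measurable f) (hgm : Measurable g)
    (hf0 : ∀ x ∈ I, 0 ≤ f x) (hf1 : ∫ x in I, f x = 1)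
    (hg0 : ∀ x ∈ I, 0 < g x) (hg1 : ∫ x in I, g x = 1)
    (F : ℝ → ℝ) (hF : ∀ x, F x = ∫ t in I ∩ Set.Iic x, f t)
    (G : ℝ → ℝ) (hG : ∀ s, G s = ∫ t in I ∩ Set.Iic s, g t)
    (θ : ℝ) (hθ : θ ∈ Set.Ico (0 : ℝ) 1)
    (u : ℝ → ℝ) (hum : Measurable u)
    (hu0 : ∀ s ∈ I, 0 ≤ u s) (hu1 : ∫ s in I, u s = 1)
    (hmix : ∀ x ∈ I, f x = θ * g x + (1 - θ) *
      ∫ s in I, (g x * (if x ≤ s then (1 : ℝ) else 0) / G s) * u s)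
    (U : ℝ → ℝ) (hU : ∀ x, U x = ∫ s in I ∩ Set.Iic x, u s) :
    ∀ x ∈ I,
      U x = G x * (F x / G x - f x / g x) / (1 - θ) ∧
      F x = θ * G x + (1 - θ) * (U x + G x * ∫ s in I ∩ Set.Ici x, u s / G s) := by
  obtain ⟨hθ0, hθ1⟩ := hθ
  have hθ1' : (0:ℝ) < 1 - θ := by linarith
  have hImeas : MeasurableSet I := hIopen.measurableSet
  -- integrability of f, g, u on I
  have hfi : IntegrableOn f I := by
    by_contra h; rw [integral_undef h] at hf1; norm_num at hf1
  have hgi : IntegrableOn g I := by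
    by_contra h; rw [integral_undef h] at hg1; norm_num at hg1
  have hui : IntegrableOn u I := by
    by_contra h; rw [integral_undef h] at hu1; norm_num at hu1
  -- a.e. nonnegativity
  have hf0' : 0 ≤ᵐ[volume.restrict I] f :=
    (ae_restrict_iff' hImeas).2 (Filter.Eventually.of_forall hf0)
  have hg0' : 0 ≤ᵐ[volume.restrict I] g :=
    (ae_restrict_iff' hImeas).2 (Filter.Eventually.of_forall fun x hx => (hg0 x hx).le)
  have hu0' : 0 ≤ᵐ[volume.restrict I] u :=
    (ae_restrict_iff' hImeas).2 (Filter.Eventually.of_forall hu0)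
  -- positivity of G on I
  have hGpos : ∀ x ∈ I, 0 < G x := by
    intro x hx
    obtain ⟨ε, hε, hball⟩ := Metric.isOpen_iff.mp hIopen x hx
    have hsub : Set.Ioo (x - ε) x ⊆ I ∩ Set.Iic x := by
      intro t ht
      refine ⟨hball ?_, ht.2.le⟩
      rw [Real.ball_eq_Ioo]; exact ⟨ht.1, ht.2.trans (by linarith)⟩
    have hint : IntegrableOn g (I ∩ Set.Iic x) := hgi.mono_set Set.inter_subset_left
    have hnn : 0 ≤ᵐ[volume.restrict (I ∩ Set.Iic x)] g :=
      ae_restrict_of_ae_restrict_of_subset Set.inter_subset_left hg0'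
    have h0 : (0:ℝ) < ∫ t in Set.Ioo (x-ε) x, g t := by
      rw [setIntegral_pos_iff_support_of_nonneg_ae
        (ae_restrict_of_ae_restrict_of_subset hsub hnn) (hint.mono_set hsub)]
      have hss : Set.Ioo (x-ε) x ⊆ Function.support g ∩ Set.Ioo (x-ε) x :=
        fun t ht => ⟨(hg0 t (hsub ht).1).ne', ht⟩
      calc (0:ℝ≥0∞) < volume (Set.Ioo (x-ε) x) := by
            rw [Real.volume_Ioo]; simp only [ENNReal.ofReal_pos]; linarith
        _ ≤ _ := measure_mono hss
    rw [hG]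
    exact h0.trans_le (setIntegral_mono_set hint hnn (HasSubset.Subset.eventuallyLE hsub))
  -- measurability of G
  have hGmono : Monotone G := by
    intro s s' hss'
    rw [hG, hG]
    exact setIntegral_mono_set (hgi.mono_set Set.inter_subset_left)
      (ae_restrict_of_ae_restrict_of_subset Set.inter_subset_left hg0')
      (HasSubset.Subset.eventuallyLE (Set.inter_subset_inter_right I (Set.Iic_subset_Iic.2 hss')))
  have hGm : Measurable G := hGmono.measurable
  -- ENNReal versions
  set γe : ℝ → ℝ≥0∞ := fun t => ENNReal.ofReal (g t) with hγe
  set μe : ℝ → ℝ≥0∞ := fun s => ENNReal.ofReal (u s) with hμe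
  set Γe : ℝ → ℝ≥0∞ := fun s => ENNReal.ofReal (G s) with hΓe
  have hγem : Measurable γe := hgm.ennreal_ofReal
  have hμem : Measurable μe := hum.ennreal_ofReal
  have hΓem : Measurable Γe := hGm.ennreal_ofReal
  have hratiom : Measurable fun s => μe s / Γe s := hμem.div hΓem
  have hΓne : ∀ s ∈ I, Γe s ≠ 0 := fun s hs => by
    simp only [hΓe, ne_eq, ENNReal.ofReal_eq_zero, not_le]; exact hGpos s hs
  have hΓfin : ∀ s, Γe s ≠ ∞ := fun s => ENNReal.ofReal_ne_top
  -- lintegral versions of the normalizations and of G, U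
  have flint : ∫⁻ t in I, ENNReal.ofReal (f t) = 1 := by
    rw [← ofReal_integral_eq_lintegral_ofReal hfi hf0', hf1, ENNReal.ofReal_one]
  have ulint : ∫⁻ s in I, μe s = 1 := by
    rw [hμe, ← ofReal_integral_eq_lintegral_ofReal hui hu0', hu1, ENNReal.ofReal_one]
  have Glint : ∀ y, ∫⁻ t in I ∩ Set.Iic y, γe t = ENNReal.ofReal (G y) := by
    intro y
    rw [hγe, ← ofReal_integral_eq_lintegral_ofReal (hgi.mono_set Set.inter_subset_left)
      (ae_restrict_of_ae_restrict_of_subset Set.inter_subset_left hg0'), hG]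
  have glint : ∫⁻ t in I, γe t = 1 := by
    rw [hγe, ← ofReal_integral_eq_lintegral_ofReal hgi hg0', hg1, ENNReal.ofReal_one]
  have Ulint : ∀ y, ∫⁻ s in I ∩ Set.Iic y, μe s = ENNReal.ofReal (U y) := by
    intro y
    rw [hμe, ← ofReal_integral_eq_lintegral_ofReal (hui.mono_set Set.inter_subset_left)
      (ae_restrict_of_ae_restrict_of_subset Set.inter_subset_left hu0'), hU]
  -- the kernel
  set K : ℝ → ℝ → ℝ≥0∞ := fun t s => if t ≤ s then γe t * (μe s / Γe s) else 0 with hK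
  have hKmeas : Measurable (Function.uncurry K) := by
    apply Measurable.ite
    · exact measurableSet_le measurable_fst measurable_snd
    · exact ((hγem.comp measurable_fst).mul (hratiom.comp measurable_snd))
    · exact measurable_const
  -- the Tonelli swap, parametrized
  have swapT : ∀ T : Set ℝ, MeasurableSet T →
      (∫⁻ t in I ∩ T, ∫⁻ s in I, K t s) =
        ∫⁻ s in I, (∫⁻ t in (I ∩ T) ∩ Set.Iic s, γe t) * (μe s / Γe s) := by
    intro T hT
    rw [lintegral_lintegral_swap hKmeas.aemeasurable]
    refine lintegral_congr fun s => ?_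
    have hrew : ∀ t, K t s = (Set.Iic s).indicator (fun t => γe t * (μe s / Γe s)) t := by
      intro t
      rw [Set.indicator_apply]
      simp only [hK, Set.mem_Iic]
    calc (∫⁻ t in I ∩ T, K t s)
        = ∫⁻ t in I ∩ T, (Set.Iic s).indicator (fun t => γe t * (μe s / Γe s)) t :=
          lintegral_congr hrew
      _ = ∫⁻ t in Set.Iic s, γe t * (μe s / Γe s) ∂(volume.restrict (I ∩ T)) :=
          lintegral_indicator measurableSet_Iic _
      _ = ∫⁻ t in (I ∩ T) ∩ Set.Iic s, γe t * (μe s / Γe s) := by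
          rw [Measure.restrict_restrict measurableSet_Iic, Set.inter_comm]
      _ = (∫⁻ t in (I ∩ T) ∩ Set.Iic s, γe t) * (μe s / Γe s) :=
          lintegral_mul_const _ hγem
  -- total mass of the kernel is 1
  have mass : (∫⁻ t in I, ∫⁻ s in I, K t s) = 1 := by
    have h := swapT Set.univ MeasurableSet.univ
    rw [Set.inter_univ] at h
    rw [h, ← ulint]
    refine setLIntegral_congr_fun hImeas (fun s hs => ?_)
    rw [Glint s]
    show Γe s * (μe s / Γe s) = μe s
    rw [mul_comm]
    exact ENNReal.div_mul_cancel (hΓne s hs) (hΓfin s)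
  -- the inner Bochner integral B
  set B : ℝ → ℝ := fun t => ∫ s in I, (g t * (if t ≤ s then (1:ℝ) else 0) / G s) * u s with hB
  have hmix' : ∀ t ∈ I, f t = θ * g t + (1 - θ) * B t := hmix
  have hBnn : ∀ t ∈ I, 0 ≤ B t := by
    intro t ht
    refine setIntegral_nonneg hImeas fun s hs => ?_
    have := (hg0 t ht).le
    have := hu0 s hs
    have := (hGpos s hs).le
    positivity
  have hBsm : StronglyMeasurable B := by
    apply MeasureTheory.StronglyMeasurable.integral_prod_right
    apply Measurable.stronglyMeasurable
    apply Measurable.mul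
    · apply Measurable.div
      · apply Measurable.mul (hgm.comp measurable_fst)
        exact Measurable.ite (measurableSet_le measurable_fst measurable_snd)
          measurable_const measurable_const
      · exact hGm.comp measurable_snd
    · exact hum.comp measurable_snd
  -- pointwise conversion of the inner integral integrand
  have hconv : ∀ t ∈ I, ∀ s ∈ I,
      ENNReal.ofReal ((g t * (if t ≤ s then (1:ℝ) else 0) / G s) * u s) = K t s := by
    intro t ht s hs
    simp only [hK]
    by_cases hts : t ≤ s
    · simp only [hts, if_true, mul_one]
      rw [div_mul_eq_mul_div, ENNReal.ofReal_div_of_pos (hGpos s hs),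
        ENNReal.ofReal_mul (hg0 t ht |>.le) ]
      rw [hγe, hμe, hΓe, mul_div_assoc]
    · simp [hts]
  -- pointwise inequality ofReal (B t) ≤ ∫⁻ K t
  have hBle : ∀ t ∈ I, ENNReal.ofReal (B t) ≤ ∫⁻ s in I, K t s := by
    intro t ht
    have hcongr : (∫⁻ s in I, ENNReal.ofReal ((g t * (if t ≤ s then (1:ℝ) else 0) / G s) * u s))
        = ∫⁻ s in I, K t s :=
      setLIntegral_congr_fun hImeas (fun s hs => hconv t ht s hs)
    rcases eq_or_ne (∫⁻ s in I, K t s) ∞ with htop | hfin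
    · rw [htop]; exact le_top
    · have hnn : 0 ≤ᵐ[volume.restrict I]
          fun s => (g t * (if t ≤ s then (1:ℝ) else 0) / G s) * u s := by
        refine (ae_restrict_iff' hImeas).2 (Filter.Eventually.of_forall fun s hs => ?_)
        have := (hg0 t ht).le
        have := hu0 s hs
        have := (hGpos s hs).le
        positivity
      have hmeas : AEStronglyMeasurable
          (fun s => (g t * (if t ≤ s then (1:ℝ) else 0) / G s) * u s) (volume.restrict I) := by
        apply Measurable.aestronglyMeasurable
        apply Measurable.mul _ hum
        apply Measurable.div _ hGm
        exact measurable_const.mul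
          (Measurable.ite measurableSet_Ici measurable_const measurable_const)
      have hIble : Integrable (fun s => (g t * (if t ≤ s then (1:ℝ) else 0) / G s) * u s)
          (volume.restrict I) := by
        refine ⟨hmeas, ?_⟩
        rw [hasFiniteIntegral_iff_ofReal hnn, hcongr]
        exact hfin.lt_top
      rw [hB]
      rw [ofReal_integral_eq_lintegral_ofReal hIble hnn, hcongr]
  -- total mass of B is 1
  have hBmass : (∫⁻ t in I, ENNReal.ofReal (B t)) = 1 := by
    have hsplit : (∫⁻ t in I, ENNReal.ofReal (f t)) =
        ENNReal.ofReal θ * 1 + ENNReal.ofReal (1-θ) * ∫⁻ t in I, ENNReal.ofReal (B t) := by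
      have h1 : (∫⁻ t in I, ENNReal.ofReal (f t)) =
          ∫⁻ t in I, (ENNReal.ofReal θ * γe t + ENNReal.ofReal (1-θ) * ENNReal.ofReal (B t)) := by
        refine setLIntegral_congr_fun hImeas (fun t ht => ?_)
        rw [hmix' t ht, ENNReal.ofReal_add (mul_nonneg hθ0 (hg0 t ht).le)
          (mul_nonneg hθ1'.le (hBnn t ht)), ENNReal.ofReal_mul hθ0, ENNReal.ofReal_mul hθ1'.le]
      rw [h1, lintegral_add_left (hγem.const_mul _), lintegral_const_mul _ hγem,
        lintegral_const_mul _ (hBsm.measurable.ennreal_ofReal), glint]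
    have h1 : ENNReal.ofReal θ * 1 + ENNReal.ofReal (1-θ) * (∫⁻ t in I, ENNReal.ofReal (B t))
        = ENNReal.ofReal θ * 1 + ENNReal.ofReal (1-θ) * 1 := by
      rw [← hsplit, flint, mul_one, mul_one, ← ENNReal.ofReal_add hθ0 hθ1'.le]
      norm_num
    have h2 := (ENNReal.add_right_inj (by finiteness)).mp h1
    exact (ENNReal.mul_right_inj
      (by simp only [ne_eq, ENNReal.ofReal_eq_zero, not_le]; exact hθ1') ENNReal.ofReal_ne_top).mp h2
  -- measurability of the inner kernel integral
  have hKinnm : Measurable fun t => ∫⁻ s in I, K t s := Measurable.lintegral_prod_right hKmeas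
  -- a.e. identification of B with the kernel integral
  have hBae : (fun t => ENNReal.ofReal (B t)) =ᵐ[volume.restrict I] fun t => ∫⁻ s in I, K t s := by
    refine ae_eq_of_ae_le_of_lintegral_le ?_ ?_ hKinnm.aemeasurable ?_
    · exact (ae_restrict_iff' hImeas).2 (Filter.Eventually.of_forall hBle)
    · rw [hBmass]; exact ENNReal.one_ne_top
    · rw [hBmass, mass]
  -- inner kernel integral formula
  have innerK : ∀ t, (∫⁻ s in I, K t s) = γe t * ∫⁻ s in I ∩ Set.Ici t, μe s / Γe s := by
    intro t
    have hrew : ∀ s, K t s = (Set.Ici t).indicator (fun s => γe t * (μe s / Γe s)) s := by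
      intro s; rw [Set.indicator_apply]; simp only [hK, Set.mem_Ici]
    calc (∫⁻ s in I, K t s)
        = ∫⁻ s in I, (Set.Ici t).indicator (fun s => γe t * (μe s / Γe s)) s :=
          lintegral_congr hrew
      _ = ∫⁻ s in Set.Ici t, γe t * (μe s / Γe s) ∂(volume.restrict I) :=
          lintegral_indicator measurableSet_Ici _
      _ = ∫⁻ s in I ∩ Set.Ici t, γe t * (μe s / Γe s) := by
          rw [Measure.restrict_restrict measurableSet_Ici, Set.inter_comm]
      _ = γe t * ∫⁻ s in I ∩ Set.Ici t, μe s / Γe s := lintegral_const_mul _ hratiom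
  -- finiteness of the tail integrals
  have Jfin : ∀ x ∈ I, (∫⁻ s in I ∩ Set.Ici x, μe s / Γe s) ≠ ∞ := by
    intro x hx
    obtain ⟨ε, hε, hball⟩ := Metric.isOpen_iff.mp hIopen x hx
    have hAsub : Set.Ioo (x - ε) x ⊆ I := fun t ht =>
      hball (by rw [Real.ball_eq_Ioo]; exact ⟨ht.1, ht.2.trans (by linarith)⟩)
    have hae0 : ∀ᵐ t ∂volume, t ∈ I → ENNReal.ofReal (B t) = ∫⁻ s in I, K t s :=
      (ae_restrict_iff' hImeas).1 hBae
    have hae' : ∀ᵐ t ∂(volume.restrict (Set.Ioo (x-ε) x)),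
        t ∈ I → ENNReal.ofReal (B t) = ∫⁻ s in I, K t s := ae_restrict_of_ae hae0
    have hA0 : volume.restrict (Set.Ioo (x-ε) x) ≠ 0 := by
      simp only [ne_eq, Measure.restrict_eq_zero, Real.volume_Ioo, ENNReal.ofReal_eq_zero, not_le]
      linarith
    haveI : (ae (volume.restrict (Set.Ioo (x-ε) x))).NeBot := ae_neBot.2 hA0
    obtain ⟨t, htA, htP⟩ := ((ae_restrict_mem measurableSet_Ioo).and hae').exists
    have htI : t ∈ I := hAsub htA
    have hfin : (∫⁻ s in I, K t s) ≠ ∞ := by rw [← htP htI]; exact ENNReal.ofReal_ne_top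
    rw [innerK t] at hfin
    have hγne : γe t ≠ 0 := by
      simp only [hγe, ne_eq, ENNReal.ofReal_eq_zero, not_le]; exact hg0 t htI
    have htail : (∫⁻ s in I ∩ Set.Ici t, μe s / Γe s) ≠ ∞ := by
      intro hcon; rw [hcon, ENNReal.mul_top hγne] at hfin; exact hfin rfl
    have hmono : (∫⁻ s in I ∩ Set.Ici x, μe s / Γe s) ≤ ∫⁻ s in I ∩ Set.Ici t, μe s / Γe s :=
      lintegral_mono_set (Set.inter_subset_inter_right I (Set.Ici_subset_Ici.2 htA.2.le))
    exact (lt_of_le_of_lt hmono (lt_top_iff_ne_top.2 htail)).ne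
  -- the tail function u/G is integrable on I ∩ Ici x
  have tailNN : ∀ x : ℝ, 0 ≤ᵐ[volume.restrict (I ∩ Set.Ici x)] fun s => u s / G s := fun x =>
    (ae_restrict_iff' (hImeas.inter measurableSet_Ici)).2 (Filter.Eventually.of_forall
      fun s hs => div_nonneg (hu0 s hs.1) (hGpos s hs.1).le)
  have tailConv : ∀ x : ℝ, ∀ᵐ s ∂(volume.restrict (I ∩ Set.Ici x)),
      ENNReal.ofReal (u s / G s) = μe s / Γe s := fun x =>
    (ae_restrict_iff' (hImeas.inter measurableSet_Ici)).2 (Filter.Eventually.of_forall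
      fun s hs => ENNReal.ofReal_div_of_pos (hGpos s hs.1))
  have tailInt : ∀ x ∈ I, IntegrableOn (fun s => u s / G s) (I ∩ Set.Ici x) := by
    intro x hx
    refine ⟨(hum.div hGm).aestronglyMeasurable, ?_⟩
    rw [hasFiniteIntegral_iff_ofReal (tailNN x), lintegral_congr_ae (tailConv x)]
    exact (Jfin x hx).lt_top
  have tailVal : ∀ x ∈ I, ENNReal.ofReal (∫ s in I ∩ Set.Ici x, u s / G s)
      = ∫⁻ s in I ∩ Set.Ici x, μe s / Γe s := by
    intro x hx
    rw [ofReal_integral_eq_lintegral_ofReal (tailInt x hx) (tailNN x)]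
    exact lintegral_congr_ae (tailConv x)
  have tailNN' : ∀ x : ℝ, 0 ≤ ∫ s in I ∩ Set.Ici x, u s / G s := fun x =>
    setIntegral_nonneg (hImeas.inter measurableSet_Ici)
      fun s hs => div_nonneg (hu0 s hs.1) (hGpos s hs.1).le
  have hIciIoi : ∀ x : ℝ, volume.restrict (I ∩ Set.Ici x) = volume.restrict (I ∩ Set.Ioi x) :=
    fun x => Measure.restrict_congr_set
      (ae_eq_set_inter (ae_eq_refl I) (Ioi_ae_eq_Ici (μ := volume) (a := x)).symm)
  -- main computation
  intro x hx
  have hGx := hGpos x hx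
  have hgx := hg0 x hx
  have hUnn : 0 ≤ U x := by
    rw [hU]
    exact setIntegral_nonneg (hImeas.inter measurableSet_Iic) fun s hs => hu0 s hs.1
  set E : ℝ := ∫ s in I ∩ Set.Ici x, u s / G s with hE
  have hEnn : 0 ≤ E := tailNN' x
  have key : (∫⁻ t in I ∩ Set.Iic x, ENNReal.ofReal (B t)) = ENNReal.ofReal (U x + G x * E) := by
    have step1 : (∫⁻ t in I ∩ Set.Iic x, ENNReal.ofReal (B t))
        = ∫⁻ t in I ∩ Set.Iic x, ∫⁻ s in I, K t s :=
      lintegral_congr_ae (ae_restrict_of_ae_restrict_of_subset Set.inter_subset_left hBae)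
    rw [step1, swapT (Set.Iic x) measurableSet_Iic]
    have hstep2 : ∀ s : ℝ, (∫⁻ t in I ∩ Set.Iic x ∩ Set.Iic s, γe t) * (μe s / Γe s)
        = ENNReal.ofReal (G (min x s)) * (μe s / Γe s) := by
      intro s
      rw [Set.inter_assoc, Set.Iic_inter_Iic, Glint]
    rw [lintegral_congr hstep2]
    have hsplit := lintegral_add_compl
      (fun s => ENNReal.ofReal (G (min x s)) * (μe s / Γe s))
      (measurableSet_Iic (a := x)) (μ := volume.restrict I)
    rw [← hsplit, Measure.restrict_restrict measurableSet_Iic,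
      Measure.restrict_restrict (measurableSet_Iic (a := x)).compl, Set.compl_Iic,
      Set.inter_comm (Set.Iic x) I, Set.inter_comm (Set.Ioi x) I]
    have part1 : (∫⁻ s in I ∩ Set.Iic x, ENNReal.ofReal (G (min x s)) * (μe s / Γe s))
        = ENNReal.ofReal (U x) := by
      rw [← Ulint x]
      refine setLIntegral_congr_fun (hImeas.inter measurableSet_Iic)
        (fun s hs => ?_)
      rw [min_eq_right hs.2]
      show Γe s * (μe s / Γe s) = μe s
      rw [mul_comm]
      exact ENNReal.div_mul_cancel (hΓne s hs.1) (hΓfin s)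
    have part2 : (∫⁻ s in I ∩ Set.Ioi x, ENNReal.ofReal (G (min x s)) * (μe s / Γe s))
        = ENNReal.ofReal (G x) * ENNReal.ofReal E := by
      have h1 : (∫⁻ s in I ∩ Set.Ioi x, ENNReal.ofReal (G (min x s)) * (μe s / Γe s))
          = ∫⁻ s in I ∩ Set.Ioi x, ENNReal.ofReal (G x) * (μe s / Γe s) := by
        refine setLIntegral_congr_fun (hImeas.inter measurableSet_Ioi)
          (fun s hs => ?_)
        rw [min_eq_left hs.2.le]
      rw [h1, lintegral_const_mul _ hratiom, ← hIciIoi x, hE, tailVal x hx]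
    rw [part1, part2, ← ENNReal.ofReal_mul hGx.le, ← ENNReal.ofReal_add hUnn
      (mul_nonneg hGx.le hEnn)]
  have hBnnx : 0 ≤ᵐ[volume.restrict (I ∩ Set.Iic x)] B :=
    (ae_restrict_iff' (hImeas.inter measurableSet_Iic)).2
      (Filter.Eventually.of_forall fun t ht => hBnn t ht.1)
  have hBintOn : IntegrableOn B (I ∩ Set.Iic x) := by
    refine ⟨hBsm.aestronglyMeasurable, ?_⟩
    rw [hasFiniteIntegral_iff_ofReal hBnnx, key]
    exact ENNReal.ofReal_lt_top
  have hBval : (∫ t in I ∩ Set.Iic x, B t) = U x + G x * E := by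
    rw [integral_eq_lintegral_of_nonneg_ae hBnnx hBsm.aestronglyMeasurable, key,
      ENNReal.toReal_ofReal (by nlinarith)]
  have hFval : F x = θ * G x + (1 - θ) * (U x + G x * E) := by
    rw [hF]
    rw [setIntegral_congr_fun (hImeas.inter measurableSet_Iic)
      (fun t ht => hmix' t ht.1)]
    rw [integral_add ((hgi.mono_set Set.inter_subset_left).const_mul θ)
      (hBintOn.const_mul (1-θ)), integral_const_mul, integral_const_mul, ← hG, hBval]
  have hBx : B x = g x * E := by
    have hcongr : (∫ s in I, (g x * (if x ≤ s then (1:ℝ) else 0) / G s) * u s)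
        = ∫ s in I, (Set.Ici x).indicator (fun s => g x * (u s / G s)) s := by
      refine setIntegral_congr_fun hImeas fun s _ => ?_
      rw [Set.indicator_apply]
      by_cases hxs : x ≤ s
      · simp only [Set.mem_Ici, hxs, if_true]; ring
      · simp only [Set.mem_Ici, hxs, if_false]; ring
    show (∫ s in I, (g x * (if x ≤ s then (1:ℝ) else 0) / G s) * u s) = g x * E
    rw [hcongr, setIntegral_indicator measurableSet_Ici, hE, integral_const_mul]
  have hfx : f x = θ * g x + (1 - θ) * (g x * E) := by
    rw [hmix' x hx, hBx]
  have h1 : G x ≠ 0 := hGx.ne'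
  have h2 : g x ≠ 0 := hgx.ne'
  have h3 : (1:ℝ) - θ ≠ 0 := hθ1'.ne'
  refine ⟨?_, hFval⟩
  rw [hFval, hfx]
  field_simp
  ring
end

section
/- Suppose there exist ω ∈ [0,1] and a probability density v on I (v measurable, v ≥ 0, ∫_a^b v(t) dt = 1) such that g(x) = ω·f(x) + (1−ω)·∫_a^b f_t(x)·v(t) dt for every x ∈ I. Then g(x)/f(x) = ω + (1−ω)·∫_a^x v(t)/(1 − F(t)) dt for every x ∈ I, and consequently the ratio g/f is non-decreasing on I. -/
open MeasureTheory

/-- Backward direction of the absolutely continuous mixture representation of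
`g`: if `g` is a mixture of `f` and its left-truncations over the open
interval `I`, then the ratio `g/f` satisfies
`g(x)/f(x) = ω + (1−ω)·∫_a^x v(t)/(1 − F(t)) dt` on `I`, and hence is
non-decreasing on `I`. -/
theorem ac_g_mixture_backward
    (I : Set ℝ) (hIopen : IsOpen I) (hIconn : I.OrdConnected) (hIne : I.Nonempty)
    (f g : ℝ → ℝ) (hfm : Measurable f) (hgm : Measurable g)
    (hf0 : ∀ x ∈ I, 0 < f x) (hf1 : ∫ x in I, f x = 1)
    (hg0 : ∀ x ∈ I, 0 ≤ g x) (hg1 : ∫ x in I, g x = 1)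
    (F : ℝ → ℝ) (hF : ∀ x, F x = ∫ s in I ∩ Set.Iic x, f s)
    (ω : ℝ) (hω : ω ∈ Set.Icc (0 : ℝ) 1)
    (v : ℝ → ℝ) (hvm : Measurable v)
    (hv0 : ∀ t ∈ I, 0 ≤ v t) (hv1 : ∫ t in I, v t = 1)
    (hmix : ∀ x ∈ I, g x = ω * f x + (1 - ω) *
      ∫ t in I, (f x * (if t ≤ x then (1 : ℝ) else 0) / (1 - F t)) * v t) :
    (∀ x ∈ I, g x / f x = ω + (1 - ω) * ∫ t in I ∩ Set.Iic x, v t / (1 - F t)) ∧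
    (∀ x ∈ I, ∀ y ∈ I, x ≤ y → g x / f x ≤ g y / f y) := by
  have hImeas : MeasurableSet I := hIopen.measurableSet
  have hfint : IntegrableOn f I := by
    by_contra h; rw [integral_undef h] at hf1; norm_num at hf1
  have hvint : IntegrableOn v I := by
    by_contra h; rw [integral_undef h] at hv1; norm_num at hv1
  have hfae : 0 ≤ᵐ[volume.restrict I] f :=
    (ae_restrict_iff' hImeas).2 (Filter.Eventually.of_forall fun x hx => (hf0 x hx).le)
  have hfae' : ∀ (s : Set ℝ), 0 ≤ᵐ[volume.restrict (I ∩ s)] f := fun s =>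
    hfae.filter_mono (ae_mono (Measure.restrict_mono Set.inter_subset_left le_rfl))
  have Fmono : Monotone F := by
    intro x1 x2 h12
    rw [hF, hF]
    exact setIntegral_mono_set (hfint.mono_set Set.inter_subset_left) (hfae' _)
      ((Set.inter_subset_inter_right I (Set.Iic_subset_Iic.2 h12)).eventuallyLE)
  have hFle : ∀ t, F t ≤ 1 := by
    intro t
    rw [hF, ← hf1]
    exact setIntegral_mono_set hfint hfae (Set.inter_subset_left.eventuallyLE)
  have hFlt : ∀ x ∈ I, F x < 1 := by
    intro x hx
    obtain ⟨ε, hε, hball⟩ := Metric.isOpen_iff.1 hIopen x hx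
    have hJI : Set.Ioo x (x + ε) ⊆ I := by
      intro y hy
      apply hball
      rw [Real.ball_eq_Ioo]
      exact ⟨by linarith [hy.1], hy.2⟩
    have hsplit : (1 : ℝ) = (∫ s in I ∩ Set.Iic x, f s) + ∫ s in I ∩ Set.Ioi x, f s := by
      rw [← hf1, ← setIntegral_union]
      · rw [← Set.inter_union_distrib_left, Set.Iic_union_Ioi, Set.inter_univ]
      · exact Set.disjoint_of_subset (Set.inter_subset_right) (Set.inter_subset_right)
          (Set.Iic_disjoint_Ioi le_rfl)
      · exact (hImeas.inter measurableSet_Ioi)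
      · exact hfint.mono_set Set.inter_subset_left
      · exact hfint.mono_set Set.inter_subset_left
    have hpos : 0 < ∫ s in I ∩ Set.Ioi x, f s := by
      have hJsub : Set.Ioo x (x + ε) ⊆ I ∩ Set.Ioi x := fun y hy => ⟨hJI hy, hy.1⟩
      have h1 : (0:ℝ) < ∫ s in Set.Ioo x (x + ε), f s := by
        rw [setIntegral_pos_iff_support_of_nonneg_ae
          ((ae_restrict_iff' measurableSet_Ioo).2
            (Filter.Eventually.of_forall fun y hy => (hf0 y (hJI hy)).le))
          (hfint.mono_set (hJsub.trans Set.inter_subset_left))]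
        have hsub2 : Set.Ioo x (x + ε) ⊆ Function.support f ∩ Set.Ioo x (x + ε) := by
          intro y hy; exact ⟨(hf0 y (hJI hy)).ne', hy⟩
        have hm : 0 < volume (Set.Ioo x (x + ε)) := by
          rw [Real.volume_Ioo]
          simp only [ENNReal.ofReal_pos]
          linarith
        exact lt_of_lt_of_le hm (measure_mono hsub2)
      calc (0:ℝ) < ∫ s in Set.Ioo x (x + ε), f s := h1
        _ ≤ _ := setIntegral_mono_set (hfint.mono_set Set.inter_subset_left)
            (hfae' _) hJsub.eventuallyLE
    rw [hF]
    linarith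
  set h : ℝ → ℝ := fun t => v t / (1 - F t) with hh
  have hhmeas : Measurable h := hvm.div (measurable_const.sub Fmono.measurable)
  have hhnn : ∀ x : ℝ, 0 ≤ᵐ[volume.restrict (I ∩ Set.Iic x)] h := by
    intro x
    refine (ae_restrict_iff' (hImeas.inter measurableSet_Iic)).2
      (Filter.Eventually.of_forall fun t ht => ?_)
    exact div_nonneg (hv0 t ht.1) (by linarith [hFle t])
  have hhint : ∀ x ∈ I, IntegrableOn h (I ∩ Set.Iic x) := by
    intro x hx
    have hd : IntegrableOn (fun t => v t * (1 - F x)⁻¹) (I ∩ Set.Iic x) :=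
      (hvint.mono_set Set.inter_subset_left).mul_const _
    refine Integrable.mono hd hhmeas.aestronglyMeasurable ?_
    refine (ae_restrict_iff' (hImeas.inter measurableSet_Iic)).2
      (Filter.Eventually.of_forall fun t ht => ?_)
    have h1 : 0 < 1 - F x := by linarith [hFlt x hx]
    have h2 : 1 - F x ≤ 1 - F t := by linarith [Fmono ht.2]
    have h3 : 0 ≤ v t := hv0 t ht.1
    rw [Real.norm_eq_abs, Real.norm_eq_abs, abs_of_nonneg (div_nonneg h3 (by linarith)),
      abs_of_nonneg (by positivity), ← div_eq_mul_inv]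
    gcongr
  have key : ∀ x ∈ I,
      (∫ t in I, (f x * (if t ≤ x then (1 : ℝ) else 0) / (1 - F t)) * v t)
        = f x * ∫ t in I ∩ Set.Iic x, h t := by
    intro x hx
    have heq : ∀ t, (f x * (if t ≤ x then (1 : ℝ) else 0) / (1 - F t)) * v t
        = f x * (Set.Iic x).indicator h t := by
      intro t
      by_cases ht : t ≤ x
      · simp [ht, Set.indicator_of_mem, Set.mem_Iic, hh]
        ring
      · simp [ht, Set.indicator_of_notMem, Set.mem_Iic]
    simp_rw [heq]
    rw [integral_const_mul, setIntegral_indicator measurableSet_Iic]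
  have part1 : ∀ x ∈ I, g x / f x = ω + (1 - ω) * ∫ t in I ∩ Set.Iic x, v t / (1 - F t) := by
    intro x hx
    rw [hmix x hx, key x hx, div_eq_iff (hf0 x hx).ne']
    ring
  refine ⟨part1, fun x hx y hy hxy => ?_⟩
  rw [part1 x hx, part1 y hy]
  have hA : (∫ t in I ∩ Set.Iic x, h t) ≤ ∫ t in I ∩ Set.Iic y, h t :=
    setIntegral_mono_set (hhint y hy) (hhnn y)
      ((Set.inter_subset_inter_right I (Set.Iic_subset_Iic.2 hxy)).eventuallyLE)
  have : (0:ℝ) ≤ 1 - ω := by linarith [hω.2]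
  nlinarith
end

section
/- Let 𝔤 be a strictly positive probability density on ℝ, 𝔲 a probability density on ℝ, and θ₀ ∈ [0,1]; let 𝔣(x) = θ₀·𝔤(x) + (1−θ₀)·∫_{−∞}^{∞} 𝔤^s(x)·𝔲(s) ds, where 𝔤^s(x) = 𝔤(x)·1[x ≤ s]/𝔊(s) and 𝔊(s) = ∫_{−∞}^{s} 𝔤(t) dt. Then for every ε > 0 there exists δ > 0 such that for every strictly positive probability density g, probability density u, and θ ∈ [0,1] with ‖g − 𝔤‖₁ + ‖u − 𝔲‖₁ + |θ − θ₀| < δ, the density f(x) = θ·g(x) + (1−θ)·∫_{−∞}^{∞} g^s(x)·u(s) ds (with g^s(x) = g(x)·1[x ≤ s]/G(s), G(s) = ∫_{−∞}^{s} g(t) dt) satisfies ‖f − 𝔣‖₁ + ‖g − 𝔤‖₁ < ε. In other words, the map T : (g, u, θ) ↦ (f, g) is continuous from Δ₊ × Δ × [0,1] with metric d₂ to Δ × Δ₊ with metric d₁. -/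
open MeasureTheory

open Set

namespace MapT

structure Dens (p : ℝ → ℝ) : Prop where
  meas : Measurable p
  pos : ∀ x, 0 < p x
  one : (∫ x, p x) = 1

noncomputable def cdf (p : ℝ → ℝ) (s : ℝ) : ℝ := ∫ t in Iic s, p t

noncomputable def K (p : ℝ → ℝ) (x s : ℝ) : ℝ :=
  p x * (if x ≤ s then (1 : ℝ) else 0) / cdf p s

variable {p q : ℝ → ℝ}

lemma Dens.nonneg (hp : Dens p) (x : ℝ) : 0 ≤ p x := (hp.pos x).le

lemma Dens.integrable (hp : Dens p) : Integrable p := by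
  by_contra h
  have h1 := hp.one
  rw [integral_undef h] at h1
  exact absurd h1 (by norm_num)

lemma cdf_mono (hp : Dens p) : Monotone (cdf p) := by
  intro a b hab
  exact setIntegral_mono_set hp.integrable.integrableOn
    (Filter.Eventually.of_forall fun x => hp.nonneg x)
    ((Iic_subset_Iic.2 hab).eventuallyLE)

lemma cdf_meas (hp : Dens p) : Measurable (cdf p) := (cdf_mono hp).measurable

lemma cdf_pos (hp : Dens p) (s : ℝ) : 0 < cdf p s := by
  rw [cdf, setIntegral_pos_iff_support_of_nonneg_ae
    (Filter.Eventually.of_forall fun x => hp.nonneg x) hp.integrable.integrableOn]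
  have : Function.support p ∩ Iic s = Iic s := by
    apply inter_eq_self_of_subset_right
    intro x _
    exact (hp.pos x).ne'
  rw [this, Real.volume_Iic]
  norm_num

lemma cdf_le_one (hp : Dens p) (s : ℝ) : cdf p s ≤ 1 := by
  rw [← hp.one]
  exact setIntegral_le_integral hp.integrable
    (Filter.Eventually.of_forall fun x => hp.nonneg x)

lemma K_eq (s : ℝ) : (fun x => K p x s) = fun x => (Iic s).indicator p x / cdf p s := by
  funext x
  by_cases h : x ≤ s <;> simp [K, indicator, mem_Iic, h]

lemma K_nonneg (hp : Dens p) (x s : ℝ) : 0 ≤ K p x s := by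
  apply div_nonneg _ (cdf_pos hp s).le
  apply mul_nonneg (hp.nonneg x)
  split <;> norm_num

lemma K_le (hp : Dens p) (x s : ℝ) : K p x s ≤ p x / cdf p x := by
  by_cases h : x ≤ s
  · rw [K, if_pos h, mul_one]
    exact div_le_div_of_nonneg_left (hp.nonneg x) (cdf_pos hp x) (cdf_mono hp h)
  · rw [K, if_neg h, mul_zero, zero_div]
    exact div_nonneg (hp.nonneg x) (cdf_pos hp x).le

lemma integrable_K (hp : Dens p) (s : ℝ) : Integrable (fun x => K p x s) := by
  rw [K_eq]
  exact (hp.integrable.indicator measurableSet_Iic).div_const _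

lemma integral_K (hp : Dens p) (s : ℝ) : (∫ x, K p x s) = 1 := by
  rw [K_eq]
  rw [integral_div, integral_indicator measurableSet_Iic]
  exact div_self (cdf_pos hp s).ne'

lemma measurable_K (hp : Dens p) : Measurable (fun z : ℝ × ℝ => K p z.1 z.2) := by
  apply Measurable.div
  · exact (hp.meas.comp measurable_fst).mul
      (Measurable.ite (measurableSet_le measurable_fst measurable_snd)
        measurable_const measurable_const)
  · exact (cdf_meas hp).comp measurable_snd

lemma measurable_K_right (hp : Dens p) (x : ℝ) : Measurable (fun s => K p x s) :=
  (measurable_K hp).comp (measurable_const.prodMk measurable_id)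

lemma integrable_K_mul (hp : Dens p) (x : ℝ) {w : ℝ → ℝ} (hwm : Measurable w)
    (hw0 : ∀ s, 0 ≤ w s) (hwi : Integrable w) :
    Integrable (fun s => K p x s * w s) := by
  apply Integrable.mono' (hwi.const_mul (p x / cdf p x))
    (((measurable_K_right hp x).mul hwm).aestronglyMeasurable)
  refine Filter.Eventually.of_forall fun s => ?_
  rw [Real.norm_eq_abs]
  change |K p x s * w s| ≤ _
  rw [abs_of_nonneg (mul_nonneg (K_nonneg hp x s) (hw0 s))]
  exact mul_le_mul_of_nonneg_right (K_le hp x s) (hw0 s)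

lemma integrable_Kdiff_mul (hp : Dens p) (hq : Dens q) (x : ℝ) {w : ℝ → ℝ}
    (hwm : Measurable w) (hw0 : ∀ s, 0 ≤ w s) (hwi : Integrable w) :
    Integrable (fun s => |K p x s - K q x s| * w s) := by
  apply Integrable.mono' (hwi.const_mul (p x / cdf p x + q x / cdf q x))
    ((((measurable_K_right hp x).sub (measurable_K_right hq x)).abs.mul
      hwm).aestronglyMeasurable)
  refine Filter.Eventually.of_forall fun s => ?_
  rw [Real.norm_eq_abs]
  change abs (|K p x s - K q x s| * w s) ≤ _
  rw [abs_of_nonneg (mul_nonneg (abs_nonneg _) (hw0 s))]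
  apply mul_le_mul_of_nonneg_right _ (hw0 s)
  calc |K p x s - K q x s| ≤ |K p x s| + |K q x s| := abs_sub _ _
    _ = K p x s + K q x s := by
        rw [abs_of_nonneg (K_nonneg hp x s), abs_of_nonneg (K_nonneg hq x s)]
    _ ≤ _ := add_le_add (K_le hp x s) (K_le hq x s)


lemma integrable_Kdiff_abs (hp : Dens p) (hq : Dens q) (s : ℝ) :
    Integrable (fun x => |K p x s - K q x s|) :=
  ((integrable_K hp s).sub (integrable_K hq s)).abs

lemma D_le_two (hp : Dens p) (hq : Dens q) (s : ℝ) :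
    (∫ x, |K p x s - K q x s|) ≤ 2 := by
  have h := integral_mono (integrable_Kdiff_abs hp hq s)
    ((integrable_K hp s).add (integrable_K hq s)) (fun x => by
      calc |K p x s - K q x s| ≤ |K p x s| + |K q x s| := abs_sub _ _
        _ = K p x s + K q x s := by
            rw [abs_of_nonneg (K_nonneg hp x s), abs_of_nonneg (K_nonneg hq x s)])
  simp only [Pi.add_apply] at h
  rw [integral_add (integrable_K hp s) (integrable_K hq s), integral_K hp,
    integral_K hq] at h
  linarith

lemma abs_cdf_sub_le (hp : Dens p) (hq : Dens q) (s : ℝ) :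
    |cdf p s - cdf q s| ≤ ∫ x, |p x - q x| := by
  have h1 : cdf p s - cdf q s = ∫ x in Iic s, (p x - q x) := by
    rw [integral_sub hp.integrable.integrableOn hq.integrable.integrableOn]; rfl
  rw [h1]
  calc |∫ x in Iic s, (p x - q x)| ≤ ∫ x in Iic s, |p x - q x| := by
        simpa [Real.norm_eq_abs] using
          norm_integral_le_integral_norm (μ := volume.restrict (Iic s)) (fun x => p x - q x)
    _ ≤ ∫ x, |p x - q x| :=
        setIntegral_le_integral (hp.integrable.sub hq.integrable).abs
          (Filter.Eventually.of_forall fun x => abs_nonneg _)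

lemma D_le (hp : Dens p) (hq : Dens q) (s : ℝ) :
    (∫ x, |K p x s - K q x s|) ≤ 2 * (∫ x, |p x - q x|) / cdf q s := by
  set P := cdf p s with hP
  set Q := cdf q s with hQ
  have hPpos := cdf_pos hp s
  have hQpos := cdf_pos hq s
  set c : ℝ := |1 / P - 1 / Q| with hc
  set npq : ℝ := ∫ x, |p x - q x| with hnpq
  have hnpq0 : 0 ≤ npq := integral_nonneg fun x => abs_nonneg _
  -- pointwise bound
  have hpt : ∀ x, |K p x s - K q x s| ≤
      (Iic s).indicator (fun t => |p t - q t|) x / Q + (Iic s).indicator p x * c := by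
    intro x
    by_cases h : x ≤ s
    · have hx : x ∈ Iic s := h
      simp only [K, if_pos h, mul_one, indicator_of_mem hx]
      have hrw : p x / P - q x / Q = (p x - q x) / Q + p x * (1 / P - 1 / Q) := by
        field_simp
        ring
      rw [hrw]
      calc |(p x - q x) / Q + p x * (1 / P - 1 / Q)|
          ≤ |(p x - q x) / Q| + |p x * (1 / P - 1 / Q)| := abs_add_le _ _
        _ = |p x - q x| / Q + p x * c := by
            rw [abs_div, abs_of_pos hQpos, abs_mul, abs_of_nonneg (hp.nonneg x)]
    · have hx : x ∉ Iic s := h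
      simp only [K, if_neg h, mul_zero, zero_div, sub_self, abs_zero,
        indicator_of_notMem hx]
      positivity
  -- integrability of the two pieces
  have hint1 : Integrable (fun x => (Iic s).indicator (fun t => |p t - q t|) x / Q) :=
    (((hp.integrable.sub hq.integrable).abs).indicator measurableSet_Iic).div_const _
  have hint2 : Integrable (fun x => (Iic s).indicator p x * c) :=
    (hp.integrable.indicator measurableSet_Iic).mul_const _
  have h := integral_mono (integrable_Kdiff_abs hp hq s) (hint1.add hint2) hpt
  simp only [Pi.add_apply] at h
  rw [integral_add hint1 hint2, integral_div, integral_mul_const,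
    integral_indicator measurableSet_Iic, integral_indicator measurableSet_Iic] at h
  have e1 : (∫ x in Iic s, |p x - q x|) / Q ≤ npq / Q := by
    apply div_le_div_of_nonneg_right ?_ hQpos.le
    exact setIntegral_le_integral (hp.integrable.sub hq.integrable).abs
      (Filter.Eventually.of_forall fun x => abs_nonneg _)
  have e2 : (∫ x in Iic s, p x) * c ≤ npq / Q := by
    have hPc : (∫ x in Iic s, p x) * c = |Q - P| / Q := by
      have h0 : (∫ x in Iic s, p x) = P := rfl
      have h : 1 / P - 1 / Q = (Q - P) / (P * Q) := by
        rw [div_sub_div (1:ℝ) (1:ℝ) (show P ≠ 0 from hPpos.ne') (show Q ≠ 0 from hQpos.ne')]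
        ring
      rw [h0, hc, h, abs_div, abs_of_pos (mul_pos hPpos hQpos), ← mul_div_assoc,
        mul_div_mul_left _ _ hPpos.ne']
    rw [hPc]
    apply div_le_div_of_nonneg_right ?_ hQpos.le
    calc |Q - P| = |P - Q| := abs_sub_comm _ _
      _ ≤ npq := abs_cdf_sub_le hp hq s
  calc (∫ x, |K p x s - K q x s|) ≤ _ := h
    _ ≤ npq / Q + npq / Q := add_le_add e1 e2
    _ = 2 * npq / Q := by ring

lemma swap_helper {F : ℝ → ℝ → ℝ} (hF : Measurable (fun z : ℝ × ℝ => F z.1 z.2))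
    (h0 : ∀ x s, 0 ≤ F x s) (h1 : ∀ x, Integrable (F x))
    (h2 : ∀ s, Integrable fun x => F x s) :
    ∫⁻ x, ENNReal.ofReal (∫ s, F x s) = ∫⁻ s, ENNReal.ofReal (∫ x, F x s) := by
  have hmeas : AEMeasurable (fun z : ℝ × ℝ => ENNReal.ofReal (Function.uncurry F z))
      ((volume : Measure ℝ).prod volume) :=
    (ENNReal.measurable_ofReal.comp hF).aemeasurable
  calc ∫⁻ x, ENNReal.ofReal (∫ s, F x s)
      = ∫⁻ x, ∫⁻ s, ENNReal.ofReal (F x s) := by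
        refine lintegral_congr fun x =>
          ofReal_integral_eq_lintegral_ofReal (h1 x)
            (Filter.Eventually.of_forall (h0 x))
    _ = ∫⁻ s, ∫⁻ x, ENNReal.ofReal (F x s) := lintegral_lintegral_swap hmeas
    _ = ∫⁻ s, ENNReal.ofReal (∫ x, F x s) := by
        refine lintegral_congr fun s =>
          (ofReal_integral_eq_lintegral_ofReal (h2 s)
            (Filter.Eventually.of_forall fun x => h0 x s)).symm

lemma lintegral_I (hp : Dens p) {w : ℝ → ℝ} (hwm : Measurable w)
    (hw0 : ∀ s, 0 ≤ w s) (hwi : Integrable w) :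
    ∫⁻ x, ENNReal.ofReal (∫ s, K p x s * w s) = ENNReal.ofReal (∫ s, w s) := by
  rw [swap_helper (F := fun x s => K p x s * w s)
      ((measurable_K hp).mul (hwm.comp measurable_snd))
      (fun x s => mul_nonneg (K_nonneg hp x s) (hw0 s))
      (fun x => integrable_K_mul hp x hwm hw0 hwi)
      (fun s => (integrable_K hp s).mul_const _)]
  have : ∀ s, (∫ x, K p x s * w s) = w s := by
    intro s
    rw [integral_mul_const, integral_K hp, one_mul]
  rw [lintegral_congr fun s => congrArg ENNReal.ofReal (this s)]
  exact (ofReal_integral_eq_lintegral_ofReal hwi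
    (Filter.Eventually.of_forall hw0)).symm

lemma lintegral_Idiff (hp : Dens p) (hq : Dens q) {w : ℝ → ℝ} (hwm : Measurable w)
    (hw0 : ∀ s, 0 ≤ w s) (hwi : Integrable w) :
    ∫⁻ x, ENNReal.ofReal (∫ s, |K p x s - K q x s| * w s) =
      ∫⁻ s, ENNReal.ofReal ((∫ x, |K p x s - K q x s|) * w s) := by
  rw [swap_helper (F := fun x s => |K p x s - K q x s| * w s)
      (((measurable_K hp).sub (measurable_K hq)).abs.mul
      (hwm.comp measurable_snd))
      (fun x s => mul_nonneg (abs_nonneg _) (hw0 s))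
      (fun x => integrable_Kdiff_mul hp hq x hwm hw0 hwi)
      (fun s => (integrable_Kdiff_abs hp hq s).mul_const _)]
  exact lintegral_congr fun s => congrArg ENNReal.ofReal (integral_mul_const _ _)

lemma exists_tail {v : ℝ → ℝ} (hvm : Measurable v) (hv0 : ∀ x, 0 ≤ v x)
    (hvi : Integrable v) {ε : ℝ} (hε : 0 < ε) :
    ∃ A : ℝ, (∫ s in Iic A, v s) < ε := by
  have hlim : Filter.Tendsto (fun n : ℕ => ∫ s, (Iic (-(n : ℝ))).indicator v s)
      Filter.atTop (nhds (∫ _ : ℝ, (0 : ℝ))) := by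
    apply tendsto_integral_of_dominated_convergence v
      (fun n => (hvm.indicator measurableSet_Iic).aestronglyMeasurable) hvi
    · intro n
      refine Filter.Eventually.of_forall fun s => ?_
      rw [Real.norm_eq_abs, abs_of_nonneg (indicator_nonneg (fun x _ => hv0 x) s)]
      exact indicator_le_self' (fun x _ => hv0 x) s
    · refine Filter.Eventually.of_forall fun s => ?_
      obtain ⟨N, hN⟩ := exists_nat_gt (-s)
      apply Filter.Tendsto.congr' (f₁ := fun _ => (0 : ℝ))
      · filter_upwards [Filter.eventually_ge_atTop N] with n hn
        have : s ∉ Iic (-(n : ℝ)) := by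
          simp only [mem_Iic, not_le]
          have : (N : ℝ) ≤ n := Nat.cast_le.2 hn
          linarith
        exact (indicator_of_notMem this v).symm
      · exact tendsto_const_nhds
  rw [integral_zero] at hlim
  obtain ⟨n, hn⟩ := (hlim.eventually_lt_const hε).exists
  exact ⟨-(n : ℝ), by rwa [integral_indicator measurableSet_Iic] at hn⟩


lemma measurable_I (hp : Dens p) {w : ℝ → ℝ} (hwm : Measurable w) :
    Measurable fun x => ∫ s, K p x s * w s := by
  have h : StronglyMeasurable fun z : ℝ × ℝ => K p z.1 z.2 * w z.2 :=
    ((measurable_K hp).mul (hwm.comp measurable_snd)).stronglyMeasurable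
  exact h.integral_prod_right'.measurable

lemma measurable_Idiff (hp : Dens p) (hq : Dens q) {w : ℝ → ℝ} (hwm : Measurable w) :
    Measurable fun x => ∫ s, |K p x s - K q x s| * w s := by
  have h : StronglyMeasurable fun z : ℝ × ℝ => |K p z.1 z.2 - K q z.1 z.2| * w z.2 :=
    (((measurable_K hp).sub (measurable_K hq)).abs.mul
      (hwm.comp measurable_snd)).stronglyMeasurable
  exact h.integral_prod_right'.measurable

end MapT

open MapT

/-- Continuity of the map `T : (g, u, θ) ↦ (f, g)`, where
`f(x) = θ·g(x) + (1−θ)·∫ g^s(x)·u(s) ds` with `g^s` the right-truncation of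
`g` at `s`: at every point `(𝔤, 𝔲, θ₀)` of `Δ₊ × Δ × [0,1]`, for every
`ε > 0` there is `δ > 0` such that whenever `(g, u, θ)` is `δ`-close in the
metric `d₂ = ‖·‖₁ + ‖·‖₁ + |·|`, the images are `ε`-close in the metric
`d₁ = ‖·‖₁ + ‖·‖₁`. -/
theorem map_T_continuous
    (𝔤 𝔲 𝔣 : ℝ → ℝ) (θ₀ : ℝ)
    (h𝔤m : Measurable 𝔤) (h𝔤pos : ∀ x, 0 < 𝔤 x) (h𝔤1 : ∫ x, 𝔤 x = 1)
    (h𝔲m : Measurable 𝔲) (h𝔲0 : ∀ x, 0 ≤ 𝔲 x) (h𝔲1 : ∫ x, 𝔲 x = 1)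
    (hθ₀ : θ₀ ∈ Set.Icc (0 : ℝ) 1)
    (h𝔣 : ∀ x, 𝔣 x = θ₀ * 𝔤 x + (1 - θ₀) *
      ∫ s, (𝔤 x * (if x ≤ s then (1 : ℝ) else 0) / ∫ t in Set.Iic s, 𝔤 t) * 𝔲 s) :
    ∀ ε > (0 : ℝ), ∃ δ > (0 : ℝ), ∀ (g u f : ℝ → ℝ) (θ : ℝ),
      Measurable g → (∀ x, 0 < g x) → (∫ x, g x) = 1 →
      Measurable u → (∀ x, 0 ≤ u x) → (∫ x, u x) = 1 →
      θ ∈ Set.Icc (0 : ℝ) 1 →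
      (∀ x, f x = θ * g x + (1 - θ) *
        ∫ s, (g x * (if x ≤ s then (1 : ℝ) else 0) / ∫ t in Set.Iic s, g t) * u s) →
      (∫ x, |g x - 𝔤 x|) + (∫ x, |u x - 𝔲 x|) + |θ - θ₀| < δ →
      (∫ x, |f x - 𝔣 x|) + (∫ x, |g x - 𝔤 x|) < ε := by
  intro ε hε
  have hG : Dens 𝔤 := ⟨h𝔤m, h𝔤pos, h𝔤1⟩
  have h𝔲i : Integrable 𝔲 := by
    by_contra h; rw [integral_undef h] at h𝔲1; norm_num at h𝔲1
  obtain ⟨A, hA⟩ := exists_tail h𝔲m h𝔲0 h𝔲i (show (0:ℝ) < ε/8 by linarith)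
  set QA : ℝ := cdf 𝔤 A with hQAdef
  have hQApos : 0 < QA := cdf_pos hG A
  set δ : ℝ := min 1 ((ε/4)/(5 + 2/QA)) with hδdef
  have hδpos : 0 < δ := lt_min one_pos (div_pos (by linarith) (by positivity))
  refine ⟨δ, hδpos, ?_⟩
  intro g u f θ hgm hgpos hg1 hum hu0 hu1 hθ hf hd
  have hg : Dens g := ⟨hgm, hgpos, hg1⟩
  have hui : Integrable u := by
    by_contra h; rw [integral_undef h] at hu1; norm_num at hu1
  set ng : ℝ := ∫ x, |g x - 𝔤 x| with hngdef
  set nu : ℝ := ∫ x, |u x - 𝔲 x| with hnudef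
  set nθ : ℝ := |θ - θ₀| with hnθdef
  have hng0 : 0 ≤ ng := integral_nonneg fun x => abs_nonneg _
  have hnu0 : 0 ≤ nu := integral_nonneg fun x => abs_nonneg _
  have hnθ0 : 0 ≤ nθ := abs_nonneg _
  have hngδ : ng < δ := by linarith
  have hnuδ : nu < δ := by linarith
  have hnθδ : nθ < δ := by linarith
  -- w1 = |u - 𝔲|
  set w1 : ℝ → ℝ := fun s => |u s - 𝔲 s| with hw1def
  have hw1m : Measurable w1 := (hum.sub h𝔲m).abs
  have hw10 : ∀ s, 0 ≤ w1 s := fun s => abs_nonneg _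
  have hw1i : Integrable w1 := (hui.sub h𝔲i).abs
  -- reformulated hypotheses
  have hf' : ∀ x, f x = θ * g x + (1 - θ) * ∫ s, K g x s * u s := hf
  have h𝔣' : ∀ x, 𝔣 x = θ₀ * 𝔤 x + (1 - θ₀) * ∫ s, K 𝔤 x s * 𝔲 s := h𝔣
  -- pointwise bound
  have key : ∀ x, |f x - 𝔣 x| ≤ |g x - 𝔤 x| + (nθ * 𝔤 x + ((∫ s, K g x s * w1 s) +
      ((∫ s, |K g x s - K 𝔤 x s| * 𝔲 s) + nθ * (∫ s, K 𝔤 x s * 𝔲 s)))) := by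
    intro x
    have hI1 : Integrable (fun s => K g x s * u s) := integrable_K_mul hg x hum hu0 hui
    have hI2 : Integrable (fun s => K g x s * 𝔲 s) := integrable_K_mul hg x h𝔲m h𝔲0 h𝔲i
    have hI3 : Integrable (fun s => K 𝔤 x s * 𝔲 s) := integrable_K_mul hG x h𝔲m h𝔲0 h𝔲i
    set I1 : ℝ := ∫ s, K g x s * u s with hI1def
    set I2 : ℝ := ∫ s, K g x s * 𝔲 s with hI2def
    set I3 : ℝ := ∫ s, K 𝔤 x s * 𝔲 s with hI3def
    set J3 : ℝ := ∫ s, K g x s * w1 s with hJ3def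
    set J4 : ℝ := ∫ s, |K g x s - K 𝔤 x s| * 𝔲 s with hJ4def
    have hI3nn : 0 ≤ I3 := integral_nonneg fun s => mul_nonneg (K_nonneg hG x s) (h𝔲0 s)
    have e1 : |I1 - I2| ≤ J3 := by
      rw [hI1def, hI2def, ← integral_sub hI1 hI2]
      have heq : (fun s => |K g x s * u s - K g x s * 𝔲 s|) = fun s => K g x s * w1 s := by
        funext s
        rw [← mul_sub, abs_mul, abs_of_nonneg (K_nonneg hg x s)]
      calc |∫ s, (K g x s * u s - K g x s * 𝔲 s)|
          ≤ ∫ s, |K g x s * u s - K g x s * 𝔲 s| := by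
            simpa [Real.norm_eq_abs] using
              norm_integral_le_integral_norm (μ := volume)
                (fun s => K g x s * u s - K g x s * 𝔲 s)
        _ = J3 := by rw [heq]
    have e2 : |I2 - I3| ≤ J4 := by
      rw [hI2def, hI3def, ← integral_sub hI2 hI3]
      have heq : (fun s => |K g x s * 𝔲 s - K 𝔤 x s * 𝔲 s|) =
          fun s => |K g x s - K 𝔤 x s| * 𝔲 s := by
        funext s
        rw [← sub_mul, abs_mul, abs_of_nonneg (h𝔲0 s)]
      calc |∫ s, (K g x s * 𝔲 s - K 𝔤 x s * 𝔲 s)|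
          ≤ ∫ s, |K g x s * 𝔲 s - K 𝔤 x s * 𝔲 s| := by
            simpa [Real.norm_eq_abs] using
              norm_integral_le_integral_norm (μ := volume)
                (fun s => K g x s * 𝔲 s - K 𝔤 x s * 𝔲 s)
        _ = J4 := by rw [heq]
    have hJ3nn : 0 ≤ J3 := integral_nonneg fun s => mul_nonneg (K_nonneg hg x s) (hw10 s)
    have hJ4nn : 0 ≤ J4 := integral_nonneg fun s => mul_nonneg (abs_nonneg _) (h𝔲0 s)
    have hdiff : f x - 𝔣 x = θ*(g x - 𝔤 x) + ((θ-θ₀)*𝔤 x + ((1-θ)*(I1-I2) +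
        ((1-θ)*(I2-I3) + (θ₀-θ)*I3))) := by
      rw [hf' x, h𝔣' x]; ring
    rw [hdiff]
    have t1 : |θ*(g x - 𝔤 x)| ≤ |g x - 𝔤 x| := by
      rw [abs_mul, abs_of_nonneg hθ.1]
      exact mul_le_of_le_one_left (abs_nonneg _) hθ.2
    have t2 : |(θ-θ₀)*𝔤 x| = nθ * 𝔤 x := by
      rw [abs_mul, abs_of_pos (h𝔤pos x)]
    have t3 : |(1-θ)*(I1-I2)| ≤ J3 := by
      rw [abs_mul, abs_of_nonneg (by linarith [hθ.2] : (0:ℝ) ≤ 1-θ)]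
      calc (1-θ) * |I1-I2| ≤ 1 * |I1-I2| := by
            apply mul_le_mul_of_nonneg_right _ (abs_nonneg _)
            linarith [hθ.1]
        _ = |I1-I2| := one_mul _
        _ ≤ J3 := e1
    have t4 : |(1-θ)*(I2-I3)| ≤ J4 := by
      rw [abs_mul, abs_of_nonneg (by linarith [hθ.2] : (0:ℝ) ≤ 1-θ)]
      calc (1-θ) * |I2-I3| ≤ 1 * |I2-I3| := by
            apply mul_le_mul_of_nonneg_right _ (abs_nonneg _)
            linarith [hθ.1]
        _ = |I2-I3| := one_mul _
        _ ≤ J4 := e2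
    have t5 : |(θ₀-θ)*I3| ≤ nθ * I3 := by
      rw [abs_mul, abs_of_nonneg hI3nn, abs_sub_comm]
    calc |θ*(g x - 𝔤 x) + ((θ-θ₀)*𝔤 x + ((1-θ)*(I1-I2) + ((1-θ)*(I2-I3) + (θ₀-θ)*I3)))|
        ≤ |θ*(g x - 𝔤 x)| + |(θ-θ₀)*𝔤 x + ((1-θ)*(I1-I2) + ((1-θ)*(I2-I3) + (θ₀-θ)*I3))| :=
          abs_add_le _ _
      _ ≤ |θ*(g x - 𝔤 x)| + (|(θ-θ₀)*𝔤 x| + |(1-θ)*(I1-I2) + ((1-θ)*(I2-I3) + (θ₀-θ)*I3)|) :=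
          add_le_add le_rfl (abs_add_le _ _)
      _ ≤ |θ*(g x - 𝔤 x)| + (|(θ-θ₀)*𝔤 x| + (|(1-θ)*(I1-I2)| + |(1-θ)*(I2-I3) + (θ₀-θ)*I3|)) :=
          add_le_add le_rfl (add_le_add le_rfl (abs_add_le _ _))
      _ ≤ |θ*(g x - 𝔤 x)| + (|(θ-θ₀)*𝔤 x| + (|(1-θ)*(I1-I2)| + (|(1-θ)*(I2-I3)| + |(θ₀-θ)*I3|))) :=
          add_le_add le_rfl (add_le_add le_rfl (add_le_add le_rfl (abs_add_le _ _)))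
      _ ≤ |g x - 𝔤 x| + (nθ * 𝔤 x + (J3 + (J4 + nθ * I3))) :=
          add_le_add t1 (add_le_add t2.le (add_le_add t3 (add_le_add t4 t5)))
  -- measurability facts
  have hfm : Measurable f := by
    rw [funext hf']
    exact (measurable_const.mul hgm).add
      (measurable_const.mul (measurable_I hg hum))
  have h𝔣m : Measurable 𝔣 := by
    rw [funext h𝔣']
    exact (measurable_const.mul h𝔤m).add
      (measurable_const.mul (measurable_I hG h𝔲m))
  set IA : ℝ := ∫ s in Set.Iic A, 𝔲 s with hIAdef
  have hIA0 : 0 ≤ IA := setIntegral_nonneg measurableSet_Iic fun s _ => h𝔲0 s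
  -- main lintegral bound
  have hmain : (∫ x, |f x - 𝔣 x|) ≤
      ng + (nθ + (nu + ((2 * IA + 2 * ng / QA) + nθ))) := by
    have hrepr : (∫ x, |f x - 𝔣 x|) = (∫⁻ x, ENNReal.ofReal |f x - 𝔣 x|).toReal :=
      integral_eq_lintegral_of_nonneg_ae (Filter.Eventually.of_forall fun x => abs_nonneg _)
        ((hfm.sub h𝔣m).abs.aestronglyMeasurable)
    have h2ng0 : (0:ℝ) ≤ 2 * ng / QA := div_nonneg (by linarith) hQApos.le
    have h2IA0 : (0:ℝ) ≤ 2 * IA := by linarith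
    have hR0 : (0:ℝ) ≤ ng + (nθ + (nu + ((2 * IA + 2 * ng / QA) + nθ))) := by linarith
    have m1 : AEMeasurable (fun x => ENNReal.ofReal |g x - 𝔤 x|) :=
      ((hgm.sub h𝔤m).abs.ennreal_ofReal).aemeasurable
    have m2 : AEMeasurable (fun x => ENNReal.ofReal (nθ * 𝔤 x)) :=
      ((measurable_const.mul h𝔤m).ennreal_ofReal).aemeasurable
    have m3 : AEMeasurable (fun x => ENNReal.ofReal (∫ s, K g x s * w1 s)) :=
      ((measurable_I hg hw1m).ennreal_ofReal).aemeasurable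
    have m4 : AEMeasurable (fun x => ENNReal.ofReal (∫ s, |K g x s - K 𝔤 x s| * 𝔲 s)) :=
      ((measurable_Idiff hg hG h𝔲m).ennreal_ofReal).aemeasurable
    have hle1 : (∫⁻ x, ENNReal.ofReal |f x - 𝔣 x|) ≤
        ∫⁻ x, (ENNReal.ofReal |g x - 𝔤 x| + (ENNReal.ofReal (nθ * 𝔤 x) +
          (ENNReal.ofReal (∫ s, K g x s * w1 s) +
          (ENNReal.ofReal (∫ s, |K g x s - K 𝔤 x s| * 𝔲 s) +
            ENNReal.ofReal (nθ * (∫ s, K 𝔤 x s * 𝔲 s)))))) := by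
      apply lintegral_mono
      intro x
      refine le_trans (ENNReal.ofReal_le_ofReal (key x)) ?_
      exact le_trans ENNReal.ofReal_add_le (add_le_add le_rfl (le_trans ENNReal.ofReal_add_le
        (add_le_add le_rfl (le_trans ENNReal.ofReal_add_le
          (add_le_add le_rfl ENNReal.ofReal_add_le)))))
    have hsplit : (∫⁻ x, (ENNReal.ofReal |g x - 𝔤 x| + (ENNReal.ofReal (nθ * 𝔤 x) +
          (ENNReal.ofReal (∫ s, K g x s * w1 s) +
          (ENNReal.ofReal (∫ s, |K g x s - K 𝔤 x s| * 𝔲 s) +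
            ENNReal.ofReal (nθ * (∫ s, K 𝔤 x s * 𝔲 s))))))) =
        (∫⁻ x, ENNReal.ofReal |g x - 𝔤 x|) + ((∫⁻ x, ENNReal.ofReal (nθ * 𝔤 x)) +
          ((∫⁻ x, ENNReal.ofReal (∫ s, K g x s * w1 s)) +
          ((∫⁻ x, ENNReal.ofReal (∫ s, |K g x s - K 𝔤 x s| * 𝔲 s)) +
            ∫⁻ x, ENNReal.ofReal (nθ * (∫ s, K 𝔤 x s * 𝔲 s))))) := by
      rw [lintegral_add_left' m1, lintegral_add_left' m2, lintegral_add_left' m3,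
        lintegral_add_left' m4]
    have hL1 : (∫⁻ x, ENNReal.ofReal |g x - 𝔤 x|) = ENNReal.ofReal ng :=
      (ofReal_integral_eq_lintegral_ofReal (hg.integrable.sub hG.integrable).abs
        (Filter.Eventually.of_forall fun x => abs_nonneg _)).symm
    have hL2 : (∫⁻ x, ENNReal.ofReal (nθ * 𝔤 x)) = ENNReal.ofReal nθ := by
      rw [← ofReal_integral_eq_lintegral_ofReal (hG.integrable.const_mul nθ)
        (Filter.Eventually.of_forall fun x => mul_nonneg hnθ0 (h𝔤pos x).le)]
      rw [integral_const_mul, h𝔤1, mul_one]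
    have hL3 : (∫⁻ x, ENNReal.ofReal (∫ s, K g x s * w1 s)) = ENNReal.ofReal nu := by
      rw [lintegral_I hg hw1m hw10 hw1i]
    have hL5 : (∫⁻ x, ENNReal.ofReal (nθ * (∫ s, K 𝔤 x s * 𝔲 s))) = ENNReal.ofReal nθ := by
      have hc : ∀ x, ENNReal.ofReal (nθ * (∫ s, K 𝔤 x s * 𝔲 s)) =
          ENNReal.ofReal nθ * ENNReal.ofReal (∫ s, K 𝔤 x s * 𝔲 s) :=
        fun x => ENNReal.ofReal_mul hnθ0
      rw [lintegral_congr hc, lintegral_const_mul' _ _ ENNReal.ofReal_ne_top,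
        lintegral_I hG h𝔲m h𝔲0 h𝔲i, h𝔲1, ENNReal.ofReal_one, mul_one]
    have hL4 : (∫⁻ x, ENNReal.ofReal (∫ s, |K g x s - K 𝔤 x s| * 𝔲 s)) ≤
        ENNReal.ofReal (2 * IA) + ENNReal.ofReal (2 * ng / QA) := by
      rw [lintegral_Idiff hg hG h𝔲m h𝔲0 h𝔲i]
      have hpt : ∀ s, (∫ x, |K g x s - K 𝔤 x s|) * 𝔲 s ≤
          2 * (Set.Iic A).indicator 𝔲 s + (2 * ng / QA) * 𝔲 s := by
        intro s
        by_cases hs : s ≤ A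
        · rw [Set.indicator_of_mem (Set.mem_Iic.mpr hs) 𝔲]
          have h1 : (∫ x, |K g x s - K 𝔤 x s|) * 𝔲 s ≤ 2 * 𝔲 s :=
            mul_le_mul_of_nonneg_right (D_le_two hg hG s) (h𝔲0 s)
          have h2 : 0 ≤ (2 * ng / QA) * 𝔲 s := mul_nonneg h2ng0 (h𝔲0 s)
          linarith
        · rw [Set.indicator_of_notMem (fun hc => hs (Set.mem_Iic.mp hc)) 𝔲]
          have h1 := D_le hg hG s
          rw [← hngdef] at h1
          have h2 : 2 * ng / cdf 𝔤 s ≤ 2 * ng / QA :=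
            div_le_div_of_nonneg_left (by linarith) hQApos (cdf_mono hG (le_of_not_ge hs))
          have h3 := mul_le_mul_of_nonneg_right (h1.trans h2) (h𝔲0 s)
          have h4 : 0 ≤ ∫ x, |K g x s - K 𝔤 x s| :=
            integral_nonneg fun x => abs_nonneg _
          linarith
      calc (∫⁻ s, ENNReal.ofReal ((∫ x, |K g x s - K 𝔤 x s|) * 𝔲 s))
          ≤ ∫⁻ s, (ENNReal.ofReal (2 * (Set.Iic A).indicator 𝔲 s) +
              ENNReal.ofReal ((2 * ng / QA) * 𝔲 s)) := by
            apply lintegral_mono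
            intro s
            exact le_trans (ENNReal.ofReal_le_ofReal (hpt s)) ENNReal.ofReal_add_le
        _ = ENNReal.ofReal (2 * IA) + ENNReal.ofReal (2 * ng / QA) := by
            rw [lintegral_add_left' (show
              AEMeasurable (fun s => ENNReal.ofReal (2 * (Set.Iic A).indicator 𝔲 s)) volume from
              ((measurable_const.mul
              (h𝔲m.indicator measurableSet_Iic)).ennreal_ofReal).aemeasurable)]
            congr 1
            · rw [← ofReal_integral_eq_lintegral_ofReal
                ((h𝔲i.indicator measurableSet_Iic).const_mul 2)
                (Filter.Eventually.of_forall fun s => mul_nonneg two_pos.le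
                  (Set.indicator_nonneg (fun t _ => h𝔲0 t) s))]
              rw [integral_const_mul, integral_indicator measurableSet_Iic]
            · rw [← ofReal_integral_eq_lintegral_ofReal (h𝔲i.const_mul _)
                (Filter.Eventually.of_forall fun s => mul_nonneg h2ng0 (h𝔲0 s))]
              rw [integral_const_mul, h𝔲1, mul_one]
    rw [hrepr]
    apply ENNReal.toReal_le_of_le_ofReal hR0
    calc (∫⁻ x, ENNReal.ofReal |f x - 𝔣 x|) ≤ _ := hle1
      _ = _ := hsplit
      _ ≤ ENNReal.ofReal ng + (ENNReal.ofReal nθ + (ENNReal.ofReal nu +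
          ((ENNReal.ofReal (2 * IA) + ENNReal.ofReal (2 * ng / QA)) + ENNReal.ofReal nθ))) := by
          rw [hL1, hL2, hL3, hL5]
          exact add_le_add le_rfl (add_le_add le_rfl (add_le_add le_rfl
            (add_le_add hL4 le_rfl)))
      _ = ENNReal.ofReal (ng + (nθ + (nu + ((2 * IA + 2 * ng / QA) + nθ)))) := by
          rw [← ENNReal.ofReal_add h2IA0 h2ng0,
            ← ENNReal.ofReal_add (add_nonneg h2IA0 h2ng0) hnθ0,
            ← ENNReal.ofReal_add hnu0 (add_nonneg (add_nonneg h2IA0 h2ng0) hnθ0),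
            ← ENNReal.ofReal_add hnθ0 (add_nonneg hnu0 (add_nonneg (add_nonneg h2IA0 h2ng0) hnθ0)),
            ← ENNReal.ofReal_add hng0 (add_nonneg hnθ0 (add_nonneg hnu0
              (add_nonneg (add_nonneg h2IA0 h2ng0) hnθ0)))]
  -- final arithmetic
  have hδle : δ ≤ (ε/4)/(5 + 2/QA) := min_le_right _ _
  have h54 : δ * (5 + 2/QA) ≤ ε/4 := by
    rw [le_div_iff₀ (by positivity)] at hδle
    exact hδle
  have hexp : δ * (5 + 2/QA) = 5*δ + (2/QA)*δ := by ring
  have hq : 2 * ng / QA = (2/QA) * ng := by ring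
  have hmul : (2/QA) * ng ≤ (2/QA) * δ :=
    mul_le_mul_of_nonneg_left hngδ.le (by positivity)
  have hIAε : IA < ε/8 := hA
  rw [hq] at hmain
  linarith
end

section
/- Let g and 𝔤 be strictly positive probability densities on ℝ with distribution functions G(s) = ∫_{−∞}^s g and 𝔊(s) = ∫_{−∞}^s 𝔤, let u and 𝔲 be probability densities on ℝ, and let g^s(x) = g(x)·1[x ≤ s]/G(s) and 𝔤^s(x) = 𝔤(x)·1[x ≤ s]/𝔊(s). Then for every s₀ ∈ ℝ, ∫_{−∞}^{∞} | ∫_{s₀}^{∞} g^s(x)·u(s) ds − ∫_{s₀}^{∞} 𝔤^s(x)·𝔲(s) ds | dx ≤ ‖u − 𝔲‖₁ + (3/2)·‖g − 𝔤‖₁ · ∫_{s₀}^{∞} 𝔲(s)/{G(s)·𝔊(s)} ds. -/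
open MeasureTheory Set

set_option maxHeartbeats 4000000 in
/-- Key integral inequality from the proof of the continuity lemma: for
strictly positive densities `g, 𝔤` with distribution functions `G, 𝔊`,
densities `u, 𝔲`, and any `s₀ ∈ ℝ`,
`∫ |∫_{s₀}^∞ g^s(x)u(s) ds − ∫_{s₀}^∞ 𝔤^s(x)𝔲(s) ds| dx
  ≤ ‖u − 𝔲‖₁ + (3/2)·‖g − 𝔤‖₁·∫_{s₀}^∞ 𝔲(s)/(G(s)𝔊(s)) ds`. -/
theorem truncated_mixture_integral_inequality
    (g 𝔤 u 𝔲 : ℝ → ℝ)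
    (hgm : Measurable g) (hgpos : ∀ x, 0 < g x) (hg1 : ∫ x, g x = 1)
    (h𝔤m : Measurable 𝔤) (h𝔤pos : ∀ x, 0 < 𝔤 x) (h𝔤1 : ∫ x, 𝔤 x = 1)
    (hum : Measurable u) (hu0 : ∀ x, 0 ≤ u x) (hu1 : ∫ x, u x = 1)
    (h𝔲m : Measurable 𝔲) (h𝔲0 : ∀ x, 0 ≤ 𝔲 x) (h𝔲1 : ∫ x, 𝔲 x = 1)
    (G 𝔊 : ℝ → ℝ)
    (hG : ∀ s, G s = ∫ t in Set.Iic s, g t)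
    (h𝔊 : ∀ s, 𝔊 s = ∫ t in Set.Iic s, 𝔤 t)
    (s₀ : ℝ) :
    (∫ x, |(∫ s in Set.Ioi s₀, (g x * (if x ≤ s then (1 : ℝ) else 0) / G s) * u s) -
           (∫ s in Set.Ioi s₀, (𝔤 x * (if x ≤ s then (1 : ℝ) else 0) / 𝔊 s) * 𝔲 s)|) ≤
      (∫ s, |u s - 𝔲 s|) +
        (3 / 2) * (∫ x, |g x - 𝔤 x|) * ∫ s in Set.Ioi s₀, 𝔲 s / (G s * 𝔊 s) := by
  classical
  -- integrability of the densities
  have hgInt : Integrable g := by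
    by_contra h; rw [integral_undef h] at hg1; norm_num at hg1
  have h𝔤Int : Integrable 𝔤 := by
    by_contra h; rw [integral_undef h] at h𝔤1; norm_num at h𝔤1
  have huInt : Integrable u := by
    by_contra h; rw [integral_undef h] at hu1; norm_num at hu1
  have h𝔲Int : Integrable 𝔲 := by
    by_contra h; rw [integral_undef h] at h𝔲1; norm_num at h𝔲1
  set C : ℝ := ∫ x, |g x - 𝔤 x| with hCdef
  have hCnn : 0 ≤ C := integral_nonneg fun x => abs_nonneg _
  have hgsub : Integrable (fun x => g x - 𝔤 x) := hgInt.sub h𝔤Int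
  -- basic facts about G and 𝔊
  have hGmono : Monotone G := by
    intro s t hst
    rw [hG s, hG t]
    exact setIntegral_mono_set hgInt.integrableOn
      (Filter.Eventually.of_forall fun x => (hgpos x).le)
      (HasSubset.Subset.eventuallyLE (Iic_subset_Iic.mpr hst))
  have h𝔊mono : Monotone 𝔊 := by
    intro s t hst
    rw [h𝔊 s, h𝔊 t]
    exact setIntegral_mono_set h𝔤Int.integrableOn
      (Filter.Eventually.of_forall fun x => (h𝔤pos x).le)
      (HasSubset.Subset.eventuallyLE (Iic_subset_Iic.mpr hst))
  have hGmeas : Measurable G := hGmono.measurable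
  have h𝔊meas : Measurable 𝔊 := h𝔊mono.measurable
  have hpos : ∀ (f : ℝ → ℝ), Integrable f → (∀ x, 0 < f x) → ∀ s : ℝ,
      0 < ∫ t in Iic s, f t := by
    intro f hf hfpos s
    refine (setIntegral_pos_iff_support_of_nonneg_ae
      (Filter.Eventually.of_forall fun x => (hfpos x).le) hf.integrableOn).mpr ?_
    have hsupp : Function.support f ∩ Iic s = Iic s := by
      apply inter_eq_right.mpr
      intro x _; exact (hfpos x).ne'
    rw [hsupp]
    simp [Real.volume_Iic]
  have hGpos : ∀ s, 0 < G s := fun s => by rw [hG s]; exact hpos g hgInt hgpos s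
  have h𝔊pos : ∀ s, 0 < 𝔊 s := fun s => by rw [h𝔊 s]; exact hpos 𝔤 h𝔤Int h𝔤pos s
  have hGle1 : ∀ s, G s ≤ 1 := fun s => by
    rw [hG s, ← hg1]
    exact setIntegral_le_integral hgInt (Filter.Eventually.of_forall fun x => (hgpos x).le)
  have h𝔊le1 : ∀ s, 𝔊 s ≤ 1 := fun s => by
    rw [h𝔊 s, ← h𝔤1]
    exact setIntegral_le_integral h𝔤Int (Filter.Eventually.of_forall fun x => (h𝔤pos x).le)
  set a : ℝ := G s₀ with hadef
  set b : ℝ := 𝔊 s₀ with hbdef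
  have ha : 0 < a := hGpos s₀
  have hb : 0 < b := h𝔊pos s₀
  -- Kolmogorov bound
  have hsub0 : ∫ x, (g x - 𝔤 x) = 0 := by
    rw [integral_sub hgInt h𝔤Int, hg1, h𝔤1]; ring
  have hK : ∀ s, |G s - 𝔊 s| ≤ C / 2 := by
    intro s
    have h1 : G s - 𝔊 s = ∫ x in Iic s, (g x - 𝔤 x) := by
      rw [hG, h𝔊, integral_sub hgInt.integrableOn h𝔤Int.integrableOn]
    have h2 := integral_add_compl (measurableSet_Iic (a := s)) hgsub
    have h3 := integral_add_compl (measurableSet_Iic (a := s)) hgsub.abs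
    have h4 : |∫ x in Iic s, (g x - 𝔤 x)| ≤ ∫ x in Iic s, |g x - 𝔤 x| := by
      simpa [Real.norm_eq_abs] using
        norm_integral_le_integral_norm (μ := volume.restrict (Iic s)) (fun x => g x - 𝔤 x)
    have h5 : |∫ x in (Iic s)ᶜ, (g x - 𝔤 x)| ≤ ∫ x in (Iic s)ᶜ, |g x - 𝔤 x| := by
      simpa [Real.norm_eq_abs] using
        norm_integral_le_integral_norm (μ := volume.restrict (Iic s)ᶜ) (fun x => g x - 𝔤 x)
    have h6 : ∫ x in Iic s, (g x - 𝔤 x) = - ∫ x in (Iic s)ᶜ, (g x - 𝔤 x) := by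
      rw [hsub0] at h2; linarith
    rw [h1]
    rw [h6] at h4 ⊢
    rw [abs_neg] at h4 ⊢
    have : C = (∫ x in Iic s, |g x - 𝔤 x|) + ∫ x in (Iic s)ᶜ, |g x - 𝔤 x| := by
      rw [hCdef, ← h3]
    linarith
  -- lower bounds on G, 𝔊 on Ioi s₀
  have hGa : ∀ s ∈ Ioi s₀, a ≤ G s := fun s hs => hGmono (le_of_lt hs)
  have h𝔊b : ∀ s ∈ Ioi s₀, b ≤ 𝔊 s := fun s hs => h𝔊mono (le_of_lt hs)
  -- notation for kernels
  set ν : Measure ℝ := volume.restrict (Ioi s₀) with hνdef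
  set K₁ : ℝ → ℝ → ℝ := fun x s => g x * (if x ≤ s then (1 : ℝ) else 0) / G s with hK₁def
  set K₂ : ℝ → ℝ → ℝ := fun x s => 𝔤 x * (if x ≤ s then (1 : ℝ) else 0) / 𝔊 s with hK₂def
  have hite : ∀ x s : ℝ, (0:ℝ) ≤ (if x ≤ s then (1:ℝ) else 0) := by
    intro x s; split_ifs <;> norm_num
  have hK₁nn : ∀ x s, 0 ≤ K₁ x s := fun x s =>
    div_nonneg (mul_nonneg (hgpos x).le (hite x s)) (hGpos s).le
  have hK₂nn : ∀ x s, 0 ≤ K₂ x s := fun x s =>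
    div_nonneg (mul_nonneg (h𝔤pos x).le (hite x s)) (h𝔊pos s).le
  have hK₁le : ∀ x, ∀ s ∈ Ioi s₀, K₁ x s ≤ g x / a := by
    intro x s hs
    show g x * (if x ≤ s then (1:ℝ) else 0) / G s ≤ g x / a
    by_cases h : x ≤ s
    · rw [if_pos h, mul_one]
      exact div_le_div_of_nonneg_left (hgpos x).le ha (hGa s hs)
    · rw [if_neg h, mul_zero, zero_div]
      exact div_nonneg (hgpos x).le ha.le
  have hK₂le : ∀ x, ∀ s ∈ Ioi s₀, K₂ x s ≤ 𝔤 x / b := by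
    intro x s hs
    show 𝔤 x * (if x ≤ s then (1:ℝ) else 0) / 𝔊 s ≤ 𝔤 x / b
    by_cases h : x ≤ s
    · rw [if_pos h, mul_one]
      exact div_le_div_of_nonneg_left (h𝔤pos x).le hb (h𝔊b s hs)
    · rw [if_neg h, mul_zero, zero_div]
      exact div_nonneg (h𝔤pos x).le hb.le
  -- measurability on the product
  have hχm : Measurable (fun p : ℝ × ℝ => if p.1 ≤ p.2 then (1 : ℝ) else 0) :=
    Measurable.ite (measurableSet_le measurable_fst measurable_snd)
      measurable_const measurable_const
  have hK₁m : Measurable (fun p : ℝ × ℝ => K₁ p.1 p.2) :=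
    ((hgm.comp measurable_fst).mul hχm).div (hGmeas.comp measurable_snd)
  have hK₂m : Measurable (fun p : ℝ × ℝ => K₂ p.1 p.2) :=
    ((h𝔤m.comp measurable_fst).mul hχm).div (h𝔊meas.comp measurable_snd)
  -- the product measure is carried by univ ×ˢ Ioi s₀
  have haeprod : ∀ᵐ p : ℝ × ℝ ∂(volume.prod ν), p.2 ∈ Ioi s₀ := by
    have heq : volume.prod ν = (volume.prod volume).restrict ((Set.univ : Set ℝ) ×ˢ Ioi s₀) := by
      have h : ((volume : Measure ℝ).restrict Set.univ).prod
          ((volume : Measure ℝ).restrict (Ioi s₀)) =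
          ((volume : Measure ℝ).prod (volume : Measure ℝ)).restrict (Set.univ ×ˢ Ioi s₀) :=
        Measure.prod_restrict _ _
      rw [Measure.restrict_univ] at h
      exact h
    rw [heq]
    filter_upwards [ae_restrict_mem ((MeasurableSet.univ).prod measurableSet_Ioi)] with p hp
    exact hp.2
  -- product integrability of the four kernels
  have hprodInt : ∀ (w : ℝ → ℝ), Integrable w → (∀ s, 0 ≤ w s) → Measurable w →
      Integrable (Function.uncurry fun x s => K₁ x s * w s) (volume.prod ν) := by
    intro w hw hw0 hwm
    refine Integrable.mono' ((hgInt.div_const a).mul_prod hw.restrict) ?_ ?_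
    · exact ((hK₁m.mul (hwm.comp measurable_snd))).aestronglyMeasurable
    · filter_upwards [haeprod] with p hp
      rw [Function.uncurry]
      have h1 : 0 ≤ K₁ p.1 p.2 * w p.2 := mul_nonneg (hK₁nn _ _) (hw0 _)
      rw [Real.norm_eq_abs, abs_of_nonneg h1]
      exact mul_le_mul_of_nonneg_right (hK₁le p.1 p.2 hp) (hw0 _)
  have hprodInt₂ : ∀ (w : ℝ → ℝ), Integrable w → (∀ s, 0 ≤ w s) → Measurable w →
      Integrable (Function.uncurry fun x s => K₂ x s * w s) (volume.prod ν) := by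
    intro w hw hw0 hwm
    refine Integrable.mono' ((h𝔤Int.div_const b).mul_prod hw.restrict) ?_ ?_
    · exact ((hK₂m.mul (hwm.comp measurable_snd))).aestronglyMeasurable
    · filter_upwards [haeprod] with p hp
      rw [Function.uncurry]
      have h1 : 0 ≤ K₂ p.1 p.2 * w p.2 := mul_nonneg (hK₂nn _ _) (hw0 _)
      rw [Real.norm_eq_abs, abs_of_nonneg h1]
      exact mul_le_mul_of_nonneg_right (hK₂le p.1 p.2 hp) (hw0 _)
  have I_A : Integrable (Function.uncurry fun x s => K₁ x s * u s) (volume.prod ν) :=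
    hprodInt u huInt hu0 hum
  have I_B : Integrable (Function.uncurry fun x s => K₂ x s * 𝔲 s) (volume.prod ν) :=
    hprodInt₂ 𝔲 h𝔲Int h𝔲0 h𝔲m
  have I_P : Integrable (Function.uncurry fun x s => K₁ x s * |u s - 𝔲 s|) (volume.prod ν) :=
    hprodInt (fun s => |u s - 𝔲 s|) (huInt.sub h𝔲Int).abs (fun s => abs_nonneg _)
      (hum.sub h𝔲m).abs
  have I_Q : Integrable (Function.uncurry fun x s => |K₁ x s - K₂ x s| * 𝔲 s)
      (volume.prod ν) := by
    refine Integrable.mono'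
      (((hgInt.div_const a).add (h𝔤Int.div_const b)).mul_prod h𝔲Int.restrict) ?_ ?_
    · exact (((hK₁m.sub hK₂m).abs.mul (h𝔲m.comp measurable_snd))).aestronglyMeasurable
    · filter_upwards [haeprod] with p hp
      rw [Function.uncurry]
      have h1 : 0 ≤ |K₁ p.1 p.2 - K₂ p.1 p.2| * 𝔲 p.2 := mul_nonneg (abs_nonneg _) (h𝔲0 _)
      rw [Real.norm_eq_abs, abs_of_nonneg h1]
      refine mul_le_mul_of_nonneg_right ?_ (h𝔲0 _)
      calc |K₁ p.1 p.2 - K₂ p.1 p.2| ≤ K₁ p.1 p.2 + K₂ p.1 p.2 := by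
            have := hK₁nn p.1 p.2; have := hK₂nn p.1 p.2
            rw [abs_sub_le_iff]; constructor <;> linarith
        _ ≤ g p.1 / a + 𝔤 p.1 / b := add_le_add (hK₁le p.1 p.2 hp) (hK₂le p.1 p.2 hp)
  -- notation for the pointwise-in-x integrals
  set P : ℝ → ℝ := fun x => ∫ s in Ioi s₀, K₁ x s * |u s - 𝔲 s| with hPdef
  set Q : ℝ → ℝ := fun x => ∫ s in Ioi s₀, |K₁ x s - K₂ x s| * 𝔲 s with hQdef
  have hPint : Integrable P := I_P.integral_prod_left
  have hQint : Integrable Q := I_Q.integral_prod_left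
  -- pointwise bound |A x - B x| ≤ P x + Q x, a.e. in x
  have hmain : (∫ x, |(∫ s in Ioi s₀, K₁ x s * u s) - (∫ s in Ioi s₀, K₂ x s * 𝔲 s)|) ≤
      ∫ x, (P x + Q x) := by
    refine integral_mono_of_nonneg (Filter.Eventually.of_forall fun x => abs_nonneg _)
      (hPint.add hQint) ?_
    filter_upwards [I_A.prod_right_ae, I_B.prod_right_ae, I_P.prod_right_ae,
      I_Q.prod_right_ae] with x hxA hxB hxP hxQ
    have hxA' : Integrable (fun s => K₁ x s * u s) ν := hxA
    have hxB' : Integrable (fun s => K₂ x s * 𝔲 s) ν := hxB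
    have hxP' : Integrable (fun s => K₁ x s * |u s - 𝔲 s|) ν := hxP
    have hxQ' : Integrable (fun s => |K₁ x s - K₂ x s| * 𝔲 s) ν := hxQ
    have hx1 : Integrable (fun s => K₁ x s * (u s - 𝔲 s)) ν := by
      refine hxP'.mono' ?_ ?_
      · exact (((hK₁m.comp (measurable_const.prodMk measurable_id)).mul
          (hum.sub h𝔲m))).aestronglyMeasurable
      · refine Filter.Eventually.of_forall fun s => ?_
        rw [Real.norm_eq_abs, abs_mul, abs_of_nonneg (hK₁nn _ _)]
    have hx2 : Integrable (fun s => (K₁ x s - K₂ x s) * 𝔲 s) ν := by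
      refine hxQ'.mono' ?_ ?_
      · exact ((((hK₁m.sub hK₂m).comp (measurable_const.prodMk measurable_id)).mul
          h𝔲m)).aestronglyMeasurable
      · refine Filter.Eventually.of_forall fun s => ?_
        rw [Real.norm_eq_abs, abs_mul, abs_of_nonneg (h𝔲0 _)]
    have hsplit : (∫ s in Ioi s₀, K₁ x s * u s) - (∫ s in Ioi s₀, K₂ x s * 𝔲 s) =
        (∫ s in Ioi s₀, K₁ x s * (u s - 𝔲 s)) + ∫ s in Ioi s₀, (K₁ x s - K₂ x s) * 𝔲 s := by
      rw [← integral_add hx1 hx2, ← integral_sub hxA' hxB']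
      congr 1; funext s; ring
    rw [hsplit]
    have e1 : |∫ s in Ioi s₀, K₁ x s * (u s - 𝔲 s)| ≤ P x := by
      have h := norm_integral_le_integral_norm (μ := ν) (fun s => K₁ x s * (u s - 𝔲 s))
      simp only [Real.norm_eq_abs] at h
      refine le_trans h (le_of_eq ?_)
      refine integral_congr_ae (Filter.Eventually.of_forall fun s => ?_)
      show |K₁ x s * (u s - 𝔲 s)| = K₁ x s * |u s - 𝔲 s|
      rw [abs_mul, abs_of_nonneg (hK₁nn _ _)]
    have e2 : |∫ s in Ioi s₀, (K₁ x s - K₂ x s) * 𝔲 s| ≤ Q x := by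
      have h := norm_integral_le_integral_norm (μ := ν) (fun s => (K₁ x s - K₂ x s) * 𝔲 s)
      simp only [Real.norm_eq_abs] at h
      refine le_trans h (le_of_eq ?_)
      refine integral_congr_ae (Filter.Eventually.of_forall fun s => ?_)
      show |(K₁ x s - K₂ x s) * 𝔲 s| = |K₁ x s - K₂ x s| * 𝔲 s
      rw [abs_mul, abs_of_nonneg (h𝔲0 _)]
    calc |(∫ s in Ioi s₀, K₁ x s * (u s - 𝔲 s)) + ∫ s in Ioi s₀, (K₁ x s - K₂ x s) * 𝔲 s|
        ≤ |∫ s in Ioi s₀, K₁ x s * (u s - 𝔲 s)| + |∫ s in Ioi s₀, (K₁ x s - K₂ x s) * 𝔲 s| :=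
          abs_add_le _ _
      _ ≤ P x + Q x := add_le_add e1 e2
  -- compute/bound ∫ P
  have hPval : ∫ x, P x ≤ ∫ s, |u s - 𝔲 s| := by
    have hswap : ∫ x, P x = ∫ s in Ioi s₀, ∫ x, K₁ x s * |u s - 𝔲 s| := by
      exact integral_integral_swap I_P
    have hinner : ∀ s, ∫ x, K₁ x s * |u s - 𝔲 s| = |u s - 𝔲 s| := by
      intro s
      have heq : ∀ x, K₁ x s * |u s - 𝔲 s| =
          Set.indicator (Iic s) (fun x => g x / G s * |u s - 𝔲 s|) x := by
        intro x
        by_cases h : x ≤ s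
        · simp [hK₁def, h, Set.indicator_of_mem (mem_Iic.mpr h)]
        · simp [hK₁def, h, Set.indicator_of_notMem (fun hx => h (mem_Iic.mp hx))]
      rw [integral_congr_ae (Filter.Eventually.of_forall heq), integral_indicator measurableSet_Iic]
      have : ∫ x in Iic s, g x / G s * |u s - 𝔲 s| = (∫ x in Iic s, g x) / G s * |u s - 𝔲 s| := by
        rw [← integral_div, ← integral_mul_const]
      rw [this, ← hG s, div_self (hGpos s).ne', one_mul]
    calc ∫ x, P x = ∫ s in Ioi s₀, |u s - 𝔲 s| := by
          rw [hswap]; exact integral_congr_ae (Filter.Eventually.of_forall fun s => hinner s)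
      _ ≤ ∫ s, |u s - 𝔲 s| :=
          setIntegral_le_integral (huInt.sub h𝔲Int).abs
            (Filter.Eventually.of_forall fun s => abs_nonneg _)
  -- compute/bound ∫ Q
  have hQval : ∫ x, Q x ≤ (3 / 2 * C) * ∫ s in Ioi s₀, 𝔲 s / (G s * 𝔊 s) := by
    have hswap : ∫ x, Q x = ∫ s in Ioi s₀, ∫ x, |K₁ x s - K₂ x s| * 𝔲 s := by
      exact integral_integral_swap I_Q
    rw [hswap]
    have hRHSint : Integrable (fun s => 3 / 2 * C * (𝔲 s / (G s * 𝔊 s))) ν := by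
      refine Integrable.mono' ((h𝔲Int.restrict.const_mul (3 / 2 * C / (a * b)))) ?_ ?_
      · exact (((h𝔲m.div (hGmeas.mul h𝔊meas)).const_mul _)).aestronglyMeasurable
      · rw [hνdef]
        filter_upwards [ae_restrict_mem measurableSet_Ioi] with s hs
        have hG' := hGa s hs; have h𝔊' := h𝔊b s hs
        have hGs := hGpos s; have h𝔊s := h𝔊pos s
        have h1 : 0 ≤ 𝔲 s / (G s * 𝔊 s) := div_nonneg (h𝔲0 s) (mul_pos hGs h𝔊s).le
        have h2 : 0 ≤ (3:ℝ) / 2 * C := by nlinarith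
        rw [Real.norm_eq_abs, abs_of_nonneg (mul_nonneg h2 h1)]
        have hab : a * b ≤ G s * 𝔊 s :=
          mul_le_mul hG' h𝔊' hb.le ((lt_of_lt_of_le ha hG').le)
        have h3 : 𝔲 s / (G s * 𝔊 s) ≤ 𝔲 s / (a * b) :=
          div_le_div_of_nonneg_left (h𝔲0 s) (mul_pos ha hb) hab
        calc 3 / 2 * C * (𝔲 s / (G s * 𝔊 s)) ≤ 3 / 2 * C * (𝔲 s / (a * b)) :=
            mul_le_mul_of_nonneg_left h3 h2
          _ = 3 / 2 * C / (a * b) * 𝔲 s := by ring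
    have hbound : ∀ s ∈ Ioi s₀, (∫ x, |K₁ x s - K₂ x s| * 𝔲 s) ≤
        3 / 2 * C * (𝔲 s / (G s * 𝔊 s)) := by
      intro s hs
      have hGs := hGpos s; have h𝔊s := h𝔊pos s
      have heq : ∀ x, |K₁ x s - K₂ x s| * 𝔲 s =
          Set.indicator (Iic s) (fun x => |g x / G s - 𝔤 x / 𝔊 s| * 𝔲 s) x := by
        intro x
        by_cases h : x ≤ s
        · simp [hK₁def, hK₂def, h, Set.indicator_of_mem (mem_Iic.mpr h)]
        · simp [hK₁def, hK₂def, h, Set.indicator_of_notMem (fun hx => h (mem_Iic.mp hx))]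
      rw [integral_congr_ae (Filter.Eventually.of_forall heq),
        integral_indicator measurableSet_Iic, integral_mul_const]
      -- bound the inner x-integral
      have hstep : ∫ x in Iic s, |g x / G s - 𝔤 x / 𝔊 s| ≤ 3 / 2 * C / (G s * 𝔊 s) := by
        have hptw : ∀ x, |g x / G s - 𝔤 x / 𝔊 s| ≤
            |g x - 𝔤 x| / G s + 𝔤 x * |𝔊 s - G s| / (G s * 𝔊 s) := by
          intro x
          have hid : g x / G s - 𝔤 x / 𝔊 s =
              (g x - 𝔤 x) / G s + 𝔤 x * (𝔊 s - G s) / (G s * 𝔊 s) := by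
            field_simp
            ring
          rw [hid]
          calc |(g x - 𝔤 x) / G s + 𝔤 x * (𝔊 s - G s) / (G s * 𝔊 s)| ≤
              |(g x - 𝔤 x) / G s| + |𝔤 x * (𝔊 s - G s) / (G s * 𝔊 s)| := abs_add_le _ _
            _ = |g x - 𝔤 x| / G s + 𝔤 x * |𝔊 s - G s| / (G s * 𝔊 s) := by
              rw [abs_div, abs_div, abs_mul, abs_of_pos hGs,
                abs_of_pos (mul_pos hGs h𝔊s), abs_of_pos (h𝔤pos x)]
        have hLint : IntegrableOn (fun x => |g x / G s - 𝔤 x / 𝔊 s|) (Iic s) := by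
          exact ((hgInt.div_const (G s)).sub (h𝔤Int.div_const (𝔊 s))).abs.integrableOn
        have hRint : IntegrableOn
            (fun x => |g x - 𝔤 x| / G s + 𝔤 x * |𝔊 s - G s| / (G s * 𝔊 s)) (Iic s) := by
          exact ((hgsub.abs.div_const (G s)).add
            ((h𝔤Int.mul_const _).div_const _)).integrableOn
        calc ∫ x in Iic s, |g x / G s - 𝔤 x / 𝔊 s|
            ≤ ∫ x in Iic s, (|g x - 𝔤 x| / G s + 𝔤 x * |𝔊 s - G s| / (G s * 𝔊 s)) :=
              integral_mono hLint hRint hptw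
          _ = (∫ x in Iic s, |g x - 𝔤 x|) / G s +
              (∫ x in Iic s, 𝔤 x) * |𝔊 s - G s| / (G s * 𝔊 s) := by
              rw [integral_add (hgsub.abs.div_const (G s)).integrableOn
                ((h𝔤Int.mul_const _).div_const _).integrableOn, integral_div,
                integral_div, integral_mul_const]
          _ ≤ C / G s + 𝔊 s * (C / 2) / (G s * 𝔊 s) := by
              have h1 : (∫ x in Iic s, |g x - 𝔤 x|) ≤ C :=
                setIntegral_le_integral hgsub.abs
                  (Filter.Eventually.of_forall fun x => abs_nonneg _)
              have h2 : (∫ x in Iic s, 𝔤 x) * |𝔊 s - G s| ≤ 𝔊 s * (C / 2) := by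
                rw [← h𝔊 s]
                have hks := hK s
                rw [abs_sub_comm] at hks
                exact mul_le_mul_of_nonneg_left hks h𝔊s.le
              exact add_le_add ((div_le_div_iff_of_pos_right hGs).mpr h1)
                ((div_le_div_iff_of_pos_right (mul_pos hGs h𝔊s)).mpr h2)
          _ = (3 / 2 * C) / G s := by
              field_simp
              ring
          _ ≤ 3 / 2 * C / (G s * 𝔊 s) := by
              have hle : G s * 𝔊 s ≤ G s := by
                nlinarith [h𝔊le1 s, hGs.le, h𝔊s.le]
              exact div_le_div_of_nonneg_left (by positivity) (mul_pos hGs h𝔊s) hle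
      calc (∫ x in Iic s, |g x / G s - 𝔤 x / 𝔊 s|) * 𝔲 s ≤
          (3 / 2 * C / (G s * 𝔊 s)) * 𝔲 s := mul_le_mul_of_nonneg_right hstep (h𝔲0 s)
        _ = 3 / 2 * C * (𝔲 s / (G s * 𝔊 s)) := by ring
    calc ∫ s in Ioi s₀, ∫ x, |K₁ x s - K₂ x s| * 𝔲 s
        ≤ ∫ s in Ioi s₀, 3 / 2 * C * (𝔲 s / (G s * 𝔊 s)) := by
          refine integral_mono_of_nonneg ?_ hRHSint ?_
          · exact Filter.Eventually.of_forall fun s =>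
              integral_nonneg fun x => mul_nonneg (abs_nonneg _) (h𝔲0 _)
          · filter_upwards [ae_restrict_mem measurableSet_Ioi] with s hs
            exact hbound s hs
      _ = (3 / 2 * C) * ∫ s in Ioi s₀, 𝔲 s / (G s * 𝔊 s) := by
          rw [integral_const_mul]
  -- put everything together
  have hfin : ∫ x, (P x + Q x) = (∫ x, P x) + ∫ x, Q x := integral_add hPint hQint
  rw [hfin] at hmain
  have final : (∫ x, |(∫ s in Ioi s₀, K₁ x s * u s) - (∫ s in Ioi s₀, K₂ x s * 𝔲 s)|) ≤
      (∫ s, |u s - 𝔲 s|) +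
        (3 / 2) * C * ∫ s in Ioi s₀, 𝔲 s / (G s * 𝔊 s) := by
    have h32 : (3 / 2 : ℝ) * C * ∫ s in Ioi s₀, 𝔲 s / (G s * 𝔊 s) =
        (3 / 2 * C) * ∫ s in Ioi s₀, 𝔲 s / (G s * 𝔊 s) := by ring
    rw [h32]
    linarith
  exact final
end
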